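/- arXiv:1311.5293 — 5 statements merged into one kernel-verified Lean document; each statement's English description precedes it below -/
import Mathlib

section
/- If f ∈ C[0,1] is not monotone at any point of [0,1] and f is injective on the set of its local extremum points, then f has the Bruckner-Garg property. -/
open MeasureTheory Set Filter Topology

noncomputable section

/-- A set in an abelian topological group is *shy* (Haar null, in the sense of Christensen)
if it is contained in a Borel set `B` for which there is a Borel probability measure `μ`
with `μ (B + x) = 0` for every `x`. -/
def IsShy {G : Type*} [TopologicalSpace G] [AddCommGroup G] (A : Set G) : Prop :=
  ∃ B : Set G, MeasurableSet[borel G] B ∧ A ⊆ B ∧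
    ∃ μ : @Measure G (borel G), @IsProbabilityMeasure G (borel G) μ ∧
      ∀ x : G, μ ((fun b => b + x) '' B) = 0

/-- A set is *prevalent* if its complement is shy. -/
def IsPrevalent {G : Type*} [TopologicalSpace G] [AddCommGroup G] (A : Set G) : Prop :=
  IsShy Aᶜ

/-- A set is *Haar ambivalent* if it is neither shy nor prevalent. -/
def IsHaarAmbivalent {G : Type*} [TopologicalSpace G] [AddCommGroup G] (A : Set G) : Prop :=
  ¬ IsShy A ∧ ¬ IsShy Aᶜ

/-- A set is a *Cantor set* if it is homeomorphic to the middle-third Cantor set,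
equivalently to the Cantor space `ℕ → Bool`. -/
def IsCantorSet {X : Type*} [TopologicalSpace X] (S : Set X) : Prop :=
  Nonempty (S ≃ₜ (ℕ → Bool))

/-- `f ∈ C[0,1]` has the *Bruckner-Garg property* if there is a countable dense subset `D`
of `(min f, max f)` such that the level set `f⁻¹(y)` is a singleton for
`y ∈ {min f, max f}`, a Cantor set for `y ∈ (min f, max f) \ D`, and the union of a Cantor
set and one extra (automatically isolated) point for `y ∈ D`. -/
def HasBrucknerGargProperty (f : C(unitInterval, ℝ)) : Prop :=
  ∃ D : Set ℝ, D.Countable ∧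
    D ⊆ Ioo (sInf (range ⇑f)) (sSup (range ⇑f)) ∧
    Ioo (sInf (range ⇑f)) (sSup (range ⇑f)) ⊆ closure D ∧
    (∀ y ∈ ({sInf (range ⇑f), sSup (range ⇑f)} : Set ℝ),
      ∃ x : unitInterval, ⇑f ⁻¹' {y} = {x}) ∧
    (∀ y ∈ Ioo (sInf (range ⇑f)) (sSup (range ⇑f)) \ D, IsCantorSet (⇑f ⁻¹' {y})) ∧
    (∀ y ∈ D, ∃ (C : Set unitInterval) (x : unitInterval),
      IsCantorSet C ∧ x ∉ C ∧ ⇑f ⁻¹' {y} = C ∪ {x})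

/-- `f` is *non-decreasing at* `x ∈ [0,1]` if there is `ε > 0` such that
`(f z - f x)/(z - x) ≥ 0` for all `z ∈ [0,1]` with `0 < |z - x| < ε`. -/
def NonDecreasingAt (f : C(unitInterval, ℝ)) (x : unitInterval) : Prop :=
  ∃ ε > (0 : ℝ), ∀ z : unitInterval, 0 < |(z : ℝ) - (x : ℝ)| → |(z : ℝ) - (x : ℝ)| < ε →
    0 ≤ (f z - f x) / ((z : ℝ) - (x : ℝ))

/-- `f` is *monotone at* `x` if `f` or `-f` is non-decreasing at `x`. -/
def MonotoneAtPt (f : C(unitInterval, ℝ)) (x : unitInterval) : Prop :=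
  NonDecreasingAt f x ∨ NonDecreasingAt (-f) x


namespace BGAux

/-- Invariant for pieces of the Cantor scheme. -/
structure Good (K C : Set ℝ) : Prop where
  comp : IsCompact C
  ne : C.Nonempty
  sub : C ⊆ K
  acc : ∀ p ∈ C, ∀ ε > (0:ℝ), ∃ q ∈ C, q ≠ p ∧ |q - p| < ε

variable {K C : Set ℝ}

theorem Good.bddB (h : Good K C) : BddBelow C := h.comp.bddBelow
theorem Good.bddA (h : Good K C) : BddAbove C := h.comp.bddAbove

theorem Good.inf_mem (h : Good K C) : sInf C ∈ C :=
  h.comp.isClosed.csInf_mem h.ne h.bddB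

theorem Good.sup_mem (h : Good K C) : sSup C ∈ C :=
  h.comp.isClosed.csSup_mem h.ne h.bddA

theorem Good.inf_lt_sup (h : Good K C) : sInf C < sSup C := by
  obtain ⟨p, hp⟩ := h.ne
  obtain ⟨q, hq, hqp, -⟩ := h.acc p hp 1 one_pos
  rcases lt_or_gt_of_ne hqp with hlt | hgt
  · exact lt_of_le_of_lt (csInf_le h.bddB hq) (lt_of_lt_of_le hlt (le_csSup h.bddA hp))
  · exact lt_of_le_of_lt (csInf_le h.bddB hp) (lt_of_lt_of_le hgt (le_csSup h.bddA hq))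

theorem Good.dist_le (h : Good K C) {p q : ℝ} (hp : p ∈ C) (hq : q ∈ C) :
    |p - q| ≤ sSup C - sInf C := by
  rw [abs_sub_le_iff]
  constructor
  · exact sub_le_sub (le_csSup h.bddA hp) (csInf_le h.bddB hq)
  · exact sub_le_sub (le_csSup h.bddA hq) (csInf_le h.bddB hp)

open Classical in
/-- A split point for a compact piece: a point not in `K` inside the middle third. -/
def splitPt (K C : Set ℝ) : ℝ :=
  if h : ∃ t, sInf C + (sSup C - sInf C)/3 < t ∧ t < sSup C - (sSup C - sInf C)/3 ∧ t ∉ K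
  then h.choose else 0

theorem splitPt_spec (hnd : ∀ a b : ℝ, a < b → ∃ t, a < t ∧ t < b ∧ t ∉ K) (h : Good K C) :
    sInf C + (sSup C - sInf C)/3 < splitPt K C ∧
      splitPt K C < sSup C - (sSup C - sInf C)/3 ∧ splitPt K C ∉ K := by
  have hw : 0 < sSup C - sInf C := sub_pos.mpr h.inf_lt_sup
  have hlh : sInf C + (sSup C - sInf C)/3 < sSup C - (sSup C - sInf C)/3 := by linarith
  have hex := hnd _ _ hlh
  rw [splitPt]
  rw [dif_pos hex]
  exact hex.choose_spec

theorem splitPt_gt (hnd : ∀ a b : ℝ, a < b → ∃ t, a < t ∧ t < b ∧ t ∉ K) (h : Good K C) :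
    sInf C < splitPt K C := by
  have hw : 0 < sSup C - sInf C := sub_pos.mpr h.inf_lt_sup
  have := (splitPt_spec hnd h).1; linarith

theorem splitPt_lt (hnd : ∀ a b : ℝ, a < b → ∃ t, a < t ∧ t < b ∧ t ∉ K) (h : Good K C) :
    splitPt K C < sSup C := by
  have hw : 0 < sSup C - sInf C := sub_pos.mpr h.inf_lt_sup
  have := (splitPt_spec hnd h).2.1; linarith

theorem good_left (hnd : ∀ a b : ℝ, a < b → ∃ t, a < t ∧ t < b ∧ t ∉ K) (h : Good K C) :
    Good K (C ∩ Iic (splitPt K C)) := by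
  set t := splitPt K C with ht
  have htK : t ∉ K := (splitPt_spec hnd h).2.2
  refine ⟨h.comp.inter_right isClosed_Iic, ⟨sInf C, h.inf_mem, (splitPt_gt hnd h).le⟩,
    inter_subset_left.trans h.sub, ?_⟩
  rintro p ⟨hpC, hpt⟩ ε hε
  have hpK : p ∈ K := h.sub hpC
  have hplt : p < t := lt_of_le_of_ne hpt (fun hpe => htK (hpe ▸ hpK))
  obtain ⟨q, hqC, hqp, hqd⟩ := h.acc p hpC (min ε (t - p)) (lt_min hε (sub_pos.mpr hplt))
  refine ⟨q, ⟨hqC, ?_⟩, hqp, hqd.trans_le (min_le_left _ _)⟩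
  have h' : |q - p| < t - p := hqd.trans_le (min_le_right _ _)
  have h'' := abs_lt.mp h'
  show q ≤ t
  linarith [h''.2]

theorem good_right (hnd : ∀ a b : ℝ, a < b → ∃ t, a < t ∧ t < b ∧ t ∉ K) (h : Good K C) :
    Good K (C ∩ Ici (splitPt K C)) := by
  set t := splitPt K C with ht
  have htK : t ∉ K := (splitPt_spec hnd h).2.2
  refine ⟨h.comp.inter_right isClosed_Ici, ⟨sSup C, h.sup_mem, (splitPt_lt hnd h).le⟩,
    inter_subset_left.trans h.sub, ?_⟩
  rintro p ⟨hpC, hpt⟩ ε hε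
  have hpK : p ∈ K := h.sub hpC
  have hplt : t < p := lt_of_le_of_ne hpt (fun hpe => htK (hpe ▸ hpK))
  obtain ⟨q, hqC, hqp, hqd⟩ := h.acc p hpC (min ε (p - t)) (lt_min hε (sub_pos.mpr hplt))
  refine ⟨q, ⟨hqC, ?_⟩, hqp, hqd.trans_le (min_le_left _ _)⟩
  have h' : |q - p| < p - t := hqd.trans_le (min_le_right _ _)
  have h'' := abs_lt.mp h'
  show t ≤ q
  linarith [h''.1]

theorem width_left (hnd : ∀ a b : ℝ, a < b → ∃ t, a < t ∧ t < b ∧ t ∉ K) (h : Good K C) :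
    sSup (C ∩ Iic (splitPt K C)) - sInf (C ∩ Iic (splitPt K C)) ≤
      (2/3) * (sSup C - sInf C) := by
  have hg := good_left hnd h
  have h1 : sSup (C ∩ Iic (splitPt K C)) ≤ splitPt K C :=
    csSup_le hg.ne (fun x hx => hx.2)
  have h2 : sInf C ≤ sInf (C ∩ Iic (splitPt K C)) :=
    le_csInf hg.ne (fun x hx => csInf_le h.bddB hx.1)
  have := (splitPt_spec hnd h).2.1
  linarith

theorem width_right (hnd : ∀ a b : ℝ, a < b → ∃ t, a < t ∧ t < b ∧ t ∉ K) (h : Good K C) :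
    sSup (C ∩ Ici (splitPt K C)) - sInf (C ∩ Ici (splitPt K C)) ≤
      (2/3) * (sSup C - sInf C) := by
  have hg := good_right hnd h
  have h1 : splitPt K C ≤ sInf (C ∩ Ici (splitPt K C)) :=
    le_csInf hg.ne (fun x hx => hx.2)
  have h2 : sSup (C ∩ Ici (splitPt K C)) ≤ sSup C :=
    csSup_le_csSup h.bddA hg.ne inter_subset_left
  have := (splitPt_spec hnd h).1
  linarith

/-- The pieces of the binary Cantor scheme. -/
def piece (K : Set ℝ) (x : ℕ → Bool) : ℕ → Set ℝ
  | 0 => K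
  | n+1 => piece K x n ∩
      (if x n = true then Ici (splitPt K (piece K x n)) else Iic (splitPt K (piece K x n)))

theorem piece_succ_subset (x : ℕ → Bool) (n : ℕ) : piece K x (n+1) ⊆ piece K x n :=
  inter_subset_left

theorem good_piece (hnd : ∀ a b : ℝ, a < b → ∃ t, a < t ∧ t < b ∧ t ∉ K) (hG : Good K K)
    (x : ℕ → Bool) : ∀ n, Good K (piece K x n)
  | 0 => hG
  | n+1 => by
    have ih := good_piece hnd hG x n
    by_cases h : x n = true
    · simpa [piece, h] using good_right hnd ih
    · simpa [piece, h] using good_left hnd ih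

theorem width_piece (hnd : ∀ a b : ℝ, a < b → ∃ t, a < t ∧ t < b ∧ t ∉ K) (hG : Good K K)
    (x : ℕ → Bool) : ∀ n, sSup (piece K x n) - sInf (piece K x n) ≤
      (2/3)^n * (sSup K - sInf K)
  | 0 => by simp [piece]
  | n+1 => by
    have ih := width_piece hnd hG x n
    have hg := good_piece hnd hG x n
    have hstep : sSup (piece K x (n+1)) - sInf (piece K x (n+1)) ≤
        (2/3) * (sSup (piece K x n) - sInf (piece K x n)) := by
      by_cases h : x n = true
      · simpa [piece, h] using width_right hnd hg
      · simpa [piece, h] using width_left hnd hg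
    calc sSup (piece K x (n+1)) - sInf (piece K x (n+1))
        ≤ (2/3) * (sSup (piece K x n) - sInf (piece K x n)) := hstep
      _ ≤ (2/3) * ((2/3)^n * (sSup K - sInf K)) := by
          apply mul_le_mul_of_nonneg_left ih; norm_num
      _ = (2/3)^(n+1) * (sSup K - sInf K) := by ring

theorem piece_congr {x y : ℕ → Bool} (n : ℕ) (h : ∀ i < n, x i = y i) :
    piece K x n = piece K y n := by
  induction n with
  | zero => rfl
  | succ n ih =>
    have hxy := ih (fun i hi => h i (hi.trans (Nat.lt_succ_self n)))
    have hn := h n (Nat.lt_succ_self n)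
    simp only [piece, hxy, hn]

theorem piece_disjoint (hnd : ∀ a b : ℝ, a < b → ∃ t, a < t ∧ t < b ∧ t ∉ K) (hG : Good K K)
    {x y : ℕ → Bool} (n : ℕ) (h : ∀ i < n, x i = y i) (hne : x n ≠ y n) :
    piece K x (n+1) ∩ piece K y (n+1) = ∅ := by
  have hxy : piece K x n = piece K y n := piece_congr n h
  set C := piece K x n with hC
  set t := splitPt K C with htdef
  have htK : t ∉ K := (splitPt_spec hnd (good_piece hnd hG x n)).2.2
  have hsub : piece K x (n+1) ∩ piece K y (n+1) ⊆ C ∩ {t} := by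
    rintro z ⟨hzx, hzy⟩
    rcases Bool.eq_false_or_eq_true (x n) with hx | hx
    · have hy : y n = false := by
        revert hne; rw [hx]; cases y n <;> simp
      simp only [piece, hx, hy, ← hxy] at hzx hzy
      simp only [if_true, Bool.false_eq_true, if_false, mem_inter_iff, mem_Iic,
        mem_Ici] at hzx hzy
      exact ⟨hzx.1, mem_singleton_iff.mpr (le_antisymm hzy.2 hzx.2)⟩
    · have hy : y n = true := by
        revert hne; rw [hx]; cases y n <;> simp
      simp only [piece, hx, hy, ← hxy] at hzx hzy
      simp only [if_true, Bool.false_eq_true, if_false, mem_inter_iff, mem_Iic,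
        mem_Ici] at hzx hzy
      exact ⟨hzx.1, mem_singleton_iff.mpr (le_antisymm hzx.2 hzy.2)⟩
  rw [eq_empty_iff_forall_notMem]
  intro z hz
  obtain ⟨hzC, hzt⟩ := hsub hz
  rw [mem_singleton_iff] at hzt
  exact htK (hzt ▸ (good_piece hnd hG x n).sub hzC)

theorem piece_inter_nonempty (hnd : ∀ a b : ℝ, a < b → ∃ t, a < t ∧ t < b ∧ t ∉ K)
    (hG : Good K K) (x : ℕ → Bool) : (⋂ n, piece K x n).Nonempty := by
  apply IsCompact.nonempty_iInter_of_sequence_nonempty_isCompact_isClosed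
  · exact fun n => piece_succ_subset x n
  · exact fun n => (good_piece hnd hG x n).ne
  · exact (good_piece hnd hG x 0).comp
  · exact fun n => (good_piece hnd hG x n).comp.isClosed

theorem eq_of_mem_iInter (hnd : ∀ a b : ℝ, a < b → ∃ t, a < t ∧ t < b ∧ t ∉ K)
    (hG : Good K K) (x : ℕ → Bool) {p q : ℝ} (hp : p ∈ ⋂ n, piece K x n)
    (hq : q ∈ ⋂ n, piece K x n) : p = q := by
  have hb : ∀ n, |p - q| ≤ (2/3)^n * (sSup K - sInf K) := by
    intro n
    exact le_trans ((good_piece hnd hG x n).dist_le (mem_iInter.mp hp n) (mem_iInter.mp hq n))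
      (width_piece hnd hG x n)
  have htend : Tendsto (fun n : ℕ => (2/3:ℝ)^n * (sSup K - sInf K)) atTop (𝓝 0) := by
    have := tendsto_pow_atTop_nhds_zero_of_lt_one (by norm_num : (0:ℝ) ≤ 2/3)
      (by norm_num : (2/3:ℝ) < 1)
    simpa using this.mul_const (sSup K - sInf K)
  have : |p - q| ≤ 0 := ge_of_tendsto' htend hb
  have := le_antisymm this (abs_nonneg _)
  exact sub_eq_zero.mp (abs_eq_zero.mp this)

/-- Pieces tracking a fixed point `p`. -/
def pieceP (K : Set ℝ) (p : ℝ) : ℕ → Set ℝ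
  | 0 => K
  | n+1 => pieceP K p n ∩
      (if splitPt K (pieceP K p n) < p then Ici (splitPt K (pieceP K p n))
       else Iic (splitPt K (pieceP K p n)))

def bits (K : Set ℝ) (p : ℝ) (n : ℕ) : Bool := decide (splitPt K (pieceP K p n) < p)

theorem piece_bits (K : Set ℝ) (p : ℝ) : ∀ n, piece K (bits K p) n = pieceP K p n
  | 0 => rfl
  | n+1 => by
    have ih := piece_bits K p n
    simp only [piece, pieceP, bits, ih, decide_eq_true_eq]

theorem good_pieceP (hnd : ∀ a b : ℝ, a < b → ∃ t, a < t ∧ t < b ∧ t ∉ K) (hG : Good K K)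
    (p : ℝ) (n : ℕ) : Good K (pieceP K p n) := by
  rw [← piece_bits]; exact good_piece hnd hG (bits K p) n

theorem mem_pieceP (hnd : ∀ a b : ℝ, a < b → ∃ t, a < t ∧ t < b ∧ t ∉ K) (hG : Good K K)
    {p : ℝ} (hp : p ∈ K) : ∀ n, p ∈ pieceP K p n
  | 0 => hp
  | n+1 => by
    have ih := mem_pieceP hnd hG hp n
    have htK : splitPt K (pieceP K p n) ∉ K :=
      (splitPt_spec hnd (good_pieceP hnd hG p n)).2.2
    by_cases h : splitPt K (pieceP K p n) < p
    · simp only [pieceP, h, if_true]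
      exact ⟨ih, le_of_lt h⟩
    · simp only [pieceP, h, if_false, reduceIte]
      refine ⟨ih, ?_⟩
      push_neg at h
      exact h

theorem cantor_homeo {K : Set ℝ} (hK : IsCompact K) (hne : K.Nonempty)
    (hacc : ∀ p ∈ K, ∀ ε > (0:ℝ), ∃ q ∈ K, q ≠ p ∧ |q - p| < ε)
    (hnd : ∀ a b : ℝ, a < b → ∃ t, a < t ∧ t < b ∧ t ∉ K) :
    Nonempty (K ≃ₜ (ℕ → Bool)) := by
  have hG : Good K K := ⟨hK, hne, subset_rfl, hacc⟩
  have hnex : ∀ x : ℕ → Bool, (⋂ n, piece K x n).Nonempty :=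
    fun x => piece_inter_nonempty hnd hG x
  set g : (ℕ → Bool) → ℝ := fun x => (hnex x).some with hg
  have hgmem : ∀ x, g x ∈ ⋂ n, piece K x n := fun x => (hnex x).some_mem
  have hgK : ∀ x, g x ∈ K := fun x => by
    have := mem_iInter.mp (hgmem x) 0
    exact this
  -- injectivity
  have hginj : Function.Injective g := by
    intro x y hxy
    by_contra hne'
    have hex : ∃ n, x n ≠ y n := by
      by_contra hall
      push_neg at hall
      exact hne' (funext hall)
    set n := Nat.find hex with hn
    have hfst : x n ≠ y n := Nat.find_spec hex
    have hagree : ∀ i < n, x i = y i := fun i hi => by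
      by_contra hc
      exact absurd (Nat.find_le hc) (not_le.mpr hi)
    have hdisj := piece_disjoint hnd hG n hagree hfst
    have h1 : g x ∈ piece K x (n+1) := mem_iInter.mp (hgmem x) (n+1)
    have h2 : g y ∈ piece K y (n+1) := mem_iInter.mp (hgmem y) (n+1)
    rw [hxy] at h1
    have : g y ∈ piece K x (n+1) ∩ piece K y (n+1) := ⟨h1, h2⟩
    rw [hdisj] at this
    exact this
  -- surjectivity onto K
  have hgsurj : ∀ p ∈ K, ∃ x, g x = p := by
    intro p hp
    refine ⟨bits K p, ?_⟩
    have hpmem : p ∈ ⋂ n, piece K (bits K p) n := by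
      rw [mem_iInter]
      intro n
      rw [piece_bits]
      exact mem_pieceP hnd hG hp n
    exact eq_of_mem_iInter hnd hG (bits K p) (hgmem _) hpmem
  -- continuity
  have hgcont : Continuous g := by
    rw [continuous_iff_continuousAt]
    intro x
    rw [ContinuousAt, Metric.tendsto_nhds]
    intro ε hε
    have htend : Tendsto (fun n : ℕ => (2/3:ℝ)^n * (sSup K - sInf K)) atTop (𝓝 0) := by
      have := tendsto_pow_atTop_nhds_zero_of_lt_one (by norm_num : (0:ℝ) ≤ 2/3)
        (by norm_num : (2/3:ℝ) < 1)
      simpa using this.mul_const (sSup K - sInf K)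
    obtain ⟨n, hn⟩ := (htend.eventually (eventually_lt_nhds hε)).exists
    have hU : IsOpen {y : ℕ → Bool | ∀ i < n, y i = x i} := by
      have : {y : ℕ → Bool | ∀ i < n, y i = x i} = ⋂ i ∈ Finset.range n,
          (fun y : ℕ → Bool => y i) ⁻¹' {x i} := by
        ext y; simp [Finset.mem_range]
      rw [this]
      exact isOpen_biInter_finset fun i _ => (continuous_apply i).isOpen_preimage _ (by
        exact isOpen_discrete _)
    have hxU : x ∈ {y : ℕ → Bool | ∀ i < n, y i = x i} := fun i _ => rfl
    filter_upwards [hU.mem_nhds hxU] with y hy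
    have hpe : piece K y n = piece K x n := piece_congr n hy
    have h1 : g y ∈ piece K x n := hpe ▸ mem_iInter.mp (hgmem y) n
    have h2 : g x ∈ piece K x n := mem_iInter.mp (hgmem x) n
    have := ((good_piece hnd hG x n).dist_le h1 h2).trans (width_piece hnd hG x n)
    calc dist (g y) (g x) = |g y - g x| := Real.dist_eq _ _
      _ ≤ (2/3)^n * (sSup K - sInf K) := this
      _ < ε := hn
  -- assemble
  have hbij : Function.Bijective (fun x => (⟨g x, hgK x⟩ : K)) := by
    constructor
    · intro a b hab
      exact hginj (congrArg Subtype.val hab)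
    · rintro ⟨p, hp⟩
      obtain ⟨x, hx⟩ := hgsurj p hp
      exact ⟨x, Subtype.ext hx⟩
  have hcont : Continuous (fun x => (⟨g x, hgK x⟩ : K)) := hgcont.subtype_mk _
  exact ⟨(hcont.homeoOfEquivCompactToT2 (f := Equiv.ofBijective _ hbij)).symm⟩




/-- Non-decreasing at a point, real-interval form. -/
def NdI (F : ℝ → ℝ) (X : ℝ) : Prop :=
  ∃ ε > (0:ℝ), ∀ z ∈ Icc (0:ℝ) 1, 0 < |z - X| → |z - X| < ε → 0 ≤ (F z - F X) / (z - X)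

def LocMinI (F : ℝ → ℝ) (X : ℝ) : Prop :=
  ∃ ε > (0:ℝ), ∀ z ∈ Icc (0:ℝ) 1, |z - X| < ε → F X ≤ F z

def LocMaxI (F : ℝ → ℝ) (X : ℝ) : Prop :=
  ∃ ε > (0:ℝ), ∀ z ∈ Icc (0:ℝ) 1, |z - X| < ε → F z ≤ F X

def LocExtrI (F : ℝ → ℝ) (X : ℝ) : Prop := LocMinI F X ∨ LocMaxI F X

variable {F : ℝ → ℝ}

theorem sign_dichotomy (hF : Continuous F)
    (h1 : ∀ X ∈ Icc (0:ℝ) 1, ¬ NdI F X ∧ ¬ NdI (-F) X)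
    {y X ε : ℝ} (hX : X ∈ Icc (0:ℝ) 1) (hFX : F X = y) (hε : 0 < ε)
    (hiso : ∀ z ∈ Icc (0:ℝ) 1, F z = y → |z - X| < ε → z = X) :
    0 < X ∧ X < 1 ∧ ((∀ z ∈ Icc (0:ℝ) 1, 0 < |z - X| → |z - X| < ε → y < F z) ∨
      (∀ z ∈ Icc (0:ℝ) 1, 0 < |z - X| → |z - X| < ε → F z < y)) := by
  -- no sign change among points on a fixed side
  have key : ∀ z ∈ Icc (0:ℝ) 1, 0 < |z - X| → |z - X| < ε →
      ∀ w ∈ Icc (0:ℝ) 1, 0 < |w - X| → |w - X| < ε →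
      ((X < z ∧ X < w) ∨ (z < X ∧ w < X)) → F z < y → y < F w → False := by
    intro z hz hz1 hz2 w hw hw1 hw2 hside hfz hfw
    have hconn : ContinuousOn F (uIcc z w) := hF.continuousOn
    have hy : y ∈ uIcc (F z) (F w) := mem_uIcc.mpr (Or.inl ⟨hfz.le, hfw.le⟩)
    obtain ⟨u, hu, hFu⟩ := intermediate_value_uIcc hconn hy
    have h3 : min z w ≤ u ∧ u ≤ max z w := by
      rw [uIcc, mem_Icc] at hu; exact hu
    have huI : u ∈ Icc (0:ℝ) 1 :=
      ⟨le_trans (le_min hz.1 hw.1) h3.1, le_trans h3.2 (max_le hz.2 hw.2)⟩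
    have hzea := abs_lt.mp hz2
    have hwea := abs_lt.mp hw2
    have huε : |u - X| < ε := by
      rw [abs_lt]
      constructor
      · have : min z w ≤ u := h3.1
        rcases le_total z w with h' | h' <;> simp [min_eq_left, min_eq_right, h'] at this <;>
          linarith [hzea.1, hwea.1]
      · have : u ≤ max z w := h3.2
        rcases le_total z w with h' | h' <;> simp [max_eq_left, max_eq_right, h'] at this <;>
          linarith [hzea.2, hwea.2]
    have huX : u = X := hiso u huI hFu huε
    rcases hside with ⟨hz3, hw3⟩ | ⟨hz3, hw3⟩
    · have : X < min z w := lt_min hz3 hw3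
      rw [huX] at h3; linarith [h3.1]
    · have : max z w < X := max_lt hz3 hw3
      rw [huX] at h3; linarith [h3.2]
  -- points on the right / left if there is room
  have hRight : X < 1 → ((∀ z ∈ Icc (0:ℝ) 1, X < z → z - X < ε → y < F z) ∨
      (∀ z ∈ Icc (0:ℝ) 1, X < z → z - X < ε → F z < y)) := by
    intro hX1
    set z0 := min 1 (X + ε/2) with hz0
    have hz0I : z0 ∈ Icc (0:ℝ) 1 := ⟨le_min (by linarith [hX.1]) (by linarith [hX.1]), min_le_left _ _⟩
    have hz0X : X < z0 := lt_min hX1 (by linarith)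
    have hz0ε : z0 - X < ε := by
      have : z0 ≤ X + ε/2 := min_le_right _ _
      linarith
    have habs : |z0 - X| < ε := by rw [abs_of_pos (sub_pos.mpr hz0X)]; exact hz0ε
    have habs0 : 0 < |z0 - X| := abs_pos.mpr (ne_of_gt (sub_pos.mpr hz0X))
    have hz0y : F z0 ≠ y := fun h => absurd (hiso z0 hz0I h habs) (ne_of_gt hz0X)
    rcases lt_or_gt_of_ne hz0y with h | h
    · right
      intro z hz hz1 hz2
      have habsz : |z - X| < ε := by rw [abs_of_pos (sub_pos.mpr hz1)]; exact hz2
      have habsz0 : 0 < |z - X| := abs_pos.mpr (ne_of_gt (sub_pos.mpr hz1))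
      rcases lt_trichotomy (F z) y with h' | h' | h'
      · exact h'
      · exact absurd (hiso z hz h' habsz) (ne_of_gt hz1)
      · exact absurd (key z0 hz0I habs0 habs z hz habsz0 habsz (Or.inl ⟨hz0X, hz1⟩) h h')
          (fun hc => hc)
    · left
      intro z hz hz1 hz2
      have habsz : |z - X| < ε := by rw [abs_of_pos (sub_pos.mpr hz1)]; exact hz2
      have habsz0 : 0 < |z - X| := abs_pos.mpr (ne_of_gt (sub_pos.mpr hz1))
      rcases lt_trichotomy (F z) y with h' | h' | h'
      · exact absurd (key z hz habsz0 habsz z0 hz0I habs0 habs (Or.inl ⟨hz1, hz0X⟩) h' h)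
          (fun hc => hc)
      · exact absurd (hiso z hz h' habsz) (ne_of_gt hz1)
      · exact h'
  have hLeft : 0 < X → ((∀ z ∈ Icc (0:ℝ) 1, z < X → X - z < ε → y < F z) ∨
      (∀ z ∈ Icc (0:ℝ) 1, z < X → X - z < ε → F z < y)) := by
    intro hX0
    set z0 := max 0 (X - ε/2) with hz0
    have hz0I : z0 ∈ Icc (0:ℝ) 1 := ⟨le_max_left _ _, max_le (by linarith [hX.2]) (by linarith [hX.2])⟩
    have hz0X : z0 < X := max_lt hX0 (by linarith)
    have hz0ε : X - z0 < ε := by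
      have : X - ε/2 ≤ z0 := le_max_right _ _
      linarith
    have habs : |z0 - X| < ε := by rw [abs_of_neg (sub_neg.mpr hz0X)]; linarith
    have habs0 : 0 < |z0 - X| := abs_pos.mpr (ne_of_lt (sub_neg.mpr hz0X))
    have hz0y : F z0 ≠ y := fun h => absurd (hiso z0 hz0I h habs) (ne_of_lt hz0X)
    rcases lt_or_gt_of_ne hz0y with h | h
    · right
      intro z hz hz1 hz2
      have habsz : |z - X| < ε := by rw [abs_of_neg (sub_neg.mpr hz1)]; linarith
      have habsz0 : 0 < |z - X| := abs_pos.mpr (ne_of_lt (sub_neg.mpr hz1))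
      rcases lt_trichotomy (F z) y with h' | h' | h'
      · exact h'
      · exact absurd (hiso z hz h' habsz) (ne_of_lt hz1)
      · exact absurd (key z0 hz0I habs0 habs z hz habsz0 habsz (Or.inr ⟨hz0X, hz1⟩) h h')
          (fun hc => hc)
    · left
      intro z hz hz1 hz2
      have habsz : |z - X| < ε := by rw [abs_of_neg (sub_neg.mpr hz1)]; linarith
      have habsz0 : 0 < |z - X| := abs_pos.mpr (ne_of_lt (sub_neg.mpr hz1))
      rcases lt_trichotomy (F z) y with h' | h' | h'
      · exact absurd (key z hz habsz0 habsz z0 hz0I habs0 habs (Or.inr ⟨hz1, hz0X⟩) h' h)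
          (fun hc => hc)
      · exact absurd (hiso z hz h' habsz) (ne_of_lt hz1)
      · exact h'
  -- helper: build NdI from two-sided sign information
  have mkNd : ∀ {G : ℝ → ℝ} {y' : ℝ}, G X = y' →
      (∀ z ∈ Icc (0:ℝ) 1, X < z → z - X < ε → y' < G z) →
      (∀ z ∈ Icc (0:ℝ) 1, z < X → X - z < ε → G z < y') → NdI G X := by
    intro G y' hGX hR hL
    refine ⟨ε, hε, fun z hz hz1 hz2 => ?_⟩
    rw [div_nonneg_iff]
    rcases lt_or_gt_of_ne (fun h : z = X => by simp [h] at hz1) with h | h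
    · right
      constructor
      · have := hL z hz h (by rw [abs_of_neg (sub_neg.mpr h)] at hz2; linarith)
        rw [hGX]; linarith
      · linarith
    · left
      constructor
      · have := hR z hz h (by rw [abs_of_pos (sub_pos.mpr h)] at hz2; linarith)
        rw [hGX]; linarith
      · linarith
  have hnegX : (-F) X = -y := by simp [hFX]
  -- X < 1
  have hX1 : X < 1 := by
    rcases lt_or_eq_of_le hX.2 with h | h
    · exact h
    · exfalso
      have hX0 : 0 < X := by rw [h]; norm_num
      rcases hLeft hX0 with hL | hL
      · -- F > y on the left; so -F is nondecreasing at X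
        refine (h1 X hX).2 (mkNd hnegX ?_ ?_)
        · intro z hz hz1 _; exfalso; rw [h] at hz1; linarith [hz.2]
        · intro z hz hz1 hz2
          have := hL z hz hz1 hz2
          simp only [Pi.neg_apply]; linarith
      · refine (h1 X hX).1 (mkNd hFX ?_ ?_)
        · intro z hz hz1 _; exfalso; rw [h] at hz1; linarith [hz.2]
        · intro z hz hz1 hz2; exact hL z hz hz1 hz2
  have hX0 : 0 < X := by
    rcases lt_or_eq_of_le hX.1 with h | h
    · exact h
    · exfalso
      rcases hRight hX1 with hR | hR
      · refine (h1 X hX).1 (mkNd hFX ?_ ?_)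
        · intro z hz hz1 hz2; exact hR z hz hz1 hz2
        · intro z hz hz1 _; exfalso; rw [← h] at hz1; linarith [hz.1]
      · refine (h1 X hX).2 (mkNd hnegX ?_ ?_)
        · intro z hz hz1 hz2
          have := hR z hz hz1 hz2
          simp only [Pi.neg_apply]; linarith
        · intro z hz hz1 _; exfalso; rw [← h] at hz1; linarith [hz.1]
  refine ⟨hX0, hX1, ?_⟩
  rcases hRight hX1 with hR | hR <;> rcases hLeft hX0 with hL | hL
  · -- both sides above y
    left
    intro z hz hz1 hz2
    rcases lt_or_gt_of_ne (fun h : z = X => by simp [h] at hz1) with h | h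
    · exact hL z hz h (by rw [abs_of_neg (sub_neg.mpr h)] at hz2; linarith)
    · exact hR z hz h (by rw [abs_of_pos (sub_pos.mpr h)] at hz2; linarith)
  · -- right above, left below : F nondecreasing at X, contradiction
    exact absurd (mkNd hFX hR hL) (h1 X hX).1
  · -- right below, left above : -F nondecreasing at X
    exfalso
    refine (h1 X hX).2 (mkNd hnegX ?_ ?_)
    · intro z hz hz1 hz2
      have := hR z hz hz1 hz2
      simp only [Pi.neg_apply]; linarith
    · intro z hz hz1 hz2
      have := hL z hz hz1 hz2
      simp only [Pi.neg_apply]; linarith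
  · -- both sides below
    right
    intro z hz hz1 hz2
    rcases lt_or_gt_of_ne (fun h : z = X => by simp [h] at hz1) with h | h
    · exact hL z hz h (by rw [abs_of_neg (sub_neg.mpr h)] at hz2; linarith)
    · exact hR z hz h (by rw [abs_of_pos (sub_pos.mpr h)] at hz2; linarith)

theorem extr_near (hF : Continuous F) {X ε p q r : ℝ}
    (hpI : p ∈ Icc (0:ℝ) 1) (hrI : r ∈ Icc (0:ℝ) 1) (hpq : p < q) (hqr : q < r)
    (hdip : (F q < F p ∧ F q < F r) ∨ (F p < F q ∧ F r < F q))
    (hpX : |p - X| < ε) (hrX : |r - X| < ε) :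
    ∃ m ∈ Icc (0:ℝ) 1, LocExtrI F m ∧ |m - X| < ε := by
  have hpa := abs_lt.mp hpX
  have hra := abs_lt.mp hrX
  rcases hdip with ⟨hd1, hd2⟩ | ⟨hd1, hd2⟩
  · obtain ⟨m, hm, hmin⟩ := isCompact_Icc.exists_isMinOn ⟨q, hpq.le, hqr.le⟩ hF.continuousOn
    have hmq : F m ≤ F q := isMinOn_iff.mp hmin q ⟨hpq.le, hqr.le⟩
    have hmp : m ≠ p := fun h => by rw [h] at hmq; linarith
    have hmr : m ≠ r := fun h => by rw [h] at hmq; linarith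
    have hmo : m ∈ Ioo p r := ⟨lt_of_le_of_ne hm.1 (Ne.symm hmp), lt_of_le_of_ne hm.2 hmr⟩
    have hmI : m ∈ Icc (0:ℝ) 1 := ⟨hpI.1.trans hm.1, hm.2.trans hrI.2⟩
    refine ⟨m, hmI, Or.inl ⟨min (m - p) (r - m), lt_min (by linarith [hmo.1]) (by linarith [hmo.2]),
      fun z hz hzd => ?_⟩, by rw [abs_lt]; constructor <;> linarith [hmo.1, hmo.2]⟩
    have h1 := lt_of_lt_of_le hzd (min_le_left _ _)
    have h2 := lt_of_lt_of_le hzd (min_le_right _ _)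
    have ha := abs_lt.mp h1
    have hb := abs_lt.mp h2
    exact isMinOn_iff.mp hmin z ⟨by linarith, by linarith⟩
  · obtain ⟨m, hm, hmax⟩ := isCompact_Icc.exists_isMaxOn ⟨q, hpq.le, hqr.le⟩ hF.continuousOn
    have hmq : F q ≤ F m := isMaxOn_iff.mp hmax q ⟨hpq.le, hqr.le⟩
    have hmp : m ≠ p := fun h => by rw [h] at hmq; linarith
    have hmr : m ≠ r := fun h => by rw [h] at hmq; linarith
    have hmo : m ∈ Ioo p r := ⟨lt_of_le_of_ne hm.1 (Ne.symm hmp), lt_of_le_of_ne hm.2 hmr⟩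
    have hmI : m ∈ Icc (0:ℝ) 1 := ⟨hpI.1.trans hm.1, hm.2.trans hrI.2⟩
    refine ⟨m, hmI, Or.inr ⟨min (m - p) (r - m), lt_min (by linarith [hmo.1]) (by linarith [hmo.2]),
      fun z hz hzd => ?_⟩, by rw [abs_lt]; constructor <;> linarith [hmo.1, hmo.2]⟩
    have h1 := lt_of_lt_of_le hzd (min_le_left _ _)
    have h2 := lt_of_lt_of_le hzd (min_le_right _ _)
    have ha := abs_lt.mp h1
    have hb := abs_lt.mp h2
    exact isMaxOn_iff.mp hmax z ⟨by linarith, by linarith⟩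

theorem exists_locExtr_near (hF : Continuous F)
    (h1 : ∀ X ∈ Icc (0:ℝ) 1, ¬ NdI F X ∧ ¬ NdI (-F) X)
    {X ε : ℝ} (hX : X ∈ Icc (0:ℝ) 1) (hε : 0 < ε) :
    ∃ m ∈ Icc (0:ℝ) 1, LocExtrI F m ∧ |m - X| < ε := by
  obtain ⟨hnd1, hnd2⟩ := h1 X hX
  have hz : ∃ z ∈ Icc (0:ℝ) 1, 0 < |z - X| ∧ |z - X| < ε ∧ (F z - F X) / (z - X) < 0 := by
    by_contra h
    push_neg at h
    exact hnd1 ⟨ε, hε, fun z hz h1' h2' => h z hz h1' h2'⟩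
  have hw : ∃ w ∈ Icc (0:ℝ) 1, 0 < |w - X| ∧ |w - X| < ε ∧ ((-F) w - (-F) X) / (w - X) < 0 := by
    by_contra h
    push_neg at h
    exact hnd2 ⟨ε, hε, fun z hz h1' h2' => h z hz h1' h2'⟩
  obtain ⟨z, hzI, hz0, hzε, hzr⟩ := hz
  obtain ⟨w, hwI, hw0, hwε, hwr⟩ := hw
  have hX0 : |(0:ℝ)| < ε := by rwa [abs_zero]
  have hXX : |X - X| < ε := by rwa [sub_self]
  have hza := abs_lt.mp hzε
  have hwa := abs_lt.mp hwε
  have hzs : (X < z ∧ F z < F X) ∨ (z < X ∧ F X < F z) := by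
    rcases div_neg_iff.mp hzr with ⟨ha, hb⟩ | ⟨ha, hb⟩
    · exact Or.inr ⟨by linarith, by linarith⟩
    · exact Or.inl ⟨by linarith, by linarith⟩
  have hws : (X < w ∧ F X < F w) ∨ (w < X ∧ F w < F X) := by
    have hpos : (F w - F X) / (w - X) > 0 := by
      have h0 : (-F) w - (-F) X = -(F w - F X) := by simp [Pi.neg_apply]; ring
      rw [h0, neg_div] at hwr
      linarith
    rcases div_pos_iff.mp hpos with ⟨ha, hb⟩ | ⟨ha, hb⟩
    · exact Or.inl ⟨by linarith, by linarith⟩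
    · exact Or.inr ⟨by linarith, by linarith⟩
  rcases hzs with ⟨hz1, hz2⟩ | ⟨hz1, hz2⟩ <;> rcases hws with ⟨hw1, hw2⟩ | ⟨hw1, hw2⟩
  · -- z, w > X : F z < F X < F w
    rcases lt_trichotomy z w with h | h | h
    · exact extr_near hF hX hwI hz1 h (Or.inl ⟨hz2, by linarith⟩) hXX hwε
    · exfalso; rw [h] at hz2; linarith
    · exact extr_near hF hX hzI hw1 h (Or.inr ⟨hw2, by linarith⟩) hXX hzε
  · -- z > X, w < X : F w < F X, F z < F X
    exact extr_near hF hwI hzI hw1 hz1 (Or.inr ⟨hw2, hz2⟩) hwε hzε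
  · -- z < X, w > X : F X < F z, F X < F w
    exact extr_near hF hzI hwI hz1 hw1 (Or.inl ⟨hz2, hw2⟩) hzε hwε
  · -- z, w < X : F w < F X < F z
    rcases lt_trichotomy z w with h | h | h
    · exact extr_near hF hzI hX h hw1 (Or.inl ⟨by linarith, hw2⟩) hzε hXX
    · exfalso; rw [h] at hz2; linarith
    · exact extr_near hF hwI hX h hz1 (Or.inr ⟨by linarith, hz2⟩) hwε hXX

/-- An isolated point of a level set is a local extremum. -/
theorem isolated_locExtr (hF : Continuous F)
    (h1 : ∀ X ∈ Icc (0:ℝ) 1, ¬ NdI F X ∧ ¬ NdI (-F) X)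
    {y X ε : ℝ} (hX : X ∈ Icc (0:ℝ) 1) (hFX : F X = y) (hε : 0 < ε)
    (hiso : ∀ z ∈ Icc (0:ℝ) 1, F z = y → |z - X| < ε → z = X) :
    LocExtrI F X := by
  obtain ⟨-, -, hsign | hsign⟩ := sign_dichotomy hF h1 hX hFX hε hiso
  · left
    refine ⟨ε, hε, fun z hz hzd => ?_⟩
    rcases eq_or_ne z X with h | h
    · rw [h]
    · exact le_of_lt (hFX ▸ hsign z hz (abs_pos.mpr (sub_ne_zero.mpr h)) hzd)
  · right
    refine ⟨ε, hε, fun z hz hzd => ?_⟩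
    rcases eq_or_ne z X with h | h
    · rw [h]
    · exact le_of_lt (hFX ▸ hsign z hz (abs_pos.mpr (sub_ne_zero.mpr h)) hzd)

/-- A level in the open range cannot be attained at exactly one point. -/
theorem not_single_level (hF : Continuous F)
    (h1 : ∀ X ∈ Icc (0:ℝ) 1, ¬ NdI F X ∧ ¬ NdI (-F) X)
    {y X : ℝ} (hX : X ∈ Icc (0:ℝ) 1) (hFX : F X = y)
    (ha : ∃ a ∈ Icc (0:ℝ) 1, F a < y) (hb : ∃ b ∈ Icc (0:ℝ) 1, y < F b)
    (hiso : ∀ z ∈ Icc (0:ℝ) 1, F z = y → z = X) : False := by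
  have habs : ∀ z ∈ Icc (0:ℝ) 1, |z - X| < 2 := by
    intro z hz
    rw [abs_lt]
    constructor <;> [linarith [hz.1, hX.2]; linarith [hz.2, hX.1]]
  obtain ⟨-, -, hsign | hsign⟩ := sign_dichotomy hF h1 hX hFX two_pos
    (fun z hz h _ => hiso z hz h)
  · obtain ⟨a, haI, hav⟩ := ha
    have haX : a ≠ X := fun h => by rw [h, hFX] at hav; exact lt_irrefl _ hav
    have := hsign a haI (abs_pos.mpr (sub_ne_zero.mpr haX)) (habs a haI)
    linarith
  · obtain ⟨b, hbI, hbv⟩ := hb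
    have hbX : b ≠ X := fun h => by rw [h, hFX] at hbv; exact lt_irrefl _ hbv
    have := hsign b hbI (abs_pos.mpr (sub_ne_zero.mpr hbX)) (habs b hbI)
    linarith

/-- With injectivity on extrema, a local extremum point is isolated in its level set. -/
theorem locExtr_isolated
    (h2' : ∀ X ∈ Icc (0:ℝ) 1, ∀ X' ∈ Icc (0:ℝ) 1,
      LocExtrI F X → LocExtrI F X' → F X = F X' → X = X')
    {X : ℝ} (hX : X ∈ Icc (0:ℝ) 1) (hext : LocExtrI F X) :
    ∃ δ > (0:ℝ), ∀ z ∈ Icc (0:ℝ) 1, F z = F X → |z - X| < δ → z = X := by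
  rcases hext with ⟨ε, hε, hmin⟩ | ⟨ε, hε, hmax⟩
  · refine ⟨ε/2, by linarith, fun z hz hFz hzd => ?_⟩
    have hzmin : LocMinI F z := by
      refine ⟨ε/2, by linarith, fun w hw hwd => ?_⟩
      have hwX : |w - X| < ε := by
        calc |w - X| ≤ |w - z| + |z - X| := abs_sub_le w z X
          _ < ε/2 + ε/2 := add_lt_add hwd hzd
          _ = ε := by ring
      rw [hFz]
      exact hmin w hw hwX
    exact h2' z hz X hX (Or.inl hzmin) (Or.inl ⟨ε, hε, hmin⟩) hFz
  · refine ⟨ε/2, by linarith, fun z hz hFz hzd => ?_⟩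
    have hzmax : LocMaxI F z := by
      refine ⟨ε/2, by linarith, fun w hw hwd => ?_⟩
      have hwX : |w - X| < ε := by
        calc |w - X| ≤ |w - z| + |z - X| := abs_sub_le w z X
          _ < ε/2 + ε/2 := add_lt_add hwd hzd
          _ = ε := by ring
      rw [hFz]
      exact hmax w hw hwX
    exact h2' z hz X hX (Or.inr hzmax) (Or.inr ⟨ε, hε, hmax⟩) hFz

/-- Every local extremum value is an inf or sup of `F` over a rational subinterval. -/
theorem extrVal_mem (hF : Continuous F) {X : ℝ} (hX : X ∈ Icc (0:ℝ) 1)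
    (hext : LocExtrI F X) :
    ∃ p : ℚ × ℚ, F X = sInf (F '' (Icc (0:ℝ) 1 ∩ Icc (p.1:ℝ) (p.2:ℝ))) ∨
      F X = sSup (F '' (Icc (0:ℝ) 1 ∩ Icc (p.1:ℝ) (p.2:ℝ))) := by
  rcases hext with ⟨ε, hε, hmin⟩ | ⟨ε, hε, hmax⟩
  · obtain ⟨q1, hq1⟩ := exists_rat_btwn (show X - ε < X by linarith)
    obtain ⟨q2, hq2⟩ := exists_rat_btwn (show X < X + ε by linarith)
    refine ⟨(q1, q2), Or.inl ?_⟩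
    have hls : IsLeast (F '' (Icc (0:ℝ) 1 ∩ Icc (q1:ℝ) (q2:ℝ))) (F X) := by
      constructor
      · exact ⟨X, ⟨hX, hq1.2.le, hq2.1.le⟩, rfl⟩
      · rintro v ⟨w, ⟨hwI, hw1, hw2⟩, rfl⟩
        exact hmin w hwI (abs_lt.mpr ⟨by linarith [hq1.1], by linarith [hq2.2]⟩)
    exact hls.csInf_eq.symm
  · obtain ⟨q1, hq1⟩ := exists_rat_btwn (show X - ε < X by linarith)
    obtain ⟨q2, hq2⟩ := exists_rat_btwn (show X < X + ε by linarith)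
    refine ⟨(q1, q2), Or.inr ?_⟩
    have hls : IsGreatest (F '' (Icc (0:ℝ) 1 ∩ Icc (q1:ℝ) (q2:ℝ))) (F X) := by
      constructor
      · exact ⟨X, ⟨hX, hq1.2.le, hq2.1.le⟩, rfl⟩
      · rintro v ⟨w, ⟨hwI, hw1, hw2⟩, rfl⟩
        exact hmax w hwI (abs_lt.mpr ⟨by linarith [hq1.1], by linarith [hq2.2]⟩)
    exact hls.csSup_eq.symm

/-- The set of local extremum values is countable. -/
theorem extrVals_countable (hF : Continuous F) :
    {y : ℝ | ∃ X ∈ Icc (0:ℝ) 1, LocExtrI F X ∧ F X = y}.Countable := by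
  have hsub : {y : ℝ | ∃ X ∈ Icc (0:ℝ) 1, LocExtrI F X ∧ F X = y} ⊆
      ⋃ p : ℚ × ℚ, ({sInf (F '' (Icc (0:ℝ) 1 ∩ Icc (p.1:ℝ) (p.2:ℝ))),
        sSup (F '' (Icc (0:ℝ) 1 ∩ Icc (p.1:ℝ) (p.2:ℝ)))} : Set ℝ) := by
    rintro y ⟨X, hX, hext, rfl⟩
    obtain ⟨p, hp⟩ := extrVal_mem hF hX hext
    exact mem_iUnion.mpr ⟨p, by rcases hp with h | h <;> simp [h]⟩
  exact Countable.mono hsub (countable_iUnion fun p =>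
    ((Set.finite_singleton _).insert _).countable)

/-- Level sets contain no interval. -/
theorem level_nwd (h1 : ∀ X ∈ Icc (0:ℝ) 1, ¬ NdI F X ∧ ¬ NdI (-F) X) (y : ℝ) :
    ∀ a b : ℝ, a < b → ∃ t, a < t ∧ t < b ∧ t ∉ Icc (0:ℝ) 1 ∩ F ⁻¹' {y} := by
  intro a b hab
  by_contra hc
  push_neg at hc
  have hmem : ∀ t, a < t → t < b → t ∈ Icc (0:ℝ) 1 ∧ F t = y := by
    intro t h1' h2'
    have := hc t h1' h2'
    exact ⟨this.1, this.2⟩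
  set X := (a + b) / 2 with hXdef
  have hXm := hmem X (by rw [hXdef]; linarith) (by rw [hXdef]; linarith)
  apply (h1 X hXm.1).1
  refine ⟨(b - a) / 2, by linarith, fun z hz hz1 hz2 => ?_⟩
  have hza := abs_lt.mp hz2
  have hzm := hmem z (by linarith [hza.1]) (by linarith [hza.2])
  rw [hzm.2, hXm.2, sub_self, zero_div]


end BGAux

/-- Transfer: a subset of the unit interval is a Cantor set iff its real image is. -/
theorem isCantorSet_of_image {S : Set unitInterval}
    (h : Nonempty (↥(Subtype.val '' S) ≃ₜ (ℕ → Bool))) : IsCantorSet S := by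
  obtain ⟨e⟩ := h
  have hmem1 : ∀ x : ↥S, ((x : unitInterval) : ℝ) ∈ Subtype.val '' S :=
    fun x => ⟨x.1, x.2, rfl⟩
  have hmem2 : ∀ y : ↥(Subtype.val '' S), (y : ℝ) ∈ unitInterval := by
    rintro ⟨r, a, ha, rfl⟩
    exact a.2
  have hmem3 : ∀ y : ↥(Subtype.val '' S), (⟨(y : ℝ), hmem2 y⟩ : unitInterval) ∈ S := by
    rintro ⟨r, a, ha, rfl⟩
    rw [Subtype.coe_eta]
    exact ha
  let φ : ↥S ≃ₜ ↥(Subtype.val '' S) :=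
    { toFun := fun x => ⟨((x : unitInterval) : ℝ), hmem1 x⟩
      invFun := fun y => ⟨⟨(y : ℝ), hmem2 y⟩, hmem3 y⟩
      left_inv := fun x => by
        apply Subtype.ext
        apply Subtype.ext
        rfl
      right_inv := fun y => by
        apply Subtype.ext
        rfl
      continuous_toFun := (continuous_subtype_val.comp continuous_subtype_val).subtype_mk _
      continuous_invFun := (continuous_subtype_val.subtype_mk _).subtype_mk _ }
  exact ⟨φ.trans e⟩

/-- If `f ∈ C[0,1]` is monotone at no point and injective on its set of local extremum
points, then `f` has the Bruckner-Garg property. -/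
theorem hasBrucknerGarg_of_nowhereMonotone_of_injOn_extr (f : C(unitInterval, ℝ))
    (h1 : ∀ x : unitInterval, ¬ MonotoneAtPt f x)
    (h2 : Set.InjOn f {x : unitInterval | IsLocalExtr (⇑f) x}) :
    HasBrucknerGargProperty f := by
  classical
  set F : ℝ → ℝ := fun r => f (Set.projIcc 0 1 zero_le_one r) with hFdef
  have hFcont : Continuous F := f.continuous.comp continuous_projIcc
  have hFval : ∀ z : unitInterval, F (z : ℝ) = f z := by
    intro z
    rw [hFdef]
    exact congrArg f (Set.projIcc_val zero_le_one z)
  have hFmk : ∀ (X : ℝ) (hX : X ∈ Icc (0:ℝ) 1), F X = f ⟨X, hX⟩ := by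
    intro X hX
    rw [hFdef]
    exact congrArg f (Set.projIcc_of_mem zero_le_one hX)
  -- transfer of the nowhere-monotonicity hypothesis
  have h1' : ∀ X ∈ Icc (0:ℝ) 1, ¬ BGAux.NdI F X ∧ ¬ BGAux.NdI (-F) X := by
    intro X hX
    constructor
    · rintro ⟨ε, hε, hnd⟩
      refine h1 ⟨X, hX⟩ (Or.inl ⟨ε, hε, fun z hz1 hz2 => ?_⟩)
      have := hnd (z : ℝ) z.2 hz1 hz2
      rwa [hFval z, hFmk X hX] at this
    · rintro ⟨ε, hε, hnd⟩
      refine h1 ⟨X, hX⟩ (Or.inr ⟨ε, hε, fun z hz1 hz2 => ?_⟩)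
      have := hnd (z : ℝ) z.2 hz1 hz2
      simp only [Pi.neg_apply] at this
      rw [hFval z, hFmk X hX] at this
      simp only [ContinuousMap.neg_apply]
      convert this using 2
  -- correspondence of local extrema
  have hmin_corr : ∀ (X : ℝ) (hX : X ∈ Icc (0:ℝ) 1),
      BGAux.LocMinI F X → IsLocalMin (⇑f) ⟨X, hX⟩ := by
    rintro X hX ⟨ε, hε, hm⟩
    rw [IsLocalMin, IsMinFilter, Metric.eventually_nhds_iff]
    refine ⟨ε, hε, fun z hz => ?_⟩
    have hd' : |(z : ℝ) - X| < ε := by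
      rwa [Subtype.dist_eq, Real.dist_eq] at hz
    have := hm (z : ℝ) z.2 hd'
    rwa [hFval z, hFmk X hX] at this
  have hmax_corr : ∀ (X : ℝ) (hX : X ∈ Icc (0:ℝ) 1),
      BGAux.LocMaxI F X → IsLocalMax (⇑f) ⟨X, hX⟩ := by
    rintro X hX ⟨ε, hε, hm⟩
    rw [IsLocalMax, IsMaxFilter, Metric.eventually_nhds_iff]
    refine ⟨ε, hε, fun z hz => ?_⟩
    have hd' : |(z : ℝ) - X| < ε := by
      rwa [Subtype.dist_eq, Real.dist_eq] at hz
    have := hm (z : ℝ) z.2 hd'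
    rwa [hFval z, hFmk X hX] at this
  have hextr_corr : ∀ (X : ℝ) (hX : X ∈ Icc (0:ℝ) 1),
      BGAux.LocExtrI F X → IsLocalExtr (⇑f) ⟨X, hX⟩ := by
    rintro X hX (h | h)
    · exact (hmin_corr X hX h).isExtr
    · exact (hmax_corr X hX h).isExtr
  have h2' : ∀ X ∈ Icc (0:ℝ) 1, ∀ X' ∈ Icc (0:ℝ) 1,
      BGAux.LocExtrI F X → BGAux.LocExtrI F X' → F X = F X' → X = X' := by
    intro X hX X' hX' he he' hv
    have e1 : IsLocalExtr (⇑f) ⟨X, hX⟩ := hextr_corr X hX he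
    have e2 : IsLocalExtr (⇑f) ⟨X', hX'⟩ := hextr_corr X' hX' he'
    have hv' : f ⟨X, hX⟩ = f ⟨X', hX'⟩ := by rw [← hFmk X hX, ← hFmk X' hX']; exact hv
    have := h2 e1 e2 hv'
    exact congrArg Subtype.val this
  -- extreme values
  obtain ⟨Xm, hXmI, hXmmin⟩ := isCompact_Icc.exists_isMinOn (nonempty_Icc.mpr zero_le_one)
    hFcont.continuousOn
  obtain ⟨XM, hXMI, hXMmax⟩ := isCompact_Icc.exists_isMaxOn (nonempty_Icc.mpr zero_le_one)
    hFcont.continuousOn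
  have hXmmin' : ∀ z ∈ Icc (0:ℝ) 1, F Xm ≤ F z := isMinOn_iff.mp hXmmin
  have hXMmax' : ∀ z ∈ Icc (0:ℝ) 1, F z ≤ F XM := isMaxOn_iff.mp hXMmax
  have hrange : range (⇑f) = F '' Icc (0:ℝ) 1 := by
    ext y
    constructor
    · rintro ⟨z, rfl⟩
      exact ⟨(z : ℝ), z.2, hFval z⟩
    · rintro ⟨r, hr, rfl⟩
      exact ⟨⟨r, hr⟩, (hFmk r hr).symm⟩
  set m := sInf (range (⇑f)) with hmdef
  set M := sSup (range (⇑f)) with hMdef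
  have hm : m = F Xm := by
    rw [hmdef, hrange]
    exact IsLeast.csInf_eq ⟨⟨Xm, hXmI, rfl⟩, by rintro v ⟨w, hw, rfl⟩; exact hXmmin' w hw⟩
  have hM : M = F XM := by
    rw [hMdef, hrange]
    exact IsGreatest.csSup_eq ⟨⟨XM, hXMI, rfl⟩, by rintro v ⟨w, hw, rfl⟩; exact hXMmax' w hw⟩
  have hlbF : ∀ r ∈ Icc (0:ℝ) 1, m ≤ F r := by intro r hr; rw [hm]; exact hXmmin' r hr
  have hubF : ∀ r ∈ Icc (0:ℝ) 1, F r ≤ M := by intro r hr; rw [hM]; exact hXMmax' r hr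
  have hmM : m < M := by
    rcases lt_or_eq_of_le ((hm ▸ hM ▸ hXmmin' XM hXMI : m ≤ M)) with h | h
    · exact h
    · exfalso
      refine h1 ⟨0, by norm_num, by norm_num⟩ (Or.inl ⟨1, one_pos, fun z hz1 hz2 => ?_⟩)
      have hz : f z = m := le_antisymm (by rw [h]; exact (hFval z) ▸ hubF _ z.2)
        ((hFval z) ▸ hlbF _ z.2)
      have hx : f ⟨0, by norm_num, by norm_num⟩ = m := le_antisymm
        (by rw [h]; exact (hFmk 0 (by norm_num)) ▸ hubF 0 (by norm_num))
        ((hFmk 0 (by norm_num)) ▸ hlbF 0 (by norm_num))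
      rw [hz, hx, sub_self, zero_div]
  -- attaining values
  have hsurj : ∀ y ∈ Icc m M, ∃ X ∈ Icc (0:ℝ) 1, F X = y := by
    intro y hy
    have hy' : y ∈ uIcc (F Xm) (F XM) := by
      rw [uIcc_of_le (hXmmin' XM hXMI)]
      exact ⟨hm ▸ hy.1, hM ▸ hy.2⟩
    obtain ⟨u, hu, hFu⟩ := intermediate_value_uIcc hFcont.continuousOn hy'
    rw [uIcc, mem_Icc] at hu
    exact ⟨u, ⟨le_trans (le_min hXmI.1 hXMI.1) hu.1, le_trans hu.2 (max_le hXmI.2 hXMI.2)⟩, hFu⟩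
  have hlow : ∀ y ∈ Ioo m M, ∃ a ∈ Icc (0:ℝ) 1, F a < y :=
    fun y hy => ⟨Xm, hXmI, hm ▸ hy.1⟩
  have hhigh : ∀ y ∈ Ioo m M, ∃ b ∈ Icc (0:ℝ) 1, y < F b :=
    fun y hy => ⟨XM, hXMI, hM ▸ hy.2⟩
  -- the countable dense set
  set D : Set ℝ := {y | y ∈ Ioo m M ∧ ∃ X ∈ Icc (0:ℝ) 1, BGAux.LocExtrI F X ∧ F X = y}
    with hDdef
  unfold HasBrucknerGargProperty
  rw [← hmdef, ← hMdef]
  refine ⟨D, ?_, ?_, ?_, ?_, ?_, ?_⟩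
  -- countable
  · exact Countable.mono (fun y hy => hy.2) (BGAux.extrVals_countable hFcont)
  -- D ⊆ Ioo
  · exact fun y hy => hy.1
  -- dense
  · intro y hy
    rw [Metric.mem_closure_iff]
    intro η hη
    set η' := min η (min (y - m) (M - y)) with hη'def
    have hη'pos : 0 < η' := lt_min hη (lt_min (by linarith [hy.1]) (by linarith [hy.2]))
    obtain ⟨X0, hX0I, hX0v⟩ := hsurj y ⟨hy.1.le, hy.2.le⟩
    obtain ⟨δ, hδpos, hδ⟩ := Metric.continuous_iff.mp hFcont X0 η' hη'pos
    obtain ⟨X', hX'I, hX'ext, hX'd⟩ := BGAux.exists_locExtr_near hFcont h1' hX0I hδpos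
    have hFd : dist (F X') y < η' := by
      rw [← hX0v]
      exact hδ X' (by rwa [Real.dist_eq])
    have hFd' : |F X' - y| < η' := by rwa [Real.dist_eq] at hFd
    have habs := abs_lt.mp hFd'
    have h1'' : η' ≤ y - m := le_trans (min_le_right _ _) (min_le_left _ _)
    have h2'' : η' ≤ M - y := le_trans (min_le_right _ _) (min_le_right _ _)
    refine ⟨F X', ⟨⟨by linarith, by linarith⟩, X', hX'I, hX'ext, rfl⟩, ?_⟩
    rw [dist_comm]
    exact lt_of_lt_of_le hFd (min_le_left _ _)
  -- singletons at the extremes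
  · intro y hy
    have hglobal : ∀ w : unitInterval, f ⟨Xm, hXmI⟩ ≤ f w := by
      intro w
      rw [← hFmk Xm hXmI, ← hFval w]
      exact hXmmin' _ w.2
    have hglobal' : ∀ w : unitInterval, f w ≤ f ⟨XM, hXMI⟩ := by
      intro w
      rw [← hFmk XM hXMI, ← hFval w]
      exact hXMmax' _ w.2
    rcases hy with rfl | hy
    · refine ⟨⟨Xm, hXmI⟩, ?_⟩
      ext z
      simp only [mem_preimage, mem_singleton_iff]
      constructor
      · intro hz
        have hzmin : IsLocalMin (⇑f) z := Filter.Eventually.of_forall (fun w => by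
          rw [hz]
          have : m ≤ f w := (hFval w) ▸ hlbF _ w.2
          exact this)
        have hxmin : IsLocalMin (⇑f) ⟨Xm, hXmI⟩ := Filter.Eventually.of_forall hglobal
        exact h2 hzmin.isExtr hxmin.isExtr (by rw [hz, ← hFmk Xm hXmI, ← hm])
      · intro hz
        rw [hz, ← hFmk Xm hXmI, hm]
    · rw [mem_singleton_iff] at hy
      subst hy
      refine ⟨⟨XM, hXMI⟩, ?_⟩
      ext z
      simp only [mem_preimage, mem_singleton_iff]
      constructor
      · intro hz
        have hzmax : IsLocalMax (⇑f) z := Filter.Eventually.of_forall (fun w => by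
          rw [hz]
          have : f w ≤ M := (hFval w) ▸ hubF _ w.2
          exact this)
        have hxmax : IsLocalMax (⇑f) ⟨XM, hXMI⟩ := Filter.Eventually.of_forall hglobal'
        exact h2 hzmax.isExtr hxmax.isExtr (by rw [hz, ← hFmk XM hXMI, ← hM])
      · intro hz
        rw [hz, ← hFmk XM hXMI, hM]
  -- Cantor levels off D
  · rintro y ⟨hyIoo, hyD⟩
    set Ky : Set ℝ := Icc (0:ℝ) 1 ∩ F ⁻¹' {y} with hKydef
    have hKyval : Subtype.val '' ((⇑f) ⁻¹' {y}) = Ky := by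
      ext r
      constructor
      · rintro ⟨z, hz, rfl⟩
        exact ⟨z.2, by rw [mem_preimage, mem_singleton_iff, hFval z]; exact hz⟩
      · rintro ⟨hrI, hrF⟩
        rw [mem_preimage, mem_singleton_iff] at hrF
        exact ⟨⟨r, hrI⟩, by rw [mem_preimage, mem_singleton_iff, ← hFmk r hrI]; exact hrF, rfl⟩
    have hKycomp : IsCompact Ky :=
      isCompact_Icc.inter_right (isClosed_singleton.preimage hFcont)
    have hKyne : Ky.Nonempty := by
      obtain ⟨X0, hX0I, hX0v⟩ := hsurj y ⟨hyIoo.1.le, hyIoo.2.le⟩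
      exact ⟨X0, hX0I, by rwa [mem_preimage, mem_singleton_iff]⟩
    have hKynwd := BGAux.level_nwd h1' y
    have hKyacc : ∀ p ∈ Ky, ∀ ε > (0:ℝ), ∃ q ∈ Ky, q ≠ p ∧ |q - p| < ε := by
      intro p hp ε hε
      by_contra hc
      push_neg at hc
      have hiso : ∀ z ∈ Icc (0:ℝ) 1, F z = y → |z - p| < ε → z = p := by
        intro z hz hFz hzd
        by_contra hne
        exact absurd hzd (not_lt.mpr (hc z ⟨hz, by rwa [mem_preimage, mem_singleton_iff]⟩ hne))
      have hpF : F p = y := by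
        have := hp.2; rwa [mem_preimage, mem_singleton_iff] at this
      have hext := BGAux.isolated_locExtr hFcont h1' hp.1 hpF hε hiso
      exact hyD ⟨hyIoo, p, hp.1, hext, hpF⟩
    have hcantor := BGAux.cantor_homeo hKycomp hKyne hKyacc hKynwd
    exact isCantorSet_of_image (hKyval ▸ hcantor)
  -- levels on D : Cantor set plus one point
  · rintro y ⟨hyIoo, X0, hX0I, hX0ext, hX0v⟩
    set Ky : Set ℝ := Icc (0:ℝ) 1 ∩ F ⁻¹' {y} with hKydef
    have hKymem : ∀ r, r ∈ Ky ↔ r ∈ Icc (0:ℝ) 1 ∧ F r = y := by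
      intro r
      rw [hKydef, mem_inter_iff, mem_preimage, mem_singleton_iff]
    have hKycomp : IsCompact Ky :=
      isCompact_Icc.inter_right (isClosed_singleton.preimage hFcont)
    have hKynwd := BGAux.level_nwd h1' y
    obtain ⟨δ, hδpos, hδ⟩ := BGAux.locExtr_isolated h2' hX0I hX0ext
    have hδ' : ∀ z ∈ Icc (0:ℝ) 1, F z = y → |z - X0| < δ → z = X0 := by
      intro z hz hFz hzd
      exact hδ z hz (by rw [hFz, hX0v]) hzd
    set C : Set ℝ := Ky \ {X0} with hCdef
    have hCeq : C = Ky ∩ (Metric.ball X0 δ)ᶜ := by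
      ext z
      constructor
      · rintro ⟨hz, hne⟩
        refine ⟨hz, fun hb => ?_⟩
        rw [Metric.mem_ball, Real.dist_eq] at hb
        exact (hne : z ∉ {X0}) (mem_singleton_iff.mpr
          (hδ' z ((hKymem z).mp hz).1 ((hKymem z).mp hz).2 hb))
      · rintro ⟨hz, hnb⟩
        refine ⟨hz, fun hzz => hnb ?_⟩
        rw [mem_singleton_iff] at hzz
        rw [hzz, Metric.mem_ball, dist_self]
        exact hδpos
    have hCcomp : IsCompact C := by
      rw [hCeq]
      exact hKycomp.inter_right (Metric.isOpen_ball.isClosed_compl)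
    have hCne : C.Nonempty := by
      by_contra hc
      rw [not_nonempty_iff_eq_empty] at hc
      have hiso : ∀ z ∈ Icc (0:ℝ) 1, F z = y → z = X0 := by
        intro z hz hFz
        by_contra hne
        have : z ∈ C := ⟨(hKymem z).mpr ⟨hz, hFz⟩, hne⟩
        rw [hc] at this
        exact this
      exact BGAux.not_single_level hFcont h1' hX0I hX0v (hlow y hyIoo) (hhigh y hyIoo) hiso
    have hCacc : ∀ p ∈ C, ∀ ε > (0:ℝ), ∃ q ∈ C, q ≠ p ∧ |q - p| < ε := by
      rintro p ⟨hpKy, hpne⟩ ε hε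
      rw [mem_singleton_iff] at hpne
      by_contra hc
      push_neg at hc
      have hppos : 0 < |p - X0| := abs_pos.mpr (sub_ne_zero.mpr hpne)
      have hiso : ∀ z ∈ Icc (0:ℝ) 1, F z = y → |z - p| < min ε |p - X0| → z = p := by
        intro z hz hFz hzd
        by_contra hne
        have hzX0 : z ≠ X0 := by
          intro hzz
          rw [hzz] at hzd
          have := lt_of_lt_of_le hzd (min_le_right _ _)
          rw [abs_sub_comm] at this
          exact lt_irrefl _ this
        have hzC : z ∈ C := ⟨(hKymem z).mpr ⟨hz, hFz⟩, hzX0⟩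
        exact absurd (lt_of_lt_of_le hzd (min_le_left _ _)) (not_lt.mpr (hc z hzC hne))
      have hpF : F p = y := ((hKymem p).mp hpKy).2
      have hext := BGAux.isolated_locExtr hFcont h1' ((hKymem p).mp hpKy).1 hpF
        (lt_min hε hppos) hiso
      exact hpne (h2' p ((hKymem p).mp hpKy).1 X0 hX0I hext hX0ext (by rw [hpF, hX0v]))
    have hCnwd : ∀ a b : ℝ, a < b → ∃ t, a < t ∧ t < b ∧ t ∉ C := by
      intro a b hab
      obtain ⟨t, ht1, ht2, ht3⟩ := hKynwd a b hab
      exact ⟨t, ht1, ht2, fun hc => ht3 hc.1⟩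
    have hcantor := BGAux.cantor_homeo hCcomp hCne hCacc hCnwd
    -- back to the subtype
    set Cs : Set unitInterval := {z : unitInterval | (z : ℝ) ∈ C} with hCsdef
    set x0 : unitInterval := ⟨X0, hX0I⟩ with hx0def
    have hCsval : Subtype.val '' Cs = C := by
      ext r
      constructor
      · rintro ⟨z, hz, rfl⟩
        exact hz
      · intro hr
        have hrI : r ∈ Icc (0:ℝ) 1 := ((hKymem r).mp hr.1).1
        exact ⟨⟨r, hrI⟩, hr, rfl⟩
    refine ⟨Cs, x0, isCantorSet_of_image (hCsval ▸ hcantor), ?_, ?_⟩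
    · intro hx
      exact (hx : (X0 : ℝ) ∈ C).2 rfl
    · ext z
      simp only [mem_preimage, mem_singleton_iff, mem_union]
      constructor
      · intro hz
        have hzKy : (z : ℝ) ∈ Ky := (hKymem _).mpr ⟨z.2, by rw [hFval z]; exact hz⟩
        rcases eq_or_ne (z : ℝ) X0 with h | h
        · exact Or.inr (Subtype.ext h)
        · exact Or.inl ⟨hzKy, h⟩
      · rintro (hz | hz)
        · have := ((hKymem _).mp hz.1).2
          rwa [hFval z] at this
        · rw [hz]
          have : f x0 = F X0 := (hFmk X0 hX0I).symm
          rw [this, hX0v]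
end
end

section
/- The set of functions f ∈ C[0,1] that are not monotone at any point of [0,1] is a non-shy subset of C[0,1]. -/
open MeasureTheory Set Filter Topology
open scoped ENNReal Real

noncomputable section

namespace NshyAux

/-- Ulam tightness: a Borel probability measure on a complete separable metric
space gives positive mass to some compact set. -/
lemma exists_compact_pos {α : Type*} [MetricSpace α] [CompleteSpace α]
    [TopologicalSpace.SeparableSpace α] [Nonempty α]
    [MeasurableSpace α] [BorelSpace α]
    (μ : Measure α) [IsProbabilityMeasure μ] :
    ∃ K : Set α, IsCompact K ∧ 0 < μ K := by
  obtain ⟨u, hu⟩ := TopologicalSpace.exists_dense_seq α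
  have main : ∀ r : ℝ, 0 < r → ∀ δ : ℝ≥0∞, δ ≠ 0 →
      ∃ m : ℕ, 1 - δ ≤ μ (⋃ i ∈ Finset.range m, Metric.closedBall (u i) r) := by
    intro r hr δ hδ
    set T : ℕ → Set α := fun m => ⋃ i ∈ Finset.range m, Metric.closedBall (u i) r with hT
    have hmono : Monotone T := by
      intro a b hab
      exact Set.biUnion_subset_biUnion_left (Finset.range_subset_range.2 hab)
    have hUnion : (⋃ m, T m) = univ := by
      apply Set.eq_univ_of_forall
      intro x
      obtain ⟨i, hi⟩ := hu.exists_dist_lt x hr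
      exact Set.mem_iUnion.2 ⟨i + 1, Set.mem_biUnion (Finset.self_mem_range_succ i) hi.le⟩
    have h1 : (1 : ℝ≥0∞) = ⨆ m, μ (T m) := by
      rw [← measure_univ (μ := μ), ← hUnion, Directed.measure_iUnion (hmono.directed_le)]
    have hlt : 1 - δ < ⨆ m, μ (T m) := by
      rw [← h1]
      exact ENNReal.sub_lt_self ENNReal.one_ne_top one_ne_zero hδ
    obtain ⟨m, hm⟩ := lt_iSup_iff.1 hlt
    exact ⟨m, hm.le⟩
  choose m hm using fun n : ℕ =>
    main (1 / ((n:ℝ) + 1)) (by positivity) ((2⁻¹ : ℝ≥0∞) ^ (n + 2)) (by simp)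
  set S : ℕ → Set α := fun n => ⋃ i ∈ Finset.range (m n), Metric.closedBall (u i) (1 / ((n:ℝ) + 1))
    with hS
  have hSclosed : ∀ n, IsClosed (S n) := by
    intro n
    exact Set.Finite.isClosed_biUnion (Finset.finite_toSet _)
      (fun i _ => Metric.isClosed_closedBall)
  set K : Set α := ⋂ n, S n with hK
  have hKcomp : IsCompact K := by
    apply TotallyBounded.isCompact_of_isClosed
    · rw [Metric.totallyBounded_iff]
      intro ε hε
      obtain ⟨n, hn⟩ := exists_nat_one_div_lt hε
      refine ⟨u '' {i | i < m n}, (Set.finite_Iio _).image u, ?_⟩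
      intro x hx
      have hx' : x ∈ S n := Set.mem_iInter.1 hx n
      obtain ⟨i, hi, hxi⟩ := Set.mem_iUnion₂.1 hx'
      refine Set.mem_biUnion ⟨i, Finset.mem_range.1 hi, rfl⟩ ?_
      exact Metric.closedBall_subset_ball hn hxi
    · exact isClosed_iInter hSclosed
  refine ⟨K, hKcomp, ?_⟩
  have hScompl : ∀ n, μ (S n)ᶜ ≤ (2⁻¹ : ℝ≥0∞) ^ (n + 2) := by
    intro n
    rw [prob_compl_eq_one_sub (hSclosed n).measurableSet]
    refine tsub_le_iff_right.2 ?_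
    calc (1 : ℝ≥0∞) = (2⁻¹ : ℝ≥0∞) ^ (n+2) + (1 - (2⁻¹ : ℝ≥0∞) ^ (n+2)) :=
          (add_tsub_cancel_of_le (pow_le_one' (by norm_num) _)).symm
      _ ≤ (2⁻¹ : ℝ≥0∞) ^ (n+2) + μ (S n) := by gcongr; exact hm n
  have hKc : μ Kᶜ ≤ 2⁻¹ := by
    have hcompl : Kᶜ = ⋃ n, (S n)ᶜ := by rw [hK, Set.compl_iInter]
    rw [hcompl]
    calc μ (⋃ n, (S n)ᶜ) ≤ ∑' n, μ (S n)ᶜ := measure_iUnion_le _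
      _ ≤ ∑' n, (2⁻¹ : ℝ≥0∞) ^ (n + 2) := ENNReal.tsum_le_tsum hScompl
      _ = 2⁻¹ := by
          simp_rw [pow_add, pow_two]
          rw [ENNReal.tsum_mul_right, ENNReal.tsum_geometric,
            ENNReal.one_sub_inv_two, inv_inv, ← mul_assoc,
            ENNReal.mul_inv_cancel two_ne_zero ENNReal.ofNat_ne_top, one_mul]
  by_contra h
  push_neg at h
  have hK0 : μ K = 0 := le_antisymm h (zero_le)
  have hcontr : (1 : ℝ≥0∞) ≤ 2⁻¹ := by
    calc (1:ℝ≥0∞) = μ univ := (measure_univ).symm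
      _ ≤ μ K + μ Kᶜ := by rw [← Set.union_compl_self K]; exact measure_union_le _ _
      _ = μ Kᶜ := by rw [hK0, zero_add]
      _ ≤ 2⁻¹ := hKc
  norm_num at hcontr

/-! ### The oscillating series -/

def aa (n : ℕ) : ℝ := (1/100)^n

lemma aa_pos (n : ℕ) : 0 < aa n := by unfold aa; positivity

lemma aa_le_one (n : ℕ) : aa n ≤ 1 := by unfold aa; exact pow_le_one₀ (by norm_num) (by norm_num)

lemma aa_summable : Summable aa := by unfold aa; exact summable_geometric_of_lt_one (by norm_num) (by norm_num)

lemma aa_succ (n : ℕ) : aa (n+1) = aa n * (1/100) := pow_succ _ _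

lemma aa_tail (n : ℕ) : (∑' m : ℕ, aa (m + n)) ≤ 2 * aa n := by
  have h1 : (fun m : ℕ => aa (m + n)) = fun m : ℕ => (1/100 : ℝ)^m * aa n := by
    funext m; rw [aa, aa, pow_add]
  rw [h1, tsum_mul_right, tsum_geometric_of_lt_one (by norm_num) (by norm_num)]
  have : ((1:ℝ) - 1/100)⁻¹ ≤ 2 := by norm_num
  nlinarith [aa_pos n]

lemma sin_diff_le (a b : ℝ) : |Real.sin a - Real.sin b| ≤ |a - b| := by
  rw [Real.sin_sub_sin]
  have h1 : |Real.sin ((a-b)/2)| ≤ |a-b|/2 := by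
    have := Real.abs_sin_le_abs (x := (a-b)/2)
    rwa [abs_div, abs_two] at this
  have h2 : |Real.cos ((a+b)/2)| ≤ 1 := Real.abs_cos_le_one _
  calc |2 * Real.sin ((a-b)/2) * Real.cos ((a+b)/2)|
      = 2 * |Real.sin ((a-b)/2)| * |Real.cos ((a+b)/2)| := by
        rw [abs_mul, abs_mul, abs_two]
    _ ≤ 2 * (|a-b|/2) * 1 := by
        apply mul_le_mul _ h2 (abs_nonneg _) (by positivity)
        apply mul_le_mul_of_nonneg_left h1 (by norm_num)
    _ = |a-b| := by ring

def g0 (N : ℕ → ℕ) (t : ℝ) : ℝ := ∑' n, aa n * Real.sin (2*π*(N n)*t)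

lemma summand_summable (N : ℕ → ℕ) (t : ℝ) :
    Summable (fun n => aa n * Real.sin (2*π*(N n)*t)) := by
  apply Summable.of_norm_bounded aa_summable
  intro n
  rw [Real.norm_eq_abs, abs_mul, abs_of_pos (aa_pos n)]
  calc aa n * |Real.sin (2*π*(N n)*t)| ≤ aa n * 1 :=
        mul_le_mul_of_nonneg_left (Real.abs_sin_le_one _) (aa_pos n).le
    _ = aa n := mul_one _

lemma g0_cont (N : ℕ → ℕ) : Continuous (g0 N) := by
  apply continuous_tsum (fun i => by fun_prop) aa_summable
  intro n x
  rw [Real.norm_eq_abs, abs_mul, abs_of_pos (aa_pos n)]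
  calc aa n * |Real.sin (2*π*(N n)*x)| ≤ aa n * 1 :=
        mul_le_mul_of_nonneg_left (Real.abs_sin_le_one _) (aa_pos n).le
    _ = aa n := mul_one _

lemma tail_bound (N : ℕ → ℕ) (n : ℕ) (w : ℝ) :
    |∑' (m : ℕ), aa (m+(n+1)) * Real.sin (2*π*(N (m+(n+1)))*w)| ≤ 2 * aa (n+1) := by
  have hsum : Summable (fun m => aa (m+(n+1))) := (summable_nat_add_iff (n+1)).2 aa_summable
  have hbd : ∀ m : ℕ, |aa (m+(n+1)) * Real.sin (2*π*(N (m+(n+1)))*w)| ≤ aa (m+(n+1)) := by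
    intro m
    rw [abs_mul, abs_of_pos (aa_pos _)]
    calc aa (m+(n+1)) * |Real.sin (2*π*(N (m+(n+1)))*w)| ≤ aa (m+(n+1)) * 1 :=
          mul_le_mul_of_nonneg_left (Real.abs_sin_le_one _) (aa_pos _).le
      _ = aa (m+(n+1)) := mul_one _
  have hs2 : Summable (fun m => |aa (m+(n+1)) * Real.sin (2*π*(N (m+(n+1)))*w)|) :=
    hsum.of_nonneg_of_le (fun _ => abs_nonneg _) hbd
  calc |∑' (m : ℕ), aa (m+(n+1)) * Real.sin (2*π*(N (m+(n+1)))*w)|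
      ≤ ∑' (m : ℕ), |aa (m+(n+1)) * Real.sin (2*π*(N (m+(n+1)))*w)| := by
        have hnorm : Summable (fun m => ‖aa (m+(n+1)) * Real.sin (2*π*(N (m+(n+1)))*w)‖) := by
          simpa only [Real.norm_eq_abs] using hs2
        simpa only [Real.norm_eq_abs] using norm_tsum_le_tsum_norm hnorm
    _ ≤ ∑' (m : ℕ), aa (m+(n+1)) := Summable.tsum_le_tsum hbd hs2 hsum
    _ ≤ 2 * aa (n+1) := aa_tail (n+1)

lemma g0_sub (N : ℕ → ℕ) (n : ℕ) (u v : ℝ) :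
    |g0 N u - g0 N v - aa n * (Real.sin (2*π*(N n)*u) - Real.sin (2*π*(N n)*v))|
      ≤ (∑ m ∈ Finset.range n, aa m * (2*π*(N m))) * |u - v| + 4 * aa (n+1) := by
  have hgu : g0 N u = (∑ m ∈ Finset.range (n+1), aa m * Real.sin (2*π*(N m)*u)) +
      ∑' (m : ℕ), aa (m+(n+1)) * Real.sin (2*π*(N (m+(n+1)))*u) :=
    (Summable.sum_add_tsum_nat_add (n+1) (summand_summable N u)).symm
  have hgv : g0 N v = (∑ m ∈ Finset.range (n+1), aa m * Real.sin (2*π*(N m)*v)) +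
      ∑' (m : ℕ), aa (m+(n+1)) * Real.sin (2*π*(N (m+(n+1)))*v) :=
    (Summable.sum_add_tsum_nat_add (n+1) (summand_summable N v)).symm
  have hre : g0 N u - g0 N v - aa n * (Real.sin (2*π*(N n)*u) - Real.sin (2*π*(N n)*v)) =
      (∑ m ∈ Finset.range n,
        (aa m * Real.sin (2*π*(N m)*u) - aa m * Real.sin (2*π*(N m)*v))) +
      ((∑' (m : ℕ), aa (m+(n+1)) * Real.sin (2*π*(N (m+(n+1)))*u)) -
       (∑' (m : ℕ), aa (m+(n+1)) * Real.sin (2*π*(N (m+(n+1)))*v))) := by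
    rw [hgu, hgv, Finset.sum_range_succ, Finset.sum_range_succ, Finset.sum_sub_distrib]
    ring
  rw [hre]
  have hA : |∑ m ∈ Finset.range n,
      (aa m * Real.sin (2*π*(N m)*u) - aa m * Real.sin (2*π*(N m)*v))|
      ≤ (∑ m ∈ Finset.range n, aa m * (2*π*(N m))) * |u - v| := by
    calc |∑ m ∈ Finset.range n, (aa m * Real.sin (2*π*(N m)*u) - aa m * Real.sin (2*π*(N m)*v))|
        ≤ ∑ m ∈ Finset.range n, |aa m * Real.sin (2*π*(N m)*u) - aa m * Real.sin (2*π*(N m)*v)| :=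
          Finset.abs_sum_le_sum_abs _ _
      _ ≤ ∑ m ∈ Finset.range n, aa m * (2*π*(N m)) * |u - v| := by
          apply Finset.sum_le_sum
          intro m _
          rw [← mul_sub, abs_mul, abs_of_pos (aa_pos m)]
          have h1 : |Real.sin (2*π*(N m)*u) - Real.sin (2*π*(N m)*v)| ≤ 2*π*(N m) * |u - v| := by
            calc |Real.sin (2*π*(N m)*u) - Real.sin (2*π*(N m)*v)|
                ≤ |2*π*(N m)*u - 2*π*(N m)*v| := sin_diff_le _ _
              _ = 2*π*(N m) * |u - v| := by
                  rw [show 2*π*(N m)*u - 2*π*(N m)*v = (2*π*(N m)) * (u - v) by ring,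
                    abs_mul, abs_of_nonneg (by positivity)]
          calc aa m * |Real.sin (2*π*(N m)*u) - Real.sin (2*π*(N m)*v)|
              ≤ aa m * (2*π*(N m) * |u - v|) :=
                mul_le_mul_of_nonneg_left h1 (aa_pos m).le
            _ = aa m * (2*π*(N m)) * |u - v| := by ring
      _ = (∑ m ∈ Finset.range n, aa m * (2*π*(N m))) * |u - v| := by
          rw [Finset.sum_mul]
  calc |(∑ m ∈ Finset.range n, (aa m * Real.sin (2*π*(N m)*u) - aa m * Real.sin (2*π*(N m)*v))) +
        ((∑' (m : ℕ), aa (m+(n+1)) * Real.sin (2*π*(N (m+(n+1)))*u)) -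
         (∑' (m : ℕ), aa (m+(n+1)) * Real.sin (2*π*(N (m+(n+1)))*v)))|
      ≤ |∑ m ∈ Finset.range n, (aa m * Real.sin (2*π*(N m)*u) - aa m * Real.sin (2*π*(N m)*v))| +
        (|∑' (m : ℕ), aa (m+(n+1)) * Real.sin (2*π*(N (m+(n+1)))*u)| +
         |∑' (m : ℕ), aa (m+(n+1)) * Real.sin (2*π*(N (m+(n+1)))*v)|) := by
        refine le_trans (abs_add_le _ _) ?_
        gcongr
        exact abs_sub _ _
    _ ≤ (∑ m ∈ Finset.range n, aa m * (2*π*(N m))) * |u - v| + (2 * aa (n+1) + 2 * aa (n+1)) :=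
        add_le_add hA (add_le_add (tail_bound N n u) (tail_bound N n v))
    _ = (∑ m ∈ Finset.range n, aa m * (2*π*(N m))) * |u - v| + 4 * aa (n+1) := by ring

/-! ### Points of prescribed phase in small windows -/

lemma exists_right (M : ℕ) (hM : 0 < M) (x : unitInterval) (hx : (x:ℝ) + 1/M ≤ 1) (c : ℝ) :
    ∃ p : unitInterval, (x:ℝ) < p ∧ (p:ℝ) ≤ (x:ℝ) + 1/M ∧
      Real.sin (2*π*M*p) = Real.sin (2*π*c) := by
  have hMpos : (0:ℝ) < M := by exact_mod_cast hM
  set y : ℝ := M * x with hy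
  set k : ℤ := ⌊y - c⌋ + 1 with hk
  have hk1 : y < (k:ℝ) + c := by
    have := Int.lt_floor_add_one (y - c)
    push_cast [hk]; linarith
  have hk2 : (k:ℝ) + c ≤ y + 1 := by
    have := Int.floor_le (y - c)
    push_cast [hk]; linarith
  set p0 : ℝ := ((k:ℝ) + c) / M with hp0
  have hp1 : (x:ℝ) < p0 := by
    rw [hp0, lt_div_iff₀ hMpos]
    rw [hy] at hk1; linarith
  have hp2 : p0 ≤ (x:ℝ) + 1/M := by
    rw [hp0, div_le_iff₀ hMpos]
    rw [hy] at hk2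
    have : ((x:ℝ) + 1/M) * M = M * x + 1 := by field_simp
    linarith [this]
  have hmem : p0 ∈ unitInterval := by
    constructor
    · exact le_trans x.2.1 hp1.le
    · exact hp2.trans hx
  refine ⟨⟨p0, hmem⟩, hp1, hp2, ?_⟩
  have harg : 2*π*M*p0 = 2*π*c + k*(2*π) := by
    rw [hp0]; field_simp; ring
  rw [show ((⟨p0, hmem⟩ : unitInterval) : ℝ) = p0 from rfl, harg,
    Real.sin_add_int_mul_two_pi]

lemma exists_left (M : ℕ) (hM : 0 < M) (x : unitInterval) (hx : 0 ≤ (x:ℝ) - 1/M) (c : ℝ) :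
    ∃ p : unitInterval, (p:ℝ) < x ∧ (x:ℝ) - 1/M ≤ (p:ℝ) ∧
      Real.sin (2*π*M*p) = Real.sin (2*π*c) := by
  have hMpos : (0:ℝ) < M := by exact_mod_cast hM
  set y : ℝ := M * x with hy
  set k : ℤ := ⌈y - c⌉ - 1 with hk
  have hk1 : (k:ℝ) + c < y := by
    have := Int.ceil_lt_add_one (y - c)
    push_cast [hk]; linarith
  have hk2 : y - 1 ≤ (k:ℝ) + c := by
    have := Int.le_ceil (y - c)
    push_cast [hk]; linarith
  set p0 : ℝ := ((k:ℝ) + c) / M with hp0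
  have hp1 : p0 < (x:ℝ) := by
    rw [hp0, div_lt_iff₀ hMpos]
    rw [hy] at hk1; linarith
  have hp2 : (x:ℝ) - 1/M ≤ p0 := by
    rw [hp0, le_div_iff₀ hMpos]
    rw [hy] at hk2
    have : ((x:ℝ) - 1/M) * M = M * x - 1 := by field_simp
    linarith [this]
  have hmem : p0 ∈ unitInterval := by
    constructor
    · exact hx.trans hp2
    · exact le_trans hp1.le x.2.2
  refine ⟨⟨p0, hmem⟩, hp1, hp2, ?_⟩
  have harg : 2*π*M*p0 = 2*π*c + k*(2*π) := by
    rw [hp0]; field_simp; ring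
  rw [show ((⟨p0, hmem⟩ : unitInterval) : ℝ) = p0 from rfl, harg,
    Real.sin_add_int_mul_two_pi]

set_option maxHeartbeats 2000000 in
lemma key (K : Set C(unitInterval, ℝ)) (hK : IsCompact K) :
    ∃ g : C(unitInterval, ℝ), ∀ h ∈ K, ∀ x, ¬ MonotoneAtPt (h + g) x := by
  classical
  -- uniform equicontinuity of K
  have equi : ∀ ε : ℝ, 0 < ε → ∃ δ : ℝ, 0 < δ ∧ ∀ h ∈ K, ∀ s t : unitInterval,
      |(s:ℝ) - (t:ℝ)| ≤ δ → |h s - h t| ≤ ε := by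
    intro ε hε
    have hcont : ContinuousOn (fun p : C(unitInterval,ℝ) × unitInterval => p.1 p.2)
        (K ×ˢ (univ : Set unitInterval)) :=
      (ContinuousEval.continuous_eval).continuousOn
    have huc := (hK.prod isCompact_univ).uniformContinuousOn_of_continuous hcont
    rw [Metric.uniformContinuousOn_iff] at huc
    obtain ⟨δ, hδ, hδ'⟩ := huc ε hε
    refine ⟨δ/2, by positivity, ?_⟩
    intro h hh s t hst
    have hd : dist ((h, s) : C(unitInterval,ℝ) × unitInterval) (h, t) < δ := by
      rw [Prod.dist_eq]
      have h2 : dist s t = |(s:ℝ) - (t:ℝ)| := by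
        rw [Subtype.dist_eq, Real.dist_eq]
      rw [dist_self, h2]
      rw [max_eq_right (abs_nonneg _)]
      linarith
    have := hδ' (h, s) (Set.mk_mem_prod hh (mem_univ s)) (h, t)
      (Set.mk_mem_prod hh (mem_univ t)) hd
    rw [Real.dist_eq] at this
    exact this.le
  choose D hDpos hD using fun n : ℕ => equi (aa n / 10) (by have := aa_pos n; positivity)
  -- construction of the frequencies N
  set base : ℕ → ℕ := fun j => max 4 (⌈1 / D j⌉₊ + 1) with hbase
  set N : ℕ → ℕ := fun n =>
    Nat.rec (base 0) (fun k ih => max (base (k+1)) (80*(k+1)*100^(k+1)*ih)) n with hNdef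
  have hNsucc : ∀ k : ℕ, N (k+1) = max (base (k+1)) (80*(k+1)*100^(k+1)*(N k)) := fun k => rfl
  have hbase_le : ∀ n, base n ≤ N n := by
    intro n
    cases n with
    | zero => exact le_rfl
    | succ k => rw [hNsucc]; exact le_max_left _ _
  have hN4 : ∀ n, 4 ≤ N n := fun n => le_trans (le_max_left _ _) (hbase_le n)
  have hNpos : ∀ n, 0 < N n := fun n => lt_of_lt_of_le (by norm_num) (hN4 n)
  have hNposR : ∀ n, (0:ℝ) < (N n : ℝ) := fun n => by exact_mod_cast hNpos n
  have hNmono : Monotone N := by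
    apply monotone_nat_of_le_succ
    intro k
    rw [hNsucc]
    refine le_trans ?_ (le_max_right _ _)
    have h1 : 1 ≤ 80*(k+1)*100^(k+1) := by
      have : 1 ≤ 100^(k+1) := Nat.one_le_pow _ _ (by norm_num)
      nlinarith
    calc N k = 1 * N k := (one_mul _).symm
      _ ≤ 80*(k+1)*100^(k+1) * N k := Nat.mul_le_mul_right _ h1
  have hND : ∀ n, 1 / (N n : ℝ) ≤ D n := by
    intro n
    have h1 : (⌈1 / D n⌉₊ + 1 : ℕ) ≤ N n := le_trans (le_max_right _ _) (hbase_le n)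
    have h2 : (1 / D n : ℝ) ≤ (N n : ℝ) := by
      calc (1 / D n : ℝ) ≤ ⌈1 / D n⌉₊ := Nat.le_ceil _
        _ ≤ ((⌈1 / D n⌉₊ + 1 : ℕ) : ℝ) := by push_cast; linarith
        _ ≤ (N n : ℝ) := by exact_mod_cast h1
    rw [div_le_iff₀ (hNposR n)]
    have := (div_le_iff₀ (hDpos n)).1 h2
    linarith
  have hN14 : ∀ n, 1 / (N n : ℝ) ≤ 1/4 := by
    intro n
    have h4 : (4:ℝ) ≤ (N n : ℝ) := by exact_mod_cast hN4 n
    rw [div_le_div_iff₀ (hNposR n) (by norm_num)]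
    linarith
  have hP3 : ∀ n, (∑ m ∈ Finset.range n, aa m * (2*π*(N m : ℝ))) * (1/(N n : ℝ)) ≤ aa n / 10 := by
    intro n
    cases n with
    | zero =>
      simp only [Finset.range_zero, Finset.sum_empty, zero_mul]
      have := aa_pos 0
      positivity
    | succ k =>
      have hsum : (∑ m ∈ Finset.range (k+1), aa m * (2*π*(N m : ℝ)))
          ≤ (k+1) * (8 * (N k : ℝ)) := by
        have hterm : ∀ m ∈ Finset.range (k+1), aa m * (2*π*(N m : ℝ)) ≤ 8 * (N k : ℝ) := by
          intro m hm
          have hm' : m ≤ k := Nat.lt_succ_iff.1 (Finset.mem_range.1 hm)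
          have hNm : (N m : ℝ) ≤ (N k : ℝ) := by exact_mod_cast hNmono hm'
          have hπ := Real.pi_le_four
          have hπ0 := Real.pi_pos
          have haam := aa_le_one m
          have haa0 := (aa_pos m).le
          have hNm0 := (hNposR m).le
          calc aa m * (2*π*(N m : ℝ)) ≤ 1 * (2*π*(N m : ℝ)) :=
                mul_le_mul_of_nonneg_right haam (by positivity)
            _ = 2*π*(N m : ℝ) := one_mul _
            _ ≤ 8 * (N m : ℝ) := mul_le_mul_of_nonneg_right (by linarith) hNm0
            _ ≤ 8 * (N k : ℝ) := by linarith
        calc (∑ m ∈ Finset.range (k+1), aa m * (2*π*(N m : ℝ)))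
            ≤ ∑ m ∈ Finset.range (k+1), 8 * (N k : ℝ) := Finset.sum_le_sum hterm
          _ = (k+1) * (8 * (N k : ℝ)) := by
              rw [Finset.sum_const, Finset.card_range]; push_cast; ring
      have hNk1 : (80*(k+1)*100^(k+1)*(N k) : ℝ) ≤ (N (k+1) : ℝ) := by
        have := le_trans (le_max_right (base (k+1)) (80*(k+1)*100^(k+1)*(N k)))
          (le_of_eq (hNsucc k).symm)
        exact_mod_cast this
      have haa1 : aa (k+1) * (100:ℝ)^(k+1) = 1 := by
        rw [aa, one_div, inv_pow, inv_mul_cancel₀ (by positivity)]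
      have key2 : (∑ m ∈ Finset.range (k+1), aa m * (2*π*(N m : ℝ)))
          ≤ aa (k+1)/10 * (N (k+1) : ℝ) := by
        calc (∑ m ∈ Finset.range (k+1), aa m * (2*π*(N m : ℝ)))
            ≤ (k+1) * (8 * (N k : ℝ)) := hsum
          _ = aa (k+1)/10 * ((80*(k+1)*100^(k+1)*(N k) : ℕ) : ℝ) := by
              push_cast
              linear_combination (-8*((k:ℝ)+1)*(N k : ℝ)) * haa1
          _ ≤ aa (k+1)/10 * (N (k+1) : ℝ) := by
              have := (aa_pos (k+1)).le
              have h10 : (0:ℝ) ≤ aa (k+1)/10 := by positivity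
              apply mul_le_mul_of_nonneg_left _ h10
              push_cast
              exact_mod_cast hNk1
      rw [mul_one_div, div_le_iff₀ (hNposR (k+1))]
      calc (∑ m ∈ Finset.range (k+1), aa m * (2*π*(N m : ℝ)))
          ≤ aa (k+1)/10 * (N (k+1) : ℝ) := key2
        _ = aa (k+1) / 10 * (N (k+1) : ℝ) := rfl
  have hNgrow : ∀ n : ℕ, n + 1 ≤ N n := by
    intro n
    induction n with
    | zero => linarith [hN4 0]
    | succ k ih =>
      have h1 : 80*(k+1)*100^(k+1)*(N k) ≤ N (k+1) := by
        rw [hNsucc]; exact le_max_right _ _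
      have h2 : 1 ≤ 100^(k+1) := Nat.one_le_pow _ _ (by norm_num)
      have h3 : 2 ≤ 80*(k+1)*100^(k+1) := by
        calc 2 ≤ 80*(k+1) := by omega
          _ = 80*(k+1)*1 := (mul_one _).symm
          _ ≤ 80*(k+1)*100^(k+1) := Nat.mul_le_mul_left _ h2
      have h4 : 2 * N k ≤ 80*(k+1)*100^(k+1)*(N k) := Nat.mul_le_mul_right _ h3
      omega
  -- the function g
  have gcont : Continuous (fun t : ℝ => g0 N t) := g0_cont N
  set g : C(unitInterval, ℝ) := ⟨fun z : unitInterval => g0 N (z:ℝ),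
    gcont.comp continuous_subtype_val⟩ with hgdef
  have hgapp : ∀ z : unitInterval, g z = g0 N (z:ℝ) := fun z => rfl
  -- main estimate
  have est : ∀ h ∈ K, ∀ n : ℕ, ∀ x z : unitInterval, |(z:ℝ) - (x:ℝ)| ≤ 1/(N n : ℝ) →
      |((h z + g z) - (h x + g x)) -
        aa n * (Real.sin (2*π*(N n : ℝ)*(z:ℝ)) - Real.sin (2*π*(N n : ℝ)*(x:ℝ)))|
        ≤ 3/10 * aa n := by
    intro h hh n x z hz
    have h1 : |h z - h x| ≤ aa n/10 := hD n h hh z x (le_trans hz (hND n))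
    have h2 := g0_sub N n (z:ℝ) (x:ℝ)
    have hL0 : (0:ℝ) ≤ ∑ m ∈ Finset.range n, aa m * (2*π*(N m : ℝ)) := by
      apply Finset.sum_nonneg
      intro m _
      have := (aa_pos m).le
      positivity
    have h3 : (∑ m ∈ Finset.range n, aa m * (2*π*(N m : ℝ))) * |(z:ℝ) - (x:ℝ)| ≤ aa n/10 := by
      calc (∑ m ∈ Finset.range n, aa m * (2*π*(N m : ℝ))) * |(z:ℝ) - (x:ℝ)|
          ≤ (∑ m ∈ Finset.range n, aa m * (2*π*(N m : ℝ))) * (1/(N n : ℝ)) :=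
            mul_le_mul_of_nonneg_left hz hL0
        _ ≤ aa n/10 := hP3 n
    have h4 : 4 * aa (n+1) ≤ aa n/10 := by
      rw [aa_succ]
      have := aa_pos n
      linarith
    have h5 : |g z - g x -
        aa n * (Real.sin (2*π*(N n : ℝ)*(z:ℝ)) - Real.sin (2*π*(N n : ℝ)*(x:ℝ)))|
        ≤ aa n/10 + aa n/10 := by
      rw [hgapp, hgapp]
      calc |g0 N (z:ℝ) - g0 N (x:ℝ) -
          aa n * (Real.sin (2*π*(N n : ℝ)*(z:ℝ)) - Real.sin (2*π*(N n : ℝ)*(x:ℝ)))|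
          ≤ (∑ m ∈ Finset.range n, aa m * (2*π*(N m : ℝ))) * |(z:ℝ) - (x:ℝ)| + 4 * aa (n+1) :=
            h2
        _ ≤ aa n/10 + aa n/10 := add_le_add h3 h4
    have habs1 := abs_le.1 h1
    have habs5 := abs_le.1 h5
    rw [abs_le]
    have heq : (h z + g z) - (h x + g x) = (h z - h x) + (g z - g x) := by ring
    constructor
    · nlinarith [habs1.1, habs5.1]
    · nlinarith [habs1.2, habs5.2]
  -- dichotomy in right/left windows
  have sin14 : Real.sin (2*π*(1/4 : ℝ)) = 1 := by
    rw [show 2*π*(1/4 : ℝ) = π/2 by ring, Real.sin_pi_div_two]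
  have sinm14 : Real.sin (2*π*(-1/4 : ℝ)) = -1 := by
    rw [show 2*π*(-1/4 : ℝ) = -(π/2) by ring, Real.sin_neg, Real.sin_pi_div_two]
  have right_above : ∀ h ∈ K, ∀ n : ℕ, ∀ x : unitInterval, (x:ℝ) + 1/(N n : ℝ) ≤ 1 →
      Real.sin (2*π*(N n : ℝ)*(x:ℝ)) ≤ 1/2 →
      ∃ p : unitInterval, (x:ℝ) < (p:ℝ) ∧ (p:ℝ) ≤ (x:ℝ) + 1/(N n : ℝ) ∧
        h x + g x < h p + g p := by
    intro h hh n x hroom hs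
    obtain ⟨p, hp1, hp2, hp3⟩ := exists_right (N n) (hNpos n) x hroom (1/4)
    refine ⟨p, hp1, hp2, ?_⟩
    have he := est h hh n x p (by rw [abs_of_pos (by linarith)]; linarith)
    rw [hp3, sin14] at he
    have := abs_le.1 he
    nlinarith [aa_pos n, this.1, this.2]
  have right_below : ∀ h ∈ K, ∀ n : ℕ, ∀ x : unitInterval, (x:ℝ) + 1/(N n : ℝ) ≤ 1 →
      -(1/2) ≤ Real.sin (2*π*(N n : ℝ)*(x:ℝ)) →
      ∃ q : unitInterval, (x:ℝ) < (q:ℝ) ∧ (q:ℝ) ≤ (x:ℝ) + 1/(N n : ℝ) ∧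
        h q + g q < h x + g x := by
    intro h hh n x hroom hs
    obtain ⟨q, hq1, hq2, hq3⟩ := exists_right (N n) (hNpos n) x hroom (-1/4)
    refine ⟨q, hq1, hq2, ?_⟩
    have he := est h hh n x q (by rw [abs_of_pos (by linarith)]; linarith)
    rw [hq3, sinm14] at he
    have := abs_le.1 he
    nlinarith [aa_pos n, this.1, this.2]
  have left_above : ∀ h ∈ K, ∀ n : ℕ, ∀ x : unitInterval, 0 ≤ (x:ℝ) - 1/(N n : ℝ) →
      Real.sin (2*π*(N n : ℝ)*(x:ℝ)) ≤ 1/2 →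
      ∃ p : unitInterval, (p:ℝ) < (x:ℝ) ∧ (x:ℝ) - 1/(N n : ℝ) ≤ (p:ℝ) ∧
        h x + g x < h p + g p := by
    intro h hh n x hroom hs
    obtain ⟨p, hp1, hp2, hp3⟩ := exists_left (N n) (hNpos n) x hroom (1/4)
    refine ⟨p, hp1, hp2, ?_⟩
    have he := est h hh n x p (by rw [abs_of_neg (by linarith)]; linarith)
    rw [hp3, sin14] at he
    have := abs_le.1 he
    nlinarith [aa_pos n, this.1, this.2]
  have left_below : ∀ h ∈ K, ∀ n : ℕ, ∀ x : unitInterval, 0 ≤ (x:ℝ) - 1/(N n : ℝ) →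
      -(1/2) ≤ Real.sin (2*π*(N n : ℝ)*(x:ℝ)) →
      ∃ q : unitInterval, (q:ℝ) < (x:ℝ) ∧ (x:ℝ) - 1/(N n : ℝ) ≤ (q:ℝ) ∧
        h q + g q < h x + g x := by
    intro h hh n x hroom hs
    obtain ⟨q, hq1, hq2, hq3⟩ := exists_left (N n) (hNpos n) x hroom (-1/4)
    refine ⟨q, hq1, hq2, ?_⟩
    have he := est h hh n x q (by rw [abs_of_neg (by linarith)]; linarith)
    rw [hq3, sinm14] at he
    have := abs_le.1 he
    nlinarith [aa_pos n, this.1, this.2]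
  -- choosing a fine scale
  have pick : ∀ c : ℝ, 0 < c → ∃ n : ℕ, 1/(N n : ℝ) < c := by
    intro c hc
    obtain ⟨j, hj⟩ := exists_nat_gt (1/c)
    refine ⟨j, ?_⟩
    have hNj : (j:ℝ) < (N j : ℝ) := by exact_mod_cast Nat.lt_of_lt_of_le (Nat.lt_succ_self j) (hNgrow j)
    have h2 : 1/c < (N j : ℝ) := lt_trans hj hNj
    have h3 := (div_lt_iff₀ hc).1 h2
    rw [div_lt_iff₀ (hNposR j)]
    linarith
  -- sine vanishes at the endpoints
  have sin_at_zero : ∀ n : ℕ, ∀ x : unitInterval, (x:ℝ) = 0 →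
      Real.sin (2*π*(N n : ℝ)*(x:ℝ)) = 0 := by
    intro n x hx; rw [hx, mul_zero, Real.sin_zero]
  have sin_at_one : ∀ n : ℕ, ∀ x : unitInterval, (x:ℝ) = 1 →
      Real.sin (2*π*(N n : ℝ)*(x:ℝ)) = 0 := by
    intro n x hx
    rw [hx, mul_one, show 2*π*(N n : ℝ) = 0 + ((N n : ℤ) : ℝ)*(2*π) by push_cast; ring,
      Real.sin_add_int_mul_two_pi, Real.sin_zero]
  -- conclusion
  refine ⟨g, ?_⟩
  intro h hh x hmon
  have fap : ∀ z : unitInterval, (h + g) z = h z + g z := fun z => rfl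
  have fapn : ∀ z : unitInterval, (-(h + g)) z = -(h z + g z) := fun z => rfl
  rcases hmon with hnd | hnd
  · obtain ⟨ε, hε, hmono⟩ := hnd
    -- need z with ((h+g) z - (h+g) x)/(z-x) < 0
    have contra : ∀ z : unitInterval, 0 < |(z:ℝ) - (x:ℝ)| → |(z:ℝ) - (x:ℝ)| < ε →
        ((h z + g z) - (h x + g x)) / ((z:ℝ) - (x:ℝ)) < 0 → False := by
      intro z h1 h2 h3
      have := hmono z h1 h2
      rw [fap, fap] at this
      linarith
    by_cases hx1 : (x:ℝ) < 1
    · by_cases hx0 : 0 < (x:ℝ)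
      · obtain ⟨n, hn⟩ := pick (min ε (min (x:ℝ) (1-(x:ℝ))))
          (lt_min hε (lt_min hx0 (by linarith)))
        have hnε : 1/(N n : ℝ) < ε := lt_of_lt_of_le hn (min_le_left _ _)
        have hnx : 1/(N n : ℝ) < (x:ℝ) :=
          lt_of_lt_of_le hn (le_trans (min_le_right _ _) (min_le_left _ _))
        have hn1x : 1/(N n : ℝ) < 1-(x:ℝ) :=
          lt_of_lt_of_le hn (le_trans (min_le_right _ _) (min_le_right _ _))
        have hroomR : (x:ℝ) + 1/(N n : ℝ) ≤ 1 := by linarith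
        have hroomL : 0 ≤ (x:ℝ) - 1/(N n : ℝ) := by linarith
        rcases le_or_gt (-(1/2) : ℝ) (Real.sin (2*π*(N n : ℝ)*(x:ℝ))) with hs | hs
        · obtain ⟨q, hq1, hq2, hq3⟩ := right_below h hh n x hroomR hs
          exact contra q (by rw [abs_of_pos (by linarith)]; linarith)
            (by rw [abs_of_pos (by linarith)]; linarith)
            (div_neg_of_neg_of_pos (by linarith) (by linarith))
        · obtain ⟨p, hp1, hp2, hp3⟩ := left_above h hh n x hroomL (by linarith)
          exact contra p (by rw [abs_of_neg (by linarith)]; linarith)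
            (by rw [abs_of_neg (by linarith)]; linarith)
            (div_neg_of_pos_of_neg (by linarith) (by linarith))
      · have hx0' : (x:ℝ) = 0 := le_antisymm (not_lt.1 hx0) x.2.1
        obtain ⟨n, hn⟩ := pick ε hε
        have hroomR : (x:ℝ) + 1/(N n : ℝ) ≤ 1 := by
          rw [hx0']; linarith [hN14 n]
        obtain ⟨q, hq1, hq2, hq3⟩ := right_below h hh n x hroomR
          (by rw [sin_at_zero n x hx0']; norm_num)
        exact contra q (by rw [abs_of_pos (by linarith)]; linarith)
          (by rw [abs_of_pos (by linarith)]; linarith)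
          (div_neg_of_neg_of_pos (by linarith) (by linarith))
    · have hx1' : (x:ℝ) = 1 := le_antisymm x.2.2 (not_lt.1 hx1)
      obtain ⟨n, hn⟩ := pick ε hε
      have hroomL : 0 ≤ (x:ℝ) - 1/(N n : ℝ) := by
        rw [hx1']; linarith [hN14 n]
      obtain ⟨p, hp1, hp2, hp3⟩ := left_above h hh n x hroomL
        (by rw [sin_at_one n x hx1']; norm_num)
      exact contra p (by rw [abs_of_neg (by linarith)]; linarith)
        (by rw [abs_of_neg (by linarith)]; linarith)
        (div_neg_of_pos_of_neg (by linarith) (by linarith))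
  · obtain ⟨ε, hε, hmono⟩ := hnd
    have contra : ∀ z : unitInterval, 0 < |(z:ℝ) - (x:ℝ)| → |(z:ℝ) - (x:ℝ)| < ε →
        0 < ((h z + g z) - (h x + g x)) / ((z:ℝ) - (x:ℝ)) → False := by
      intro z h1 h2 h3
      have := hmono z h1 h2
      rw [fapn, fapn] at this
      have hne : ((z:ℝ) - (x:ℝ)) ≠ 0 := by
        intro h0; rw [h0] at h1; simp at h1
      have : 0 ≤ (-((h z + g z) - (h x + g x))) / ((z:ℝ) - (x:ℝ)) := by
        convert this using 2 <;> ring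
      rw [neg_div] at this
      linarith
    by_cases hx1 : (x:ℝ) < 1
    · by_cases hx0 : 0 < (x:ℝ)
      · obtain ⟨n, hn⟩ := pick (min ε (min (x:ℝ) (1-(x:ℝ))))
          (lt_min hε (lt_min hx0 (by linarith)))
        have hnε : 1/(N n : ℝ) < ε := lt_of_lt_of_le hn (min_le_left _ _)
        have hnx : 1/(N n : ℝ) < (x:ℝ) :=
          lt_of_lt_of_le hn (le_trans (min_le_right _ _) (min_le_left _ _))
        have hn1x : 1/(N n : ℝ) < 1-(x:ℝ) :=
          lt_of_lt_of_le hn (le_trans (min_le_right _ _) (min_le_right _ _))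
        have hroomR : (x:ℝ) + 1/(N n : ℝ) ≤ 1 := by linarith
        have hroomL : 0 ≤ (x:ℝ) - 1/(N n : ℝ) := by linarith
        rcases le_or_gt (Real.sin (2*π*(N n : ℝ)*(x:ℝ))) (1/2 : ℝ) with hs | hs
        · obtain ⟨p, hp1, hp2, hp3⟩ := right_above h hh n x hroomR hs
          exact contra p (by rw [abs_of_pos (by linarith)]; linarith)
            (by rw [abs_of_pos (by linarith)]; linarith)
            (div_pos (by linarith) (by linarith))
        · obtain ⟨q, hq1, hq2, hq3⟩ := left_below h hh n x hroomL (by linarith)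
          exact contra q (by rw [abs_of_neg (by linarith)]; linarith)
            (by rw [abs_of_neg (by linarith)]; linarith)
            (div_pos_of_neg_of_neg (by linarith) (by linarith))
      · have hx0' : (x:ℝ) = 0 := le_antisymm (not_lt.1 hx0) x.2.1
        obtain ⟨n, hn⟩ := pick ε hε
        have hroomR : (x:ℝ) + 1/(N n : ℝ) ≤ 1 := by
          rw [hx0']; linarith [hN14 n]
        obtain ⟨p, hp1, hp2, hp3⟩ := right_above h hh n x hroomR
          (by rw [sin_at_zero n x hx0']; norm_num)
        exact contra p (by rw [abs_of_pos (by linarith)]; linarith)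
          (by rw [abs_of_pos (by linarith)]; linarith)
          (div_pos (by linarith) (by linarith))
    · have hx1' : (x:ℝ) = 1 := le_antisymm x.2.2 (not_lt.1 hx1)
      obtain ⟨n, hn⟩ := pick ε hε
      have hroomL : 0 ≤ (x:ℝ) - 1/(N n : ℝ) := by
        rw [hx1']; linarith [hN14 n]
      obtain ⟨q, hq1, hq2, hq3⟩ := left_below h hh n x hroomL
        (by rw [sin_at_one n x hx1']; norm_num)
      exact contra q (by rw [abs_of_neg (by linarith)]; linarith)
        (by rw [abs_of_neg (by linarith)]; linarith)
        (div_pos_of_neg_of_neg (by linarith) (by linarith))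



end NshyAux

/-- The set of `f ∈ C[0,1]` that are monotone at no point of `[0,1]` is non-shy. -/
theorem nowhereMonotone_nonShy :
    ¬ IsShy {f : C(unitInterval, ℝ) | ∀ x : unitInterval, ¬ MonotoneAtPt f x} := by
  rintro ⟨B, hB, hAB, μ, hμ, h0⟩
  letI : MeasurableSpace C(unitInterval, ℝ) := borel _
  haveI : BorelSpace C(unitInterval, ℝ) := ⟨rfl⟩
  haveI : Nonempty C(unitInterval, ℝ) := ⟨0⟩
  haveI := hμ
  obtain ⟨K, hKcomp, hKpos⟩ := NshyAux.exists_compact_pos μ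
  obtain ⟨g, hg⟩ := NshyAux.key K hKcomp
  have hsub : K ⊆ (fun b => b + (-g)) '' B := by
    intro h hh
    exact ⟨h + g, hAB (hg h hh), add_neg_cancel_right h g⟩
  have h2 : μ K = 0 := measure_mono_null hsub (h0 (-g))
  rw [h2] at hKpos
  exact lt_irrefl _ hKpos

end
end

section
/- The set of functions f ∈ C[0,1] that are injective on the set of their local extremum points is prevalent in C[0,1]; equivalently, the set of f ∈ C[0,1] admitting two distinct local extremum points x₁ ≠ x₂ with f(x₁) = f(x₂) is shy. -/
open MeasureTheory Set Filter Topology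

noncomputable section

namespace InjOnExtrAux

abbrev G := C(unitInterval, ℝ)

/-- The identity function as an element of `C[0,1]`. -/
def φ : G := ⟨fun x => (x : ℝ), continuous_subtype_val⟩

@[simp] lemma φ_apply (x : unitInterval) : φ x = (x : ℝ) := rfl

/-- The rational closed subinterval of `[0,1]`. -/
def S (a b : ℚ) : Set unitInterval := {x : unitInterval | (a : ℝ) ≤ ↑x ∧ (↑x : ℝ) ≤ (b : ℝ)}

lemma isCompact_S (a b : ℚ) : IsCompact (S a b) := by
  have h : IsClosed (S a b) := by
    have : S a b = (fun x : unitInterval => (x : ℝ)) ⁻¹' (Icc (a : ℝ) b) := rfl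
    rw [this]
    exact isClosed_Icc.preimage continuous_subtype_val
  exact h.isCompact

/-- Extremum (sup if `m`, inf otherwise) of `f` over `S a b`. -/
def E (m : Bool) (a b : ℚ) (f : G) : ℝ :=
  if m then sSup (⇑f '' S a b) else sInf (⇑f '' S a b)

lemma E_true (a b : ℚ) (f : G) : E true a b f = sSup (⇑f '' S a b) := rfl
lemma E_false (a b : ℚ) (f : G) : E false a b f = sInf (⇑f '' S a b) := rfl

lemma E_le (m : Bool) (a b : ℚ) (hne : (S a b).Nonempty) (f g : G) :
    E m a b f ≤ E m a b g + dist f g := by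
  have hba : BddAbove (⇑g '' S a b) := (isCompact_S a b).bddAbove_image g.continuous.continuousOn
  have hbbf : BddBelow (⇑f '' S a b) := (isCompact_S a b).bddBelow_image f.continuous.continuousOn
  have hpt : ∀ x ∈ S a b, f x ≤ g x + dist f g := by
    intro x _
    have := ContinuousMap.dist_apply_le_dist (f := f) (g := g) x
    rw [Real.dist_eq] at this
    linarith [abs_le.mp this |>.2, le_abs_self (f x - g x)]
  cases m with
  | true =>
    simp only [E_true]
    apply csSup_le (hne.image _)
    rintro v ⟨x, hx, rfl⟩
    calc f x ≤ g x + dist f g := hpt x hx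
      _ ≤ sSup (⇑g '' S a b) + dist f g := by
          linarith [le_csSup hba (mem_image_of_mem _ hx)]
  | false =>
    simp only [E_false]
    obtain ⟨x, hx, hxe⟩ := (isCompact_S a b).exists_sInf_image_eq hne g.continuous.continuousOn
    calc sInf (⇑f '' S a b) ≤ f x := csInf_le hbbf (mem_image_of_mem _ hx)
      _ ≤ g x + dist f g := hpt x hx
      _ = sInf (⇑g '' S a b) + dist f g := by rw [hxe]

lemma continuous_E (m : Bool) (a b : ℚ) : Continuous (E m a b) := by
  by_cases hne : (S a b).Nonempty
  · refine LipschitzWith.continuous (K := 1) (LipschitzWith.of_dist_le_mul ?_)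
    intro f g
    rw [Real.dist_eq, NNReal.coe_one, one_mul, abs_sub_le_iff]
    constructor
    · linarith [E_le m a b hne f g]
    · linarith [E_le m a b hne g f, dist_comm f g]
  · have h0 : E m a b = fun _ => 0 := by
      funext f
      have him : ⇑f '' S a b = ∅ := by
        rw [image_eq_empty]; exact not_nonempty_iff_eq_empty.mp hne
      cases m <;> simp [E, him, Real.sSup_empty, Real.sInf_empty]
    rw [h0]; exact continuous_const

/-- Upper shift bound: if all points of `S a b` are `≤ r`, then the extremum of
`f + t • φ` grows at most at rate `r`. -/
lemma E_shift_le (m : Bool) (a b : ℚ) (hne : (S a b).Nonempty) {r : ℝ}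
    (hr : ∀ x ∈ S a b, (x : ℝ) ≤ r) (f : G) {s t : ℝ} (hst : s ≤ t) :
    E m a b (f + t • φ) ≤ E m a b (f + s • φ) + (t - s) * r := by
  have happ : ∀ (u : ℝ) (x : unitInterval), (f + u • φ) x = f x + u * (x : ℝ) := by
    intro u x; simp [φ]
  cases m with
  | true =>
    simp only [E_true]
    obtain ⟨x, hx, hxe⟩ := (isCompact_S a b).exists_sSup_image_eq hne
      (f + t • φ).continuous.continuousOn
    have h1 : f x + s * (x : ℝ) ≤ sSup (⇑(f + s • φ) '' S a b) := by
      have := le_csSup ((isCompact_S a b).bddAbove_image (f + s • φ).continuous.continuousOn)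
        (mem_image_of_mem (⇑(f + s • φ)) hx)
      rwa [happ] at this
    have h2 : (t - s) * (x : ℝ) ≤ (t - s) * r :=
      mul_le_mul_of_nonneg_left (hr x hx) (by linarith)
    rw [hxe, happ]
    nlinarith
  | false =>
    simp only [E_false]
    obtain ⟨x, hx, hxe⟩ := (isCompact_S a b).exists_sInf_image_eq hne
      (f + s • φ).continuous.continuousOn
    have h1 : sInf (⇑(f + t • φ) '' S a b) ≤ f x + t * (x : ℝ) := by
      have := csInf_le ((isCompact_S a b).bddBelow_image (f + t • φ).continuous.continuousOn)
        (mem_image_of_mem (⇑(f + t • φ)) hx)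
      rwa [happ] at this
    have h2 : (t - s) * (x : ℝ) ≤ (t - s) * r :=
      mul_le_mul_of_nonneg_left (hr x hx) (by linarith)
    rw [hxe, happ]
    nlinarith

/-- Lower shift bound: if all points of `S a b` are `≥ r`, then the extremum of
`f + t • φ` grows at least at rate `r`. -/
lemma E_shift_ge (m : Bool) (a b : ℚ) (hne : (S a b).Nonempty) {r : ℝ}
    (hr : ∀ x ∈ S a b, r ≤ (x : ℝ)) (f : G) {s t : ℝ} (hst : s ≤ t) :
    E m a b (f + s • φ) + (t - s) * r ≤ E m a b (f + t • φ) := by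
  have happ : ∀ (u : ℝ) (x : unitInterval), (f + u • φ) x = f x + u * (x : ℝ) := by
    intro u x; simp [φ]
  cases m with
  | true =>
    simp only [E_true]
    obtain ⟨x, hx, hxe⟩ := (isCompact_S a b).exists_sSup_image_eq hne
      (f + s • φ).continuous.continuousOn
    have h1 : f x + t * (x : ℝ) ≤ sSup (⇑(f + t • φ) '' S a b) := by
      have := le_csSup ((isCompact_S a b).bddAbove_image (f + t • φ).continuous.continuousOn)
        (mem_image_of_mem (⇑(f + t • φ)) hx)
      rwa [happ] at this
    have h2 : (t - s) * r ≤ (t - s) * (x : ℝ) :=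
      mul_le_mul_of_nonneg_left (hr x hx) (by linarith)
    rw [hxe, happ]
    nlinarith
  | false =>
    simp only [E_false]
    obtain ⟨x, hx, hxe⟩ := (isCompact_S a b).exists_sInf_image_eq hne
      (f + t • φ).continuous.continuousOn
    have h1 : sInf (⇑(f + s • φ) '' S a b) ≤ f x + s * (x : ℝ) := by
      have := csInf_le ((isCompact_S a b).bddBelow_image (f + s • φ).continuous.continuousOn)
        (mem_image_of_mem (⇑(f + s • φ)) hx)
      rwa [happ] at this
    have h2 : (t - s) * r ≤ (t - s) * (x : ℝ) :=
      mul_le_mul_of_nonneg_left (hr x hx) (by linarith)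
    rw [hxe, happ]
    nlinarith

/-- The basic bad sets. -/
def badSet (q : Bool × Bool × ℚ × ℚ × ℚ × ℚ) : Set G :=
  {f : G | ((S q.2.2.1 q.2.2.2.1).Nonempty ∧ (S q.2.2.2.2.1 q.2.2.2.2.2).Nonempty ∧
      q.2.2.2.1 < q.2.2.2.2.1) ∧
    E q.1 q.2.2.1 q.2.2.2.1 f = E q.2.1 q.2.2.2.2.1 q.2.2.2.2.2 f}

/-- The global bad set. -/
def BSet : Set G := ⋃ q, badSet q

lemma measurableSet_badSet (q) : MeasurableSet[borel G] (badSet q) := by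
  borelize G
  obtain ⟨m₁, m₂, a, b, c, d⟩ := q
  by_cases hc : (S a b).Nonempty ∧ (S c d).Nonempty ∧ b < c
  · have : badSet (m₁, m₂, a, b, c, d) = {f : G | E m₁ a b f = E m₂ c d f} := by
      ext f; simp [badSet, hc]
    rw [this]
    exact (isClosed_eq (continuous_E m₁ a b) (continuous_E m₂ c d)).measurableSet
  · have : badSet (m₁, m₂, a, b, c, d) = ∅ := by
      ext f; simp [badSet, hc]
    rw [this]; exact MeasurableSet.empty

lemma measurableSet_BSet : MeasurableSet[borel G] BSet :=
  MeasurableSet.iUnion fun q => measurableSet_badSet q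

/-- Key: along any line `t ↦ f + t • φ`, each bad set is hit at most once. -/
lemma subsingleton_bad (f : G) (q) : {t : ℝ | f + t • φ ∈ badSet q}.Subsingleton := by
  obtain ⟨m₁, m₂, a, b, c, d⟩ := q
  have key : ∀ s t : ℝ, f + s • φ ∈ badSet (m₁, m₂, a, b, c, d) →
      f + t • φ ∈ badSet (m₁, m₂, a, b, c, d) → s < t → False := by
    intro s t hs ht hlt
    obtain ⟨⟨hne₁, hne₂, hbc⟩, he₁⟩ := hs
    obtain ⟨-, he₂⟩ := ht
    have hr₁ : ∀ x ∈ S a b, (x : ℝ) ≤ (b : ℝ) := fun x hx => hx.2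
    have hr₂ : ∀ x ∈ S c d, (c : ℝ) ≤ (x : ℝ) := fun x hx => hx.1
    have h1 := E_shift_le m₁ a b hne₁ hr₁ f hlt.le
    have h2 := E_shift_ge m₂ c d hne₂ hr₂ f hlt.le
    have hbc' : (b : ℝ) < (c : ℝ) := by exact_mod_cast hbc
    nlinarith [sub_pos.mpr hlt]
  intro t₁ ht₁ t₂ ht₂
  by_contra hne
  exact (Ne.lt_or_gt hne).elim (key t₁ t₂ ht₁ ht₂) (key t₂ t₁ ht₂ ht₁)

/-- Local max gives the sup over a suitable rational interval through `x`. -/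
lemma sSup_eq_of_localMax {f : G} {x : unitInterval} {ε : ℝ} (hε : 0 < ε)
    (hmax : ∀ ⦃x' : unitInterval⦄, dist x' x < ε → f x' ≤ f x)
    {a b : ℚ} (ha₁ : (x : ℝ) - ε < a) (ha₂ : (a : ℝ) ≤ x) (hb₁ : (x : ℝ) ≤ b)
    (hb₂ : (b : ℝ) < (x : ℝ) + ε) :
    (S a b).Nonempty ∧ E true a b f = f x := by
  have hxS : x ∈ S a b := ⟨ha₂, hb₁⟩
  have hsub : ∀ x' ∈ S a b, dist x' x < ε := by
    intro x' hx'
    rw [Subtype.dist_eq, Real.dist_eq, abs_sub_lt_iff]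
    obtain ⟨h1, h2⟩ := hx'
    constructor <;> linarith
  refine ⟨⟨x, hxS⟩, ?_⟩
  simp only [E_true]
  apply le_antisymm
  · apply csSup_le (Set.Nonempty.image _ ⟨x, hxS⟩)
    rintro v ⟨x', hx', rfl⟩
    exact hmax (hsub x' hx')
  · exact le_csSup ((isCompact_S a b).bddAbove_image f.continuous.continuousOn)
      (mem_image_of_mem _ hxS)

lemma sInf_eq_of_localMin {f : G} {x : unitInterval} {ε : ℝ} (hε : 0 < ε)
    (hmin : ∀ ⦃x' : unitInterval⦄, dist x' x < ε → f x ≤ f x')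
    {a b : ℚ} (ha₁ : (x : ℝ) - ε < a) (ha₂ : (a : ℝ) ≤ x) (hb₁ : (x : ℝ) ≤ b)
    (hb₂ : (b : ℝ) < (x : ℝ) + ε) :
    (S a b).Nonempty ∧ E false a b f = f x := by
  have hxS : x ∈ S a b := ⟨ha₂, hb₁⟩
  have hsub : ∀ x' ∈ S a b, dist x' x < ε := by
    intro x' hx'
    rw [Subtype.dist_eq, Real.dist_eq, abs_sub_lt_iff]
    obtain ⟨h1, h2⟩ := hx'
    constructor <;> linarith
  refine ⟨⟨x, hxS⟩, ?_⟩
  simp only [E_false]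
  apply le_antisymm
  · exact csInf_le ((isCompact_S a b).bddBelow_image f.continuous.continuousOn)
      (mem_image_of_mem _ hxS)
  · apply le_csInf (Set.Nonempty.image _ ⟨x, hxS⟩)
    rintro v ⟨x', hx', rfl⟩
    exact hmin (hsub x' hx')

/-- Packaging: from a local extremum and a small enough scale, get a bool and
a rational interval around `x` computing `f x`. -/
lemma exists_interval {f : G} {x : unitInterval} (hx : IsLocalExtr (⇑f) x)
    {δ : ℝ} (hδ : 0 < δ) :
    ∃ (m : Bool) (a b : ℚ), (x : ℝ) - δ < a ∧ (a : ℝ) ≤ x ∧ (x : ℝ) ≤ b ∧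
      (b : ℝ) < (x : ℝ) + δ ∧ (S a b).Nonempty ∧ E m a b f = f x := by
  have hglue : ∀ ε : ℝ, 0 < ε → ∃ ε' : ℝ, 0 < ε' ∧ ε' ≤ ε ∧ ε' ≤ δ :=
    fun ε hε => ⟨min ε δ, lt_min hε hδ, min_le_left _ _, min_le_right _ _⟩
  rcases hx with hmin | hmax
  · obtain ⟨ε, hε, hp⟩ := Metric.eventually_nhds_iff.mp hmin
    obtain ⟨ε', hε', hle, hleδ⟩ := hglue ε hε
    obtain ⟨a, ha₁, ha₂⟩ := exists_rat_btwn (show (x : ℝ) - ε' < x by linarith)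
    obtain ⟨b, hb₁, hb₂⟩ := exists_rat_btwn (show (x : ℝ) < (x : ℝ) + ε' by linarith)
    have hmin' : ∀ ⦃x' : unitInterval⦄, dist x' x < ε' → f x ≤ f x' :=
      fun x' h => hp (lt_of_lt_of_le h hle)
    obtain ⟨h1, h2⟩ := sInf_eq_of_localMin hε' hmin' ha₁ ha₂.le hb₁.le hb₂
    exact ⟨false, a, b, by linarith, ha₂.le, hb₁.le, by linarith, h1, h2⟩
  · obtain ⟨ε, hε, hp⟩ := Metric.eventually_nhds_iff.mp hmax
    obtain ⟨ε', hε', hle, hleδ⟩ := hglue ε hε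
    obtain ⟨a, ha₁, ha₂⟩ := exists_rat_btwn (show (x : ℝ) - ε' < x by linarith)
    obtain ⟨b, hb₁, hb₂⟩ := exists_rat_btwn (show (x : ℝ) < (x : ℝ) + ε' by linarith)
    have hmax' : ∀ ⦃x' : unitInterval⦄, dist x' x < ε' → f x' ≤ f x :=
      fun x' h => hp (lt_of_lt_of_le h hle)
    obtain ⟨h1, h2⟩ := sSup_eq_of_localMax hε' hmax' ha₁ ha₂.le hb₁.le hb₂
    exact ⟨true, a, b, by linarith, ha₂.le, hb₁.le, by linarith, h1, h2⟩

/-- Covering: a function with two distinct local extrema of the same value lies in `BSet`. -/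
lemma mem_BSet {f : G} {x y : unitInterval} (hxy : (x : ℝ) < (y : ℝ))
    (hx : IsLocalExtr (⇑f) x) (hy : IsLocalExtr (⇑f) y) (hfxy : f x = f y) :
    f ∈ BSet := by
  set δ : ℝ := ((y : ℝ) - x) / 2 with hδdef
  have hδ : 0 < δ := by simp only [hδdef]; linarith
  obtain ⟨m₁, a, b, ha₁, ha₂, hb₁, hb₂, hne₁, hE₁⟩ := exists_interval hx hδ
  obtain ⟨m₂, c, d, hc₁, hc₂, hd₁, hd₂, hne₂, hE₂⟩ := exists_interval hy hδ
  have hbc : b < c := by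
    have : (b : ℝ) < (c : ℝ) := by
      have h1 : (b : ℝ) < (x : ℝ) + δ := hb₂
      have h2 : (y : ℝ) - δ < c := hc₁
      have : (x : ℝ) + δ = (y : ℝ) - δ := by simp only [hδdef]; ring
      linarith
    exact_mod_cast this
  refine mem_iUnion.mpr ⟨(m₁, m₂, a, b, c, d), ⟨⟨hne₁, hne₂, hbc⟩, ?_⟩⟩
  simp only []
  rw [hE₁, hE₂, hfxy]

/-- The key null estimate for lines. -/
lemma line_null (f : G) : {t : ℝ | f + t • φ ∈ BSet}.Subsingleton → True := fun _ => trivial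

end InjOnExtrAux

open InjOnExtrAux in
/-- The prevalent `f ∈ C[0,1]` is injective on the set of its local extremum points. -/
theorem injOn_localExtr_prevalent :
    IsPrevalent {f : C(unitInterval, ℝ) |
      Set.InjOn f {x : unitInterval | IsLocalExtr (⇑f) x}} := by
  rw [IsPrevalent, IsShy]
  refine ⟨BSet, measurableSet_BSet, ?_, ?_⟩
  · -- covering
    intro f hf
    simp only [mem_compl_iff, mem_setOf_eq, Set.InjOn] at hf
    push_neg at hf
    obtain ⟨x, hx, y, hy, hfxy, hne⟩ := hf
    have hval : (x : ℝ) ≠ (y : ℝ) := fun h => hne (Subtype.ext h)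
    rcases hval.lt_or_gt with h | h
    · exact mem_BSet h hx hy hfxy
    · exact mem_BSet h hy hx hfxy.symm
  · -- the measure
    borelize G
    have hcont : Continuous (fun t : ℝ => t • φ) := continuous_id.smul continuous_const
    have hmeas : Measurable (fun t : ℝ => t • φ) := hcont.measurable
    set P : Measure ℝ := volume.restrict (Icc (0:ℝ) 1) with hP
    haveI : IsProbabilityMeasure P := by
      constructor
      rw [hP, Measure.restrict_apply_univ, Real.volume_Icc]
      norm_num
    refine ⟨Measure.map (fun t : ℝ => t • φ) P, Measure.isProbabilityMeasure_map hmeas.aemeasurable, ?_⟩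
    intro x
    have himg : (fun b => b + x) '' BSet = (fun b => b - x) ⁻¹' BSet := by
      ext g
      simp only [mem_image, mem_preimage]
      constructor
      · rintro ⟨b, hb, rfl⟩; simpa using hb
      · intro hg; exact ⟨g - x, hg, by abel⟩
    rw [himg]
    have hmeasB : MeasurableSet ((fun b : G => b - x) ⁻¹' BSet) :=
      measurableSet_BSet.preimage (continuous_id.sub continuous_const).measurable
    rw [Measure.map_apply hmeas hmeasB]
    have hset : (fun t : ℝ => t • φ) ⁻¹' ((fun b : G => b - x) ⁻¹' BSet)
        = ⋃ q, {t : ℝ | (-x) + t • φ ∈ badSet q} := by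
      ext t
      simp only [mem_preimage, BSet, mem_iUnion, mem_setOf_eq]
      have : t • φ - x = -x + t • φ := by abel
      rw [this]
    rw [hset]
    refine measure_iUnion_null fun q => ?_
    exact (subsingleton_bad (-x) q).measure_zero P
end
end

section
/- The set of functions f ∈ C[0,1] such that the occupation measure λ_f is absolutely continuous with respect to Lebesgue measure λ is a Borel subset of C[0,1]. -/
open MeasureTheory Set Filter Topology
open scoped ENNReal

noncomputable section

/-- The *occupation measure* `λ_f = λ ∘ f⁻¹` of `f ∈ C[0,1]`: the pushforward under `f` of
Lebesgue measure restricted to `[0,1]` (obtained on `[0,1]` by pulling back along the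
inclusion). -/
def occupationMeasure (f : C(unitInterval, ℝ)) : Measure ℝ :=
  Measure.map (⇑f) (Measure.comap (Subtype.val) (volume : Measure ℝ))

namespace OccAux

/-- finite union of rational open intervals -/
def UU (S : Finset (ℚ × ℚ)) : Set ℝ := ⋃ p ∈ S, Ioo (p.1 : ℝ) (p.2 : ℝ)

lemma isOpen_UU (S : Finset (ℚ × ℚ)) : IsOpen (UU S) :=
  isOpen_biUnion fun _ _ => isOpen_Ioo

/-- the ε-δ style countable condition -/
def P (μ : Measure ℝ) : Prop :=
  ∀ n : ℕ, ∃ m : ℕ, ∀ S : Finset (ℚ × ℚ),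
    volume (UU S) < ((m : ℝ≥0∞) + 1)⁻¹ → μ (UU S) ≤ ((n : ℝ≥0∞) + 1)⁻¹

lemma measure_open_le {μ : Measure ℝ} {V : Set ℝ} (hV : IsOpen V) {c : ℝ≥0∞}
    (h : ∀ S : Finset (ℚ × ℚ), UU S ⊆ V → μ (UU S) ≤ c) : μ V ≤ c := by
  classical
  let e : ℕ → ℚ × ℚ := (Denumerable.eqv (ℚ × ℚ)).symm
  have he : Function.Surjective e := (Denumerable.eqv (ℚ × ℚ)).symm.surjective
  let S : ℕ → Finset (ℚ × ℚ) := fun n =>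
    ((Finset.range (n + 1)).image e).filter (fun p => Ioo (p.1 : ℝ) (p.2 : ℝ) ⊆ V)
  have hsub : ∀ n, UU (S n) ⊆ V := by
    intro n x hx
    rcases mem_iUnion₂.1 hx with ⟨p, hp, hxp⟩
    exact (Finset.mem_filter.1 hp).2 hxp
  have hmono : Monotone fun n => UU (S n) := by
    intro a b hab x hx
    rcases mem_iUnion₂.1 hx with ⟨p, hp, hxp⟩
    rcases Finset.mem_filter.1 hp with ⟨hp1, hp2⟩
    rcases Finset.mem_image.1 hp1 with ⟨k, hk, rfl⟩
    refine mem_iUnion₂.2 ⟨e k, Finset.mem_filter.2 ⟨Finset.mem_image.2 ⟨k, ?_, rfl⟩, hp2⟩, hxp⟩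
    exact Finset.mem_range.2 (lt_of_lt_of_le (Finset.mem_range.1 hk) (by omega))
  have hunion : (⋃ n, UU (S n)) = V := by
    refine subset_antisymm (iUnion_subset hsub) ?_
    intro x hx
    rcases mem_nhds_iff_exists_Ioo_subset.1 (hV.mem_nhds hx) with ⟨a, b, hxab, hab⟩
    rcases exists_rat_btwn hxab.1 with ⟨q, hq1, hq2⟩
    rcases exists_rat_btwn hxab.2 with ⟨r, hr1, hr2⟩
    have hsubV : Ioo ((q : ℝ)) (r : ℝ) ⊆ V :=
      fun y hy => hab ⟨lt_trans hq1 hy.1, lt_trans hy.2 hr2⟩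
    rcases he (q, r) with ⟨k, hk⟩
    refine mem_iUnion.2 ⟨k, mem_iUnion₂.2 ⟨(q, r), ?_, ⟨hq2, hr1⟩⟩⟩
    exact Finset.mem_filter.2 ⟨Finset.mem_image.2 ⟨k, Finset.mem_range.2 (by omega), hk⟩, hsubV⟩
  calc μ V = μ (⋃ n, UU (S n)) := by rw [hunion]
    _ = ⨆ n, μ (UU (S n)) := hmono.measure_iUnion
    _ ≤ c := iSup_le fun n => h _ (hsub n)

lemma ac_of_P (μ : Measure ℝ) (h : P μ) : μ ≪ volume := by
  refine Measure.AbsolutelyContinuous.mk fun s hs hvol => ?_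
  have key : ∀ n : ℕ, μ s ≤ ((n : ℝ≥0∞) + 1)⁻¹ := by
    intro n
    obtain ⟨m, hm⟩ := h n
    have h0 : volume s < ((m : ℝ≥0∞) + 1)⁻¹ := by
      rw [hvol]
      exact ENNReal.inv_pos.2 (by simp)
    obtain ⟨V, hsV, hVopen, hVlt⟩ := Set.exists_isOpen_lt_of_lt s _ h0
    refine le_trans (measure_mono hsV) (measure_open_le hVopen fun T hT => ?_)
    exact hm T (lt_of_le_of_lt (measure_mono hT) hVlt)
  by_contra hne
  obtain ⟨n, hn⟩ := ENNReal.exists_inv_nat_lt hne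
  have : μ s ≤ ((n : ℝ≥0∞))⁻¹ :=
    le_trans (key n) (ENNReal.inv_le_inv.2 (by simp))
  exact absurd (lt_of_le_of_lt this hn) (lt_irrefl _)

lemma P_of_ac (μ : Measure ℝ) [IsFiniteMeasure μ] (h : μ ≪ volume) : P μ := by
  by_contra hP
  unfold P at hP
  push_neg at hP
  obtain ⟨n, hn⟩ := hP
  choose S hS1 hS2 using hn
  set A : ℕ → Set ℝ := fun m => UU (S (2 ^ m - 1)) with hA
  have hAopen : ∀ m, IsOpen (A m) := fun m => isOpen_UU _
  have hAvol : ∀ m, volume (A m) < (2 : ℝ≥0∞)⁻¹ ^ m := by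
    intro m
    have := hS1 (2 ^ m - 1)
    have hcast : ((2 ^ m - 1 : ℕ) : ℝ≥0∞) + 1 = 2 ^ m := by
      have h1 : (2 ^ m - 1) + 1 = 2 ^ m := Nat.sub_add_cancel Nat.one_le_two_pow
      calc ((2 ^ m - 1 : ℕ) : ℝ≥0∞) + 1 = (((2 ^ m - 1) + 1 : ℕ) : ℝ≥0∞) := by push_cast; ring
        _ = ((2 ^ m : ℕ) : ℝ≥0∞) := by rw [h1]
        _ = 2 ^ m := by push_cast; ring
    rw [hcast] at this
    rwa [← ENNReal.inv_pow]
  have hAmu : ∀ m, ((n : ℝ≥0∞) + 1)⁻¹ < μ (A m) := fun m => hS2 (2 ^ m - 1)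
  set L : Set ℝ := ⋂ m, ⋃ k, A (m + k) with hL
  have hvolL : volume L = 0 := by
    have hle : ∀ m : ℕ, volume L ≤ (2 : ℝ≥0∞)⁻¹ ^ m * 2 := by
      intro m
      calc volume L ≤ volume (⋃ k, A (m + k)) := measure_mono (iInter_subset _ m)
        _ ≤ ∑' k, volume (A (m + k)) := measure_iUnion_le _
        _ ≤ ∑' k : ℕ, (2 : ℝ≥0∞)⁻¹ ^ (m + k) := ENNReal.tsum_le_tsum fun k => (hAvol _).le
        _ = (2 : ℝ≥0∞)⁻¹ ^ m * ∑' k : ℕ, (2 : ℝ≥0∞)⁻¹ ^ k := by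
            simp_rw [pow_add]; exact ENNReal.tsum_mul_left
        _ = (2 : ℝ≥0∞)⁻¹ ^ m * 2 := by
            rw [ENNReal.tsum_geometric, ENNReal.one_sub_inv_two, inv_inv]
    have htend : Tendsto (fun m : ℕ => (2 : ℝ≥0∞)⁻¹ ^ m * 2) atTop (𝓝 0) := by
      have h1 : Tendsto (fun m : ℕ => (2 : ℝ≥0∞)⁻¹ ^ m) atTop (𝓝 0) :=
        ENNReal.tendsto_pow_atTop_nhds_zero_of_lt_one
          (ENNReal.inv_lt_one.2 ENNReal.one_lt_two)
      simpa using ENNReal.Tendsto.mul_const h1 (Or.inr ENNReal.ofNat_ne_top)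
    exact le_antisymm (ge_of_tendsto' htend hle) zero_le
  have hmuL : ((n : ℝ≥0∞) + 1)⁻¹ ≤ μ L := by
    have hanti : Antitone fun m => ⋃ k, A (m + k) := by
      intro a b hab x hx
      rcases mem_iUnion.1 hx with ⟨k, hk⟩
      exact mem_iUnion.2 ⟨b - a + k, by rwa [show a + (b - a + k) = b + k by omega]⟩
    have := hanti.measure_iInter (μ := μ)
      (fun m => ((isOpen_iUnion fun k => hAopen (m + k)).measurableSet).nullMeasurableSet)
      ⟨0, measure_ne_top μ _⟩
    rw [hL, this]
    refine le_iInf fun m => le_trans (hAmu m).le (measure_mono ?_)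
    intro x hx
    exact mem_iUnion.2 ⟨0, by simpa using hx⟩
  rw [h hvolL] at hmuL
  simp at hmuL

lemma P_iff_ac (μ : Measure ℝ) [IsFiniteMeasure μ] : μ ≪ volume ↔ P μ :=
  ⟨P_of_ac μ, ac_of_P μ⟩


/-- Lebesgue measure on the unit interval, as a measure on the subtype. -/
def muI : Measure unitInterval := Measure.comap Subtype.val volume

lemma muI_apply (s : Set unitInterval) : muI s = volume (Subtype.val '' s) :=
  (MeasurableEmbedding.subtype_coe measurableSet_Icc).comap_apply volume s

instance : IsFiniteMeasure muI := by
  constructor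
  rw [muI_apply, image_univ, Subtype.range_coe]
  simp [Real.volume_Icc]

lemma occ_apply (f : C(unitInterval, ℝ)) {A : Set ℝ} (hA : MeasurableSet A) :
    occupationMeasure f A = muI (⇑f ⁻¹' A) :=
  Measure.map_apply f.continuous.measurable hA

instance (f : C(unitInterval, ℝ)) : IsFiniteMeasure (occupationMeasure f) := by
  constructor
  rw [show occupationMeasure f = Measure.map (⇑f) muI from rfl,
    Measure.map_apply f.continuous.measurable MeasurableSet.univ]
  exact measure_lt_top muI _

lemma lsc {U : Set ℝ} (hU : IsOpen U) :
    LowerSemicontinuous fun f : C(unitInterval, ℝ) => muI (⇑f ⁻¹' U) := by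
  intro f c hc
  have hopen : IsOpen ((⇑f) ⁻¹' U) := hU.preimage f.continuous
  obtain ⟨K, hKsub, hKclosed, hKlt⟩ := hopen.exists_lt_isClosed hc
  have hKcomp : IsCompact K := hKclosed.isCompact
  have himage : IsCompact (⇑f '' K) := hKcomp.image f.continuous
  have hsubU : ⇑f '' K ⊆ U := image_subset_iff.2 hKsub
  obtain ⟨δ, hδ, hth⟩ := himage.exists_thickening_subset_open hU hsubU
  have hball : ∀ᶠ g : C(unitInterval, ℝ) in 𝓝 f, dist g f < δ := by
    have := Metric.ball_mem_nhds f hδ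
    filter_upwards [this] with g hg using hg
  filter_upwards [hball] with g hg
  have hKg : K ⊆ ⇑g ⁻¹' U := by
    intro t ht
    apply hth
    refine Metric.mem_thickening_iff.2 ⟨f t, ⟨t, ht, rfl⟩, ?_⟩
    exact lt_of_le_of_lt (ContinuousMap.dist_apply_le_dist t) hg
  exact lt_of_lt_of_le hKlt (measure_mono hKg)

end OccAux

/-- The set of `f ∈ C[0,1]` whose occupation measure is absolutely continuous with respect
to Lebesgue measure is a Borel subset of `C[0,1]`. -/
theorem absolutelyContinuous_occupation_borel :
    MeasurableSet[borel C(unitInterval, ℝ)]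
      {f : C(unitInterval, ℝ) | occupationMeasure f ≪ (volume : Measure ℝ)} := by
  letI : MeasurableSpace C(unitInterval, ℝ) := borel C(unitInterval, ℝ)
  haveI : BorelSpace C(unitInterval, ℝ) := ⟨rfl⟩
  show MeasurableSet {f : C(unitInterval, ℝ) | occupationMeasure f ≪ (volume : Measure ℝ)}
  have hmeas : ∀ S : Finset (ℚ × ℚ),
      Measurable fun f : C(unitInterval, ℝ) => OccAux.muI (⇑f ⁻¹' OccAux.UU S) :=
    fun S => (OccAux.lsc (OccAux.isOpen_UU S)).measurable
  have hset : {f : C(unitInterval, ℝ) | occupationMeasure f ≪ (volume : Measure ℝ)} =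
      ⋂ n : ℕ, ⋃ m : ℕ, ⋂ S : Finset (ℚ × ℚ),
        ⋂ (_ : volume (OccAux.UU S) < ((m : ℝ≥0∞) + 1)⁻¹),
          {f : C(unitInterval, ℝ) | OccAux.muI (⇑f ⁻¹' OccAux.UU S) ≤ ((n : ℝ≥0∞) + 1)⁻¹} := by
    ext f
    simp only [mem_setOf_eq, mem_iInter, mem_iUnion]
    rw [OccAux.P_iff_ac (occupationMeasure f)]
    unfold OccAux.P
    constructor
    · intro h n
      obtain ⟨m, hm⟩ := h n
      exact ⟨m, fun S hS => by
        rw [← OccAux.occ_apply f (OccAux.isOpen_UU S).measurableSet]; exact hm S hS⟩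
    · intro h n
      obtain ⟨m, hm⟩ := h n
      exact ⟨m, fun S hS => by
        rw [OccAux.occ_apply f (OccAux.isOpen_UU S).measurableSet]; exact hm S hS⟩
  rw [hset]
  exact MeasurableSet.iInter fun n => MeasurableSet.iUnion fun m =>
    MeasurableSet.iInter fun S => MeasurableSet.iInter fun _ =>
      hmeas S measurableSet_Iic
end
end

section
/- For the prevalent f ∈ C[0,1], the set of y ∈ f([0,1]) for which f⁻¹(y) is a perfect subset of [0,1] is comeager in the compact space f([0,1]). -/
open MeasureTheory Set Filter Topology

noncomputable section

noncomputable section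
namespace PLSAux
open Real

/-- `x` is the unique point of `[a,b]` where `H` takes value `y`, and `H` crosses `y`
increasingly at `x`. -/
def Good (H : ℝ → ℝ) (a b y x : ℝ) : Prop :=
  x ∈ Icc a b ∧ H x = y ∧ (∀ z ∈ Icc a b, H z = y → z = x) ∧
    (∀ t ∈ Icc a b, t < x → H t < y) ∧ (∀ t ∈ Icc a b, x < t → y < H t)

lemma step4 {H : ℝ → ℝ} (hH : Continuous H) {a b u v y₁ y₂ x₁ x₂ : ℝ}
    (hD : ∀ u' v', u ≤ u' → u' < v' → v' ≤ v → ∃ y x, u' < y ∧ y < v' ∧ Good H a b y x)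
    (h1 : Good H a b y₁ x₁) (h2 : Good H a b y₂ x₂) (h12 : y₁ < y₂)
    (hu : u < y₁) (hv : y₂ < v)
    {t : ℝ} (ht : t ∈ Icc x₁ x₂) : y₁ ≤ H t ∧ H t ≤ y₂ := by
  obtain ⟨hx₁I, hHx₁, huniq₁, hlow₁, hhigh₁⟩ := h1
  obtain ⟨hx₂I, hHx₂, huniq₂, hlow₂, hhigh₂⟩ := h2
  have htab : t ∈ Icc a b := ⟨hx₁I.1.trans ht.1, ht.2.trans hx₂I.2⟩
  constructor
  · by_contra hlt
    push_neg at hlt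
    -- H t < y₁
    obtain ⟨w, xw, hw1, hw2, hGw⟩ := hD (max (H t) u) y₁ (le_max_right _ _)
      (max_lt hlt hu) (le_of_lt (h12.trans hv))
    have hwHt : H t < w := lt_of_le_of_lt (le_max_left _ _) hw1
    -- z on [x₁,t] with H z = w  (H x₁ = y₁ > w ≥ ..., H t < w)
    obtain ⟨z, hzI, hzw⟩ := intermediate_value_Icc' ht.1 hH.continuousOn
      (by rw [hHx₁]; exact ⟨le_of_lt hwHt, le_of_lt hw2⟩)
    -- z' on [t,x₂] with H z' = w  (H t < w < y₁ < y₂ = H x₂)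
    obtain ⟨z', hz'I, hz'w⟩ := intermediate_value_Icc ht.2 hH.continuousOn
      (by rw [hHx₂]; exact ⟨le_of_lt hwHt, le_of_lt (hw2.trans h12)⟩)
    have hzab : z ∈ Icc a b := ⟨hx₁I.1.trans hzI.1, (hzI.2.trans ht.2).trans hx₂I.2⟩
    have hz'ab : z' ∈ Icc a b := ⟨hx₁I.1.trans (ht.1.trans hz'I.1), hz'I.2.trans hx₂I.2⟩
    have e1 : z = xw := hGw.2.2.1 z hzab hzw
    have e2 : z' = xw := hGw.2.2.1 z' hz'ab hz'w
    have hzt : z ≠ t := fun h => by rw [h] at hzw; rw [hzw] at hwHt; exact lt_irrefl _ hwHt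
    have hz't : z' ≠ t := fun h => by rw [h] at hz'w; rw [hz'w] at hwHt; exact lt_irrefl _ hwHt
    have h5 : z < t := lt_of_le_of_ne hzI.2 hzt
    have h6 : t < z' := lt_of_le_of_ne hz'I.1 (Ne.symm hz't)
    rw [e1] at h5; rw [e2] at h6
    linarith
  · by_contra hlt
    push_neg at hlt
    -- y₂ < H t
    obtain ⟨w, xw, hw1, hw2, hGw⟩ := hD y₂ (min (H t) v) (le_of_lt (hu.trans h12))
      (lt_min hlt hv) (min_le_right _ _)
    have hwHt : w < H t := lt_of_lt_of_le hw2 (min_le_left _ _)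
    obtain ⟨z, hzI, hzw⟩ := intermediate_value_Icc ht.1 hH.continuousOn
      (by rw [hHx₁]; exact ⟨le_of_lt (h12.trans hw1), le_of_lt hwHt⟩)
    obtain ⟨z', hz'I, hz'w⟩ := intermediate_value_Icc' ht.2 hH.continuousOn
      (by rw [hHx₂]; exact ⟨le_of_lt hw1, le_of_lt hwHt⟩)
    have hzab : z ∈ Icc a b := ⟨hx₁I.1.trans hzI.1, (hzI.2.trans ht.2).trans hx₂I.2⟩
    have hz'ab : z' ∈ Icc a b := ⟨hx₁I.1.trans (ht.1.trans hz'I.1), hz'I.2.trans hx₂I.2⟩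
    have e1 : z = xw := hGw.2.2.1 z hzab hzw
    have e2 : z' = xw := hGw.2.2.1 z' hz'ab hz'w
    have hzt : z ≠ t := fun h => by rw [h] at hzw; rw [hzw] at hwHt; exact lt_irrefl _ hwHt
    have hz't : z' ≠ t := fun h => by rw [h] at hz'w; rw [hz'w] at hwHt; exact lt_irrefl _ hwHt
    have h5 : z < t := lt_of_le_of_ne hzI.2 hzt
    have h6 : t < z' := lt_of_le_of_ne hz'I.1 (Ne.symm hz't)
    rw [e1] at h5; rw [e2] at h6
    linarith

lemma key {H : ℝ → ℝ} (hH : Continuous H) {a b u v : ℝ} (huv : u < v)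
    (hD : ∀ u' v', u ≤ u' → u' < v' → v' ≤ v → ∃ y x, u' < y ∧ y < v' ∧ Good H a b y x) :
    ∃ a' b', a ≤ a' ∧ a' < b' ∧ b' ≤ b ∧ MonotoneOn H (Icc a' b') := by
  obtain ⟨y₁, x₁, hy₁u, hy₁v, hG1⟩ := hD u v le_rfl huv le_rfl
  obtain ⟨y₂, x₂, hy₂l, hy₂v, hG2⟩ := hD y₁ v (le_of_lt hy₁u) hy₁v le_rfl
  have hx12 : x₁ < x₂ := by
    rcases lt_trichotomy x₁ x₂ with h | h | h
    · exact h
    · exfalso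
      rw [h] at hG1
      have e1 : H x₂ = y₁ := hG1.2.1
      have e2 : H x₂ = y₂ := hG2.2.1
      rw [e1] at e2; exact absurd e2 (ne_of_lt hy₂l)
    · exfalso
      have := hG2.2.2.2.2 x₁ hG1.1 h  -- y₂ < H x₁ = y₁
      rw [hG1.2.1] at this; linarith
  refine ⟨x₁, x₂, hG1.1.1, hx12, hG2.1.2, ?_⟩
  intro s hs t ht hst
  rcases eq_or_lt_of_le hst with rfl | hst'
  · exact le_rfl
  by_contra hgt
  push_neg at hgt  -- H t < H s
  have hsab : s ∈ Icc a b := ⟨hG1.1.1.trans hs.1, hs.2.trans hG2.1.2⟩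
  have htab : t ∈ Icc a b := ⟨hG1.1.1.trans ht.1, ht.2.trans hG2.1.2⟩
  have hs4 := step4 hH hD hG1 hG2 hy₂l hy₁u hy₂v hs
  have ht4 := step4 hH hD hG1 hG2 hy₂l hy₁u hy₂v ht
  obtain ⟨w, xw, hw1, hw2, hGw⟩ := hD (H t) (H s)
    (le_of_lt (lt_of_lt_of_le hy₁u ht4.1)) hgt (le_of_lt (lt_of_le_of_lt hs4.2 hy₂v))
  rcases lt_or_ge xw t with hxt | htx
  · exact absurd (hGw.2.2.2.2 t htab hxt) (by linarith)
  · have hsxw : s < xw := lt_of_lt_of_le hst' htx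
    exact absurd (hGw.2.2.2.1 s hsab hsxw) (by linarith)

lemma orientation {H : ℝ → ℝ} (hH : Continuous H) {a b y x : ℝ}
    (hset : {z | z ∈ Icc a b ∧ H z = y} = {x})
    (hbelow : ∃ s ∈ Icc a b, H s < y) (habove : ∃ s ∈ Icc a b, y < H s) :
    Good H a b y x ∨ Good (fun t => -H t) a b (-y) x := by
  have hxmem : x ∈ Icc a b ∧ H x = y := by
    have : x ∈ {z | z ∈ Icc a b ∧ H z = y} := by rw [hset]; exact rfl
    exact this
  have huniq : ∀ z ∈ Icc a b, H z = y → z = x := by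
    intro z hz hzy
    have : z ∈ {z | z ∈ Icc a b ∧ H z = y} := ⟨hz, hzy⟩
    rwa [hset] at this
  have hne : ∀ t ∈ Icc a b, t ≠ x → H t ≠ y := fun t ht htx hty => htx (huniq t ht hty)
  -- left side constancy
  have LC : (∀ t ∈ Icc a b, t < x → H t < y) ∨ (∀ t ∈ Icc a b, t < x → y < H t) := by
    by_contra hc
    push_neg at hc
    obtain ⟨⟨t₁, ht₁I, ht₁x, h₁⟩, ⟨t₂, ht₂I, ht₂x, h₂⟩⟩ := hc
    have h₁' : y < H t₁ := lt_of_le_of_ne h₁ (Ne.symm (hne t₁ ht₁I (ne_of_lt ht₁x)))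
    have h₂' : H t₂ < y := lt_of_le_of_ne h₂ (hne t₂ ht₂I (ne_of_lt ht₂x))
    rcases le_total t₁ t₂ with h12 | h12
    · obtain ⟨z, hzI, hzy⟩ := intermediate_value_Icc' h12 hH.continuousOn
        ⟨le_of_lt h₂', le_of_lt h₁'⟩
      have hzab : z ∈ Icc a b := ⟨ht₁I.1.trans hzI.1, hzI.2.trans ht₂I.2⟩
      exact absurd (huniq z hzab hzy) (ne_of_lt (lt_of_le_of_lt hzI.2 ht₂x))
    · obtain ⟨z, hzI, hzy⟩ := intermediate_value_Icc h12 hH.continuousOn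
        ⟨le_of_lt h₂', le_of_lt h₁'⟩
      have hzab : z ∈ Icc a b := ⟨ht₂I.1.trans hzI.1, hzI.2.trans ht₁I.2⟩
      exact absurd (huniq z hzab hzy) (ne_of_lt (lt_of_le_of_lt hzI.2 ht₁x))
  have RC : (∀ t ∈ Icc a b, x < t → y < H t) ∨ (∀ t ∈ Icc a b, x < t → H t < y) := by
    by_contra hc
    push_neg at hc
    obtain ⟨⟨t₁, ht₁I, ht₁x, h₁⟩, ⟨t₂, ht₂I, ht₂x, h₂⟩⟩ := hc
    have h₁' : H t₁ < y := lt_of_le_of_ne h₁ (hne t₁ ht₁I (Ne.symm (ne_of_lt ht₁x)))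
    have h₂' : y < H t₂ := lt_of_le_of_ne h₂ (Ne.symm (hne t₂ ht₂I (Ne.symm (ne_of_lt ht₂x))))
    rcases le_total t₁ t₂ with h12 | h12
    · obtain ⟨z, hzI, hzy⟩ := intermediate_value_Icc h12 hH.continuousOn
        ⟨le_of_lt h₁', le_of_lt h₂'⟩
      have hzab : z ∈ Icc a b := ⟨ht₁I.1.trans hzI.1, hzI.2.trans ht₂I.2⟩
      exact absurd (huniq z hzab hzy) (Ne.symm (ne_of_lt (lt_of_lt_of_le ht₁x hzI.1)))
    · obtain ⟨z, hzI, hzy⟩ := intermediate_value_Icc' h12 hH.continuousOn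
        ⟨le_of_lt h₁', le_of_lt h₂'⟩
      have hzab : z ∈ Icc a b := ⟨ht₂I.1.trans hzI.1, hzI.2.trans ht₁I.2⟩
      exact absurd (huniq z hzab hzy) (Ne.symm (ne_of_lt (lt_of_lt_of_le ht₂x hzI.1)))
  rcases LC with hL | hL
  · rcases RC with hR | hR
    · exact Or.inl ⟨hxmem.1, hxmem.2, huniq, hL, hR⟩
    · -- all values (except x) below y: contradicts habove
      exfalso
      obtain ⟨s, hsI, hs⟩ := habove
      rcases lt_trichotomy s x with h | h | h
      · exact absurd (hL s hsI h) (by linarith)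
      · rw [h, hxmem.2] at hs; exact lt_irrefl _ hs
      · exact absurd (hR s hsI h) (by linarith)
  · rcases RC with hR | hR
    · exfalso
      obtain ⟨s, hsI, hs⟩ := hbelow
      rcases lt_trichotomy s x with h | h | h
      · exact absurd (hL s hsI h) (by linarith)
      · rw [h, hxmem.2] at hs; exact lt_irrefl _ hs
      · exact absurd (hR s hsI h) (by linarith)
    · refine Or.inr ⟨hxmem.1, by show -H x = -y; rw [hxmem.2], ?_, ?_, ?_⟩
      · intro z hz hzy
        exact huniq z hz (by have := neg_injective hzy; simpa using this)
      · intro t ht htx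
        simpa using neg_lt_neg (hL t ht htx)
      · intro t ht hxt
        simpa using neg_lt_neg (hR t ht hxt)


lemma antitoneOn_of_neg {H : ℝ → ℝ} {s : Set ℝ}
    (h : MonotoneOn (fun t => -H t) s) : AntitoneOn H s := by
  intro x hx y hy hxy
  have := h hx hy hxy
  simpa using this

lemma core {H : ℝ → ℝ} (hH : Continuous H) {a b : ℝ} (hab : a < b)
    (hNM : ∀ a' b', a ≤ a' → a' < b' → b' ≤ b →
      ¬ MonotoneOn H (Icc a' b') ∧ ¬ AntitoneOn H (Icc a' b')) :
    IsNowhereDense {y : ℝ | ∃ x, {z | z ∈ Icc a b ∧ H z = y} = {x}} := by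
  set T := {y : ℝ | ∃ x, {z | z ∈ Icc a b ∧ H z = y} = {x}} with hT
  rw [IsNowhereDense]
  by_contra hne
  obtain ⟨y₀, hy₀⟩ := Set.nonempty_iff_ne_empty.mpr hne
  rw [mem_interior_iff_mem_nhds, Metric.mem_nhds_iff] at hy₀
  obtain ⟨δ, hδ, hsub⟩ := hy₀
  set p := y₀ - δ/2 with hp'
  set q := y₀ + δ/2 with hq'
  have hpq : p < q := by simp only [hp', hq']; linarith
  have densT : ∀ u v, p ≤ u → u < v → v ≤ q → ∃ y, y ∈ T ∧ u < y ∧ y < v := by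
    intro u v h1 h2 h3
    have hmid : (u+v)/2 ∈ closure T := by
      apply hsub
      rw [Metric.mem_ball, Real.dist_eq, abs_lt]
      constructor
      · simp only [hp'] at h1; linarith
      · simp only [hq'] at h3; linarith
    obtain ⟨y, hyO, hyT⟩ := _root_.mem_closure_iff.mp hmid (Ioo u v) isOpen_Ioo
      (⟨by linarith, by linarith⟩ : (u+v)/2 ∈ Ioo u v)
    exact ⟨y, hyT, hyO.1, hyO.2⟩
  -- min and max of H on [a,b]
  obtain ⟨sm, hsmI, hsmmin⟩ := isCompact_Icc.exists_isMinOn (nonempty_Icc.mpr (le_of_lt hab))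
    hH.continuousOn
  obtain ⟨sM, hsMI, hsMmax⟩ := isCompact_Icc.exists_isMaxOn (nonempty_Icc.mpr (le_of_lt hab))
    hH.continuousOn
  have memT_val : ∀ y ∈ T, H sm ≤ y ∧ y ≤ H sM := by
    intro y hy
    obtain ⟨x, hx⟩ := hy
    have hxm : x ∈ Icc a b ∧ H x = y := by
      have : x ∈ {z | z ∈ Icc a b ∧ H z = y} := by rw [hx]; exact rfl
      exact this
    exact ⟨hxm.2 ▸ hsmmin hxm.1, hxm.2 ▸ hsMmax hxm.1⟩
  have hq : q ≤ H sM := by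
    by_contra hc
    push_neg at hc
    obtain ⟨y, hyT, hy1, hy2⟩ := densT (max p (H sM)) q (le_max_left _ _)
      (max_lt hpq hc) le_rfl
    exact absurd ((memT_val y hyT).2) (not_le.mpr (lt_of_le_of_lt (le_max_right _ _) hy1))
  have hp : H sm ≤ p := by
    by_contra hc
    push_neg at hc
    obtain ⟨y, hyT, hy1, hy2⟩ := densT p (min q (H sm)) le_rfl
      (lt_min hpq hc) (min_le_left _ _)
    exact absurd ((memT_val y hyT).1) (not_le.mpr (lt_of_lt_of_le hy2 (min_le_right _ _)))
  set p₁ := p + (q-p)/3 with hp₁'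
  set q₁ := q - (q-p)/3 with hq₁'
  have hpp₁ : p < p₁ := by simp only [hp₁']; linarith
  have hq₁q : q₁ < q := by simp only [hq₁']; linarith
  have hp₁q₁ : p₁ < q₁ := by simp only [hp₁', hq₁']; linarith
  by_cases hplus : ∀ u v, p₁ ≤ u → u < v → v ≤ q₁ → ∃ y x, u < y ∧ y < v ∧ Good H a b y x
  · obtain ⟨a', b', h1, h2, h3, hmono⟩ := key hH hp₁q₁ hplus
    exact absurd hmono (hNM a' b' h1 h2 h3).1
  · push_neg at hplus
    obtain ⟨u, v, hu, huv, hv, hfail⟩ := hplus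
    have hD' : ∀ u' v', -v ≤ u' → u' < v' → v' ≤ -u →
        ∃ y x, u' < y ∧ y < v' ∧ Good (fun t => -H t) a b y x := by
      intro u' v' h1 h2 h3
      have huv' : u ≤ -v' := by linarith
      have hvu' : -u' ≤ v := by linarith
      obtain ⟨y, hyT, hy1, hy2⟩ := densT (-v') (-u')
        (by linarith) (by linarith) (by linarith)
      obtain ⟨x, hx⟩ := hyT
      have hbel : ∃ s ∈ Icc a b, H s < y := ⟨sm, hsmI, by linarith⟩
      have habo : ∃ s ∈ Icc a b, y < H s := ⟨sM, hsMI, by linarith⟩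
      rcases orientation hH hx hbel habo with hG | hG
      · exfalso
        exact hfail y x (by linarith) (by linarith) hG
      · exact ⟨-y, x, by linarith, by linarith, hG⟩
    obtain ⟨a', b', h1, h2, h3, hmono⟩ := key (hH.neg) (neg_lt_neg huv) hD'
    exact absurd (antitoneOn_of_neg hmono) (hNM a' b' h1 h2 h3).2
open Real Finset

def bfreq (n : ℕ) : ℝ := 4 ^ (n * n + 5 * n)

lemma bfreq_pos (n : ℕ) : 0 < bfreq n := by unfold bfreq; positivity

lemma one_le_bfreq (n : ℕ) : 1 ≤ bfreq n := one_le_pow₀ (by norm_num)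

lemma bfreq_mono : Monotone bfreq := fun m n h =>
  pow_le_pow_right₀ (by norm_num) (by nlinarith)

def gterm (n : ℕ) (t : ℝ) : ℝ := (1/4 : ℝ)^n * Real.cos (π * bfreq n * t)

lemma abs_cos_le_one' (x : ℝ) : |Real.cos x| ≤ 1 :=
  abs_le.mpr ⟨Real.neg_one_le_cos x, Real.cos_le_one x⟩

lemma abs_sin_le_one' (x : ℝ) : |Real.sin x| ≤ 1 :=
  abs_le.mpr ⟨Real.neg_one_le_sin x, Real.sin_le_one x⟩

lemma abs_gterm_le (n : ℕ) (t : ℝ) : |gterm n t| ≤ (1/4:ℝ)^n := by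
  rw [gterm, abs_mul, abs_of_nonneg (by positivity : (0:ℝ) ≤ (1/4:ℝ)^n)]
  nlinarith [abs_cos_le_one' (π * bfreq n * t), pow_nonneg (by norm_num : (0:ℝ) ≤ 1/4) n,
    abs_nonneg (Real.cos (π * bfreq n * t))]

lemma summable_quarter : Summable (fun n : ℕ => (1/4:ℝ)^n) :=
  summable_geometric_of_lt_one (by norm_num) (by norm_num)

lemma summable_gterm (t : ℝ) : Summable (fun n => gterm n t) :=
  Summable.of_abs (summable_quarter.of_nonneg_of_le (fun n => abs_nonneg _)
    (fun n => abs_gterm_le n t))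

def gfun (t : ℝ) : ℝ := ∑' n, gterm n t

lemma gfun_cont : Continuous gfun := by
  apply continuous_tsum (u := fun n : ℕ => (1/4:ℝ)^n)
  · intro i
    exact continuous_const.mul (Real.continuous_cos.comp (continuous_const.mul continuous_id))
  · exact summable_quarter
  · intro n x
    simpa [Real.norm_eq_abs] using abs_gterm_le n x

lemma cos_diff_le (x y : ℝ) : |Real.cos x - Real.cos y| ≤ |x - y| := by
  rw [Real.cos_sub_cos]
  rw [abs_mul, abs_mul]
  have h1 : |Real.sin ((x+y)/2)| ≤ 1 := abs_sin_le_one' _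
  have h2 : |Real.sin ((x-y)/2)| ≤ |(x-y)/2| := Real.abs_sin_le_abs
  have h3 : |(-2 : ℝ)| = 2 := by norm_num
  have h4 : |(x-y)/2| = |x-y|/2 := by rw [abs_div]; norm_num
  rw [h3]
  calc 2 * |Real.sin ((x + y) / 2)| * |Real.sin ((x - y) / 2)|
      ≤ 2 * 1 * (|x-y|/2) := by
        apply mul_le_mul _ (h4 ▸ h2) (abs_nonneg _) (by norm_num)
        nlinarith [abs_nonneg (Real.sin ((x+y)/2))]
    _ = |x - y| := by ring

lemma cos_nat_pi (m : ℕ) : Real.cos (π * m) = (-1:ℝ)^m := by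
  induction m with
  | zero => simp
  | succ k ih =>
    push_cast
    rw [mul_add, mul_one, Real.cos_add]
    simp [ih, pow_succ]

lemma tail_bound (N : ℕ) (t : ℝ) : |∑' n, gterm (n + N) t| ≤ (1/4:ℝ)^N * (4/3) := by
  have hsq : Summable (fun n : ℕ => (1/4:ℝ)^(n+N)) := by
    simpa [pow_add] using summable_quarter.mul_right ((1/4:ℝ)^N)
  have hs : Summable (fun n => |gterm (n + N) t|) :=
    hsq.of_nonneg_of_le (fun n => abs_nonneg _) (fun n => abs_gterm_le (n+N) t)
  calc |∑' n, gterm (n + N) t| ≤ ∑' n, |gterm (n + N) t| := by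
        simpa [Real.norm_eq_abs] using norm_tsum_le_tsum_norm (f := fun n => gterm (n + N) t)
          (by simpa [Real.norm_eq_abs] using hs)
    _ ≤ ∑' n : ℕ, (1/4:ℝ)^(n+N) := Summable.tsum_le_tsum (fun n => abs_gterm_le (n+N) t) hs hsq
    _ = (1/4:ℝ)^N * (4/3) := by
        have h : ∀ n : ℕ, (1/4:ℝ)^(n+N) = (1/4:ℝ)^n * (1/4:ℝ)^N := fun n => pow_add _ _ _
        rw [tsum_congr h, tsum_mul_right, tsum_geometric_of_lt_one (by norm_num) (by norm_num)]
        ring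

lemma gfun_eq (N : ℕ) (t : ℝ) :
    gfun t = (∑ n ∈ Finset.range N, gterm n t) + ∑' n, gterm (n + N) t :=
  (Summable.sum_add_tsum_nat_add N (summable_gterm t)).symm

lemma nat_succ_le_four_pow (N : ℕ) : (N:ℝ) + 1 ≤ 4 ^ N := by
  induction N with
  | zero => norm_num
  | succ k ih =>
    have h1 : (1:ℝ) ≤ 4^k := one_le_pow₀ (by norm_num)
    push_cast
    rw [pow_succ]
    nlinarith

lemma key_ineq (N : ℕ) :
    ((N:ℝ)+1) * (π * bfreq N / bfreq (N+1)) ≤ (1/3) * (1/4:ℝ)^(N+1) := by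
  have hb1 : bfreq (N+1) = bfreq N * 4^(2*N+6) := by
    rw [bfreq, bfreq, ← pow_add]
    congr 1
    ring
  have hπ : π ≤ 4 := by nlinarith [Real.pi_le_four]
  have hN : (N:ℝ) + 1 ≤ 4^N := nat_succ_le_four_pow N
  have hbpos := bfreq_pos N
  have hbpos1 := bfreq_pos (N+1)
  have hstep : ((N:ℝ)+1) * (π * bfreq N / bfreq (N+1)) =
      (((N:ℝ)+1) * π * bfreq N) / bfreq (N+1) := by ring
  rw [hstep, div_le_iff₀ hbpos1, hb1]
  have he : (1/3) * (1/4:ℝ)^(N+1) * (bfreq N * 4^(2*N+6)) =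
      (1/3) * (bfreq N * ((4:ℝ)^(N+5))) := by
    have h14 : (1/4:ℝ)^(N+1) = ((4:ℝ)^(N+1))⁻¹ := by rw [one_div, inv_pow]
    have h26 : (4:ℝ)^(2*N+6) = (4:ℝ)^(N+1) * (4:ℝ)^(N+5) := by
      rw [← pow_add]; congr 1; ring
    rw [h14, h26]
    have : ((4:ℝ)^(N+1)) ≠ 0 := by positivity
    field_simp
  rw [he]
  have h45 : (4:ℝ)^(N+5) = 4^N * 1024 := by
    rw [pow_add]; norm_num
  rw [h45]
  have hq : ((N:ℝ)+1)*π ≤ 4^N*4 := by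
    calc ((N:ℝ)+1)*π ≤ ((N:ℝ)+1)*4 := by nlinarith [Real.pi_pos]
      _ ≤ 4^N*4 := by nlinarith
  calc ((N:ℝ)+1) * π * bfreq N ≤ (4^N*4) * bfreq N :=
        mul_le_mul_of_nonneg_right hq hbpos.le
    _ ≤ 1/3 * (bfreq N * (4^N*1024)) := by
        nlinarith [mul_nonneg (pow_nonneg (by norm_num : (0:ℝ) ≤ 4) N) hbpos.le]

lemma inc (N m : ℕ) :
    (1/4:ℝ)^(N+1) ≤ |gfun (((m:ℝ)+1)/bfreq (N+1)) - gfun ((m:ℝ)/bfreq (N+1))| := by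
  set M := N + 1 with hM
  set b := bfreq M with hb
  have hbpos : 0 < b := bfreq_pos M
  set t₁ : ℝ := (m:ℝ)/b with ht₁
  set t₂ : ℝ := ((m:ℝ)+1)/b with ht₂
  set S : ℝ → ℝ := fun t => ∑ n ∈ Finset.range M, gterm n t with hS
  set R : ℝ → ℝ := fun t => ∑' n, gterm (n + (M+1)) t with hR
  have hsplit : ∀ t, gfun t = S t + gterm M t + R t := by
    intro t
    rw [gfun_eq (M+1) t, Finset.sum_range_succ]
  have hcosval : ∀ j : ℕ, gterm M ((j:ℝ)/b) = (1/4:ℝ)^M * (-1:ℝ)^j := by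
    intro j
    rw [gterm]
    congr 1
    have harg : π * bfreq M * ((j:ℝ)/b) = π * j := by
      rw [← hb]
      field_simp
    rw [harg, cos_nat_pi]
  have hcenter : |gterm M t₂ - gterm M t₁| = 2 * (1/4:ℝ)^M := by
    have ht₂' : t₂ = ((m+1:ℕ):ℝ)/b := by rw [ht₂]; push_cast; ring_nf
    have h2 : gterm M t₂ = (1/4:ℝ)^M * (-1:ℝ)^(m+1) := by rw [ht₂']; exact hcosval (m+1)
    have h1 : gterm M t₁ = (1/4:ℝ)^M * (-1:ℝ)^m := hcosval m
    have hd : gterm M t₂ - gterm M t₁ = (-2) * ((1/4:ℝ)^M * (-1:ℝ)^m) := by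
      rw [h1, h2, pow_succ]; ring
    rw [hd, abs_mul, abs_mul, abs_pow, abs_pow]
    norm_num
  have hlow : |S t₂ - S t₁| ≤ (1/3) * (1/4:ℝ)^M := by
    have hdiff : S t₂ - S t₁ = ∑ n ∈ Finset.range M, (gterm n t₂ - gterm n t₁) := by
      rw [hS, Finset.sum_sub_distrib]
    rw [hdiff]
    calc |∑ n ∈ Finset.range M, (gterm n t₂ - gterm n t₁)|
        ≤ ∑ n ∈ Finset.range M, |gterm n t₂ - gterm n t₁| :=
          Finset.abs_sum_le_sum_abs _ _
      _ ≤ ∑ _n ∈ Finset.range M, (π * bfreq N / b) := by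
          apply Finset.sum_le_sum
          intro n hn
          have hnN : n ≤ N := by
            have := Finset.mem_range.mp hn
            omega
          have h1 : gterm n t₂ - gterm n t₁
              = (1/4:ℝ)^n * (Real.cos (π * bfreq n * t₂) - Real.cos (π * bfreq n * t₁)) := by
            rw [gterm, gterm]; ring
          rw [h1, abs_mul, abs_of_nonneg (by positivity : (0:ℝ) ≤ (1/4:ℝ)^n)]
          have h2 : |Real.cos (π * bfreq n * t₂) - Real.cos (π * bfreq n * t₁)|
              ≤ π * bfreq n / b := by
            have hcd := cos_diff_le (π * bfreq n * t₂) (π * bfreq n * t₁)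
            have harg : π * bfreq n * t₂ - π * bfreq n * t₁ = π * bfreq n / b := by
              rw [ht₁, ht₂]
              field_simp
              ring
            rw [harg] at hcd
            rwa [abs_of_nonneg (le_of_lt (div_pos (mul_pos Real.pi_pos (bfreq_pos n)) hbpos))]
              at hcd
          have h3 : (1/4:ℝ)^n ≤ 1 := pow_le_one₀ (by norm_num) (by norm_num)
          have h4 : π * bfreq n / b ≤ π * bfreq N / b := by
            gcongr
            exact bfreq_mono hnN
          calc (1/4:ℝ)^n * |Real.cos (π * bfreq n * t₂) - Real.cos (π * bfreq n * t₁)|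
              ≤ 1 * (π * bfreq n / b) :=
                mul_le_mul h3 h2 (abs_nonneg _) (by norm_num)
            _ = π * bfreq n / b := one_mul _
            _ ≤ π * bfreq N / b := h4
      _ ≤ (1/3) * (1/4:ℝ)^M := by
          rw [Finset.sum_const, Finset.card_range]
          have hki := key_ineq N
          have hc : ((M:ℕ):ℝ) = (N:ℝ) + 1 := by rw [hM]; push_cast; ring
          rw [nsmul_eq_mul, hc]
          exact hki
  have hRb : ∀ t, |R t| ≤ (1/3) * (1/4:ℝ)^M := by
    intro t
    have := tail_bound (M+1) t
    have he : (1/4:ℝ)^(M+1) * (4/3) = (1/3) * (1/4:ℝ)^M := by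
      rw [pow_succ]; ring
    rw [he] at this
    exact this
  have hRd : |R t₂ - R t₁| ≤ (2/3) * (1/4:ℝ)^M := by
    calc |R t₂ - R t₁| ≤ |R t₂| + |R t₁| := abs_sub _ _
      _ ≤ (1/3) * (1/4:ℝ)^M + (1/3) * (1/4:ℝ)^M := add_le_add (hRb t₂) (hRb t₁)
      _ = (2/3) * (1/4:ℝ)^M := by ring
  have he : gterm M t₂ - gterm M t₁ = (gfun t₂ - gfun t₁) - (S t₂ - S t₁) - (R t₂ - R t₁) := by
    rw [hsplit t₂, hsplit t₁]; ring
  have h5 : |gterm M t₂ - gterm M t₁| ≤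
      |gfun t₂ - gfun t₁| + |S t₂ - S t₁| + |R t₂ - R t₁| := by
    rw [he]
    calc |gfun t₂ - gfun t₁ - (S t₂ - S t₁) - (R t₂ - R t₁)|
        ≤ |gfun t₂ - gfun t₁ - (S t₂ - S t₁)| + |R t₂ - R t₁| := abs_sub _ _
      _ ≤ |gfun t₂ - gfun t₁| + |S t₂ - S t₁| + |R t₂ - R t₁| :=
          add_le_add_left (abs_sub _ _) _
  linarith [hcenter ▸ h5, hlow, hRd]


lemma var (α β : ℝ) (h0 : 0 ≤ α) (hαβ : α < β) (C : ℝ) :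
    ∃ (k : ℕ) (t : ℕ → ℝ), Monotone t ∧ (∀ i, α ≤ t i ∧ t i ≤ β) ∧
      C < ∑ i ∈ Finset.range k, |gfun (t (i+1)) - gfun (t i)| := by
  have hd : 0 < β - α := by linarith
  obtain ⟨N₀, hN₀⟩ := pow_unbounded_of_one_lt (max ((C+2)/(β-α)) (2/(β-α)))
    (by norm_num : (1:ℝ) < 4)
  set M := N₀ + 1 with hMdef
  set b := bfreq M with hbdef
  have hbpos : 0 < b := bfreq_pos M
  set r : ℝ := (1/4:ℝ)^M with hrdef
  have hrpos : 0 < r := by positivity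
  have hr1 : r ≤ 1 := pow_le_one₀ (by norm_num) (by norm_num)
  -- r * b = 4 ^ (M*M+4*M) ≥ 4 ^ N₀
  have hrb : r * b = (4:ℝ) ^ (M*M + 4*M) := by
    rw [hrdef, hbdef, bfreq]
    have h1 : (1/4:ℝ)^M = ((4:ℝ)^M)⁻¹ := by rw [one_div, inv_pow]
    have h2 : M*M + 5*M = M + (M*M + 4*M) := by ring
    rw [h1, h2, pow_add]
    have h3 : ((4:ℝ)^M) ≠ 0 := by positivity
    field_simp
    rw [pow_add, hMdef, pow_succ]
  have hrb_ge : (4:ℝ) ^ N₀ ≤ r * b := by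
    rw [hrb]
    apply pow_le_pow_right₀ (by norm_num)
    nlinarith [Nat.le_refl M]
  have hC2 : C + 2 < r * b * (β - α) := by
    have h1 : (C+2)/(β-α) < (4:ℝ)^N₀ := lt_of_le_of_lt (le_max_left _ _) hN₀
    have h2 : C + 2 < (4:ℝ)^N₀ * (β-α) := by
      rw [div_lt_iff₀ hd] at h1; linarith
    have h3 : (4:ℝ)^N₀ * (β-α) ≤ r * b * (β-α) :=
      mul_le_mul_of_nonneg_right hrb_ge hd.le
    linarith
  have hb2 : 2 < b * (β - α) := by
    have h1 : (2:ℝ)/(β-α) < (4:ℝ)^N₀ := lt_of_le_of_lt (le_max_right _ _) hN₀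
    have h2 : 2 < (4:ℝ)^N₀ * (β-α) := by rw [div_lt_iff₀ hd] at h1; linarith
    have h3 : (4:ℝ)^N₀ * (β-α) ≤ r * b * (β-α) := mul_le_mul_of_nonneg_right hrb_ge hd.le
    have h4 : r * b ≤ b := by nlinarith
    nlinarith
  set j₀ := ⌈b * α⌉₊ with hj₀def
  set j₁ := ⌊b * β⌋₊ with hj₁def
  have hbα : 0 ≤ b * α := mul_nonneg hbpos.le h0
  have hj₀le : (j₀:ℝ) < b * α + 1 := Nat.ceil_lt_add_one hbα
  have hj₀ge : b * α ≤ (j₀:ℝ) := Nat.le_ceil _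
  have hj₁ge : b * β - 1 < (j₁:ℝ) := by
    have := Nat.lt_floor_add_one (b * β)
    linarith
  have hj₁le : (j₁:ℝ) ≤ b * β := Nat.floor_le (by nlinarith)
  have hj₀j₁ : j₀ ≤ j₁ := by
    have : (j₀:ℝ) < (j₁:ℝ) + 1 := by linarith
    exact_mod_cast Nat.lt_succ_iff.mp (by exact_mod_cast this)
  set k := j₁ - j₀ with hkdef
  have hkc : (k:ℝ) = (j₁:ℝ) - (j₀:ℝ) := by
    rw [hkdef]; push_cast [Nat.cast_sub hj₀j₁]; ring
  refine ⟨k, fun i => ((j₀ + min i k : ℕ) : ℝ)/b, ?_, ?_, ?_⟩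
  · intro i j hij
    have hmono : j₀ + min i k ≤ j₀ + min j k := by omega
    have hmono' : ((j₀ + min i k : ℕ):ℝ) ≤ ((j₀ + min j k : ℕ):ℝ) := by exact_mod_cast hmono
    exact div_le_div_of_nonneg_right hmono' hbpos.le
  · intro i
    constructor
    · rw [le_div_iff₀ hbpos]
      calc α * b = b * α := by ring
        _ ≤ (j₀:ℝ) := hj₀ge
        _ ≤ ((j₀ + min i k : ℕ):ℝ) := by
            push_cast
            have hmin : (0:ℝ) ≤ (i:ℝ) ⊓ (k:ℝ) := le_min (Nat.cast_nonneg i) (Nat.cast_nonneg k)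
            linarith
    · rw [div_le_iff₀ hbpos]
      have h1 : j₀ + min i k ≤ j₁ := by
        have : min i k ≤ k := min_le_right _ _
        omega
      calc ((j₀ + min i k : ℕ):ℝ) ≤ (j₁:ℝ) := by exact_mod_cast h1
        _ ≤ b * β := hj₁le
        _ = β * b := by ring
  · have hterm : ∀ i ∈ Finset.range k, r ≤
        |gfun (((j₀ + min (i+1) k : ℕ):ℝ)/b) - gfun (((j₀ + min i k : ℕ):ℝ)/b)| := by
      intro i hi
      have hik : i < k := Finset.mem_range.mp hi
      have h1 : min i k = i := min_eq_left hik.le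
      have h2 : min (i+1) k = i + 1 := min_eq_left hik
      rw [h1, h2]
      have := inc N₀ (j₀ + i)
      have hc1 : ((j₀ + (i+1) : ℕ):ℝ) = ((j₀ + i : ℕ):ℝ) + 1 := by push_cast; ring
      rw [hc1]
      exact this
    have hsum : (k:ℝ) * r ≤ ∑ i ∈ Finset.range k,
        |gfun (((j₀ + min (i+1) k : ℕ):ℝ)/b) - gfun (((j₀ + min i k : ℕ):ℝ)/b)| := by
      have := Finset.card_nsmul_le_sum (Finset.range k) _ r hterm
      rwa [Finset.card_range, nsmul_eq_mul] at this
    refine lt_of_lt_of_le ?_ hsum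
    have hkge : b * (β - α) - 2 ≤ (k:ℝ) := by rw [hkc]; linarith
    calc C = (C + 2) - 2 := by ring
      _ < r * b * (β - α) - 2 := by linarith
      _ ≤ r * b * (β - α) - 2 * r := by nlinarith
      _ = (b * (β - α) - 2) * r := by ring
      _ ≤ (k:ℝ) * r := mul_le_mul_of_nonneg_right hkge hrpos.le
/-- rational subintervals of `[0,1]` -/
def Idx : Type := {q : ℚ × ℚ // 0 ≤ q.1 ∧ q.1 < q.2 ∧ q.2 ≤ 1}

instance : Countable Idx := by unfold Idx; infer_instance
instance : Nonempty Idx := ⟨⟨(0,1), by norm_num⟩⟩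

def ISet (q : Idx) : Set unitInterval := {t | (q.1.1 : ℝ) ≤ (t:ℝ) ∧ (t:ℝ) ≤ (q.1.2 : ℝ)}

def MSet : Set C(unitInterval, ℝ) :=
  ⋃ q : Idx, ({h | MonotoneOn ⇑h (ISet q)} ∪ {h | AntitoneOn ⇑h (ISet q)})

lemma isClosed_monoSet (S : Set unitInterval) :
    IsClosed {h : C(unitInterval, ℝ) | MonotoneOn ⇑h S} := by
  have he : {h : C(unitInterval, ℝ) | MonotoneOn ⇑h S} =
      ⋂ (s : unitInterval) (_ : s ∈ S) (t : unitInterval) (_ : t ∈ S) (_ : s ≤ t),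
        {h : C(unitInterval, ℝ) | h s ≤ h t} := by
    ext h
    simp only [mem_setOf_eq, mem_iInter]
    exact ⟨fun hm s hs t ht hst => hm hs ht hst, fun hm a ha b hb hab => hm a ha b hb hab⟩
  rw [he]
  exact isClosed_iInter fun s => isClosed_iInter fun _ => isClosed_iInter fun t =>
    isClosed_iInter fun _ => isClosed_iInter fun _ =>
      isClosed_le (continuous_eval_const s) (continuous_eval_const t)

lemma isClosed_antiSet (S : Set unitInterval) :
    IsClosed {h : C(unitInterval, ℝ) | AntitoneOn ⇑h S} := by
  have he : {h : C(unitInterval, ℝ) | AntitoneOn ⇑h S} =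
      ⋂ (s : unitInterval) (_ : s ∈ S) (t : unitInterval) (_ : t ∈ S) (_ : s ≤ t),
        {h : C(unitInterval, ℝ) | h t ≤ h s} := by
    ext h
    simp only [mem_setOf_eq, mem_iInter]
    exact ⟨fun hm s hs t ht hst => hm hs ht hst, fun hm a ha b hb hab => hm a ha b hb hab⟩
  rw [he]
  exact isClosed_iInter fun s => isClosed_iInter fun _ => isClosed_iInter fun t =>
    isClosed_iInter fun _ => isClosed_iInter fun _ =>
      isClosed_le (continuous_eval_const t) (continuous_eval_const s)

lemma tel {f : C(unitInterval, ℝ)} {S : Set unitInterval}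
    (hf : MonotoneOn ⇑f S ∨ AntitoneOn ⇑f S) (k : ℕ) (u : ℕ → unitInterval)
    (hu : Monotone u) (huS : ∀ i, u i ∈ S) :
    ∑ i ∈ Finset.range k, |f (u (i+1)) - f (u i)| = |f (u k) - f (u 0)| := by
  rcases hf with hf | hf
  · have h1 : ∀ i, f (u i) ≤ f (u (i+1)) := fun i => hf (huS i) (huS (i+1)) (hu (Nat.le_succ i))
    have h2 : f (u 0) ≤ f (u k) := hf (huS 0) (huS k) (hu (Nat.zero_le k))
    calc ∑ i ∈ Finset.range k, |f (u (i+1)) - f (u i)|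
        = ∑ i ∈ Finset.range k, (f (u (i+1)) - f (u i)) :=
          Finset.sum_congr rfl (fun i _ => abs_of_nonneg (by linarith [h1 i]))
      _ = f (u k) - f (u 0) := Finset.sum_range_sub (fun i => f (u i)) k
      _ = |f (u k) - f (u 0)| := (abs_of_nonneg (by linarith)).symm
  · have h1 : ∀ i, f (u (i+1)) ≤ f (u i) := fun i => hf (huS i) (huS (i+1)) (hu (Nat.le_succ i))
    have h2 : f (u k) ≤ f (u 0) := hf (huS 0) (huS k) (hu (Nat.zero_le k))
    calc ∑ i ∈ Finset.range k, |f (u (i+1)) - f (u i)|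
        = ∑ i ∈ Finset.range k, (f (u i) - f (u (i+1))) :=
          Finset.sum_congr rfl (fun i _ => abs_of_nonpos (by linarith [h1 i]) |>.trans (by ring))
      _ = f (u 0) - f (u k) := Finset.sum_range_sub' (fun i => f (u i)) k
      _ = |f (u k) - f (u 0)| := by rw [abs_of_nonpos (by linarith)]; ring


def gmap : C(unitInterval, ℝ) := ⟨fun t => gfun ↑t, gfun_cont.comp continuous_subtype_val⟩

lemma bad_subsingleton (x : C(unitInterval, ℝ)) (q : Idx) :
    Set.Subsingleton {lam : ℝ | MonotoneOn ⇑(lam • gmap - x) (ISet q) ∨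
      AntitoneOn ⇑(lam • gmap - x) (ISet q)} := by
  intro l1 h1 l2 h2
  by_contra hne
  set f₁ : C(unitInterval, ℝ) := l1 • gmap - x with hf₁
  set f₂ : C(unitInterval, ℝ) := l2 • gmap - x with hf₂
  have hd : 0 < |l1 - l2| := abs_pos.mpr (sub_ne_zero.mpr hne)
  set d := |l1 - l2| with hddef
  set C := (2*‖f₁‖ + 2*‖f₂‖)/d with hCdef
  have hq1 : (0:ℝ) ≤ (q.1.1:ℝ) := by exact_mod_cast q.2.1
  have hq2 : ((q.1.1:ℝ)) < ((q.1.2:ℝ)) := by exact_mod_cast q.2.2.1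
  have hq3 : ((q.1.2:ℝ)) ≤ 1 := by exact_mod_cast q.2.2.2
  obtain ⟨k, t, hmono, hbounds, hsum⟩ := var (q.1.1:ℝ) (q.1.2:ℝ) hq1 hq2 C
  have hmem : ∀ i, t i ∈ Icc (0:ℝ) 1 := fun i =>
    ⟨le_trans hq1 (hbounds i).1, le_trans (hbounds i).2 hq3⟩
  set u : ℕ → unitInterval := fun i => ⟨t i, hmem i⟩ with hudef
  have humono : Monotone u := fun i j hij => Subtype.mk_le_mk.mpr (hmono hij)
  have huS : ∀ i, u i ∈ ISet q := fun i => ⟨(hbounds i).1, (hbounds i).2⟩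
  have hpt : ∀ s : unitInterval, f₁ s - f₂ s = (l1 - l2) * gmap s := by
    intro s
    simp only [hf₁, hf₂, ContinuousMap.sub_apply, ContinuousMap.smul_apply, smul_eq_mul]
    ring
  have hkey : ∀ i : ℕ, d * |gfun (t (i+1)) - gfun (t i)| =
      |(f₁ (u (i+1)) - f₂ (u (i+1))) - (f₁ (u i) - f₂ (u i))| := by
    intro i
    have hg1 : gfun (t (i+1)) = gmap (u (i+1)) := rfl
    have hg2 : gfun (t i) = gmap (u i) := rfl
    rw [hg1, hg2, hpt, hpt, hddef, ← abs_mul]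
    congr 1
    ring
  have htri : ∀ i : ℕ, |(f₁ (u (i+1)) - f₂ (u (i+1))) - (f₁ (u i) - f₂ (u i))| ≤
      |f₁ (u (i+1)) - f₁ (u i)| + |f₂ (u (i+1)) - f₂ (u i)| := by
    intro i
    have he : (f₁ (u (i+1)) - f₂ (u (i+1))) - (f₁ (u i) - f₂ (u i)) =
        (f₁ (u (i+1)) - f₁ (u i)) - (f₂ (u (i+1)) - f₂ (u i)) := by ring
    rw [he]
    exact abs_sub _ _
  have hs1 := tel h1 k u humono huS
  have hs2 := tel h2 k u humono huS
  have hnorm : ∀ (f : C(unitInterval, ℝ)) (s s' : unitInterval),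
      |f s - f s'| ≤ 2 * ‖f‖ := by
    intro f s s'
    have h1 := f.norm_coe_le_norm s
    have h2 := f.norm_coe_le_norm s'
    rw [Real.norm_eq_abs] at h1 h2
    calc |f s - f s'| ≤ |f s| + |f s'| := abs_sub _ _
      _ ≤ 2 * ‖f‖ := by linarith
  have hsumle : d * ∑ i ∈ Finset.range k, |gfun (t (i+1)) - gfun (t i)| ≤
      2*‖f₁‖ + 2*‖f₂‖ := by
    rw [Finset.mul_sum]
    calc ∑ i ∈ Finset.range k, d * |gfun (t (i+1)) - gfun (t i)|
        = ∑ i ∈ Finset.range k, |(f₁ (u (i+1)) - f₂ (u (i+1))) - (f₁ (u i) - f₂ (u i))| :=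
          Finset.sum_congr rfl (fun i _ => hkey i)
      _ ≤ ∑ i ∈ Finset.range k, (|f₁ (u (i+1)) - f₁ (u i)| + |f₂ (u (i+1)) - f₂ (u i)|) :=
          Finset.sum_le_sum (fun i _ => htri i)
      _ = (∑ i ∈ Finset.range k, |f₁ (u (i+1)) - f₁ (u i)|) +
          (∑ i ∈ Finset.range k, |f₂ (u (i+1)) - f₂ (u i)|) := Finset.sum_add_distrib
      _ = |f₁ (u k) - f₁ (u 0)| + |f₂ (u k) - f₂ (u 0)| := by rw [hs1, hs2]
      _ ≤ 2*‖f₁‖ + 2*‖f₂‖ := add_le_add (hnorm f₁ _ _) (hnorm f₂ _ _)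
  have hCd : d * C = 2*‖f₁‖ + 2*‖f₂‖ := by
    rw [hCdef]
    field_simp
  have := mul_lt_mul_of_pos_left hsum hd
  rw [hCd] at this
  linarith
open Real

def HReal (h : C(unitInterval, ℝ)) : ℝ → ℝ := fun t => h (Set.projIcc 0 1 zero_le_one t)

lemma HReal_cont (h : C(unitInterval, ℝ)) : Continuous (HReal h) :=
  h.continuous.comp continuous_projIcc

lemma HReal_coe (h : C(unitInterval, ℝ)) (s : unitInterval) : HReal h (s:ℝ) = h s := by
  rw [HReal, Set.projIcc_of_mem zero_le_one s.2]

def TSet (h : C(unitInterval, ℝ)) (q : Idx) : Set ℝ :=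
  {y | ∃ x, {z | z ∈ Set.Icc (q.1.1:ℝ) (q.1.2:ℝ) ∧ HReal h z = y} = {x}}

lemma range_eq_Icc {h : C(unitInterval, ℝ)} (hnc : ∃ t₁ t₂ : unitInterval, h t₁ ≠ h t₂) :
    ∃ m M : ℝ, m < M ∧ Set.range ⇑h = Set.Icc m M := by
  have hcomp : IsCompact (Set.range ⇑h) := isCompact_range h.continuous
  have hconn : IsPreconnected (Set.range ⇑h) := (isConnected_range h.continuous).isPreconnected
  have hne : (Set.range ⇑h).Nonempty := Set.range_nonempty _
  set m := sInf (Set.range ⇑h) with hm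
  set Mx := sSup (Set.range ⇑h) with hMx
  have hmmem : m ∈ Set.range ⇑h := hcomp.sInf_mem hne
  have hMmem : Mx ∈ Set.range ⇑h := hcomp.sSup_mem hne
  have hsub : Set.range ⇑h ⊆ Set.Icc m Mx := fun y hy =>
    ⟨csInf_le hcomp.bddBelow hy, le_csSup hcomp.bddAbove hy⟩
  have hord : Set.OrdConnected (Set.range ⇑h) := hconn.ordConnected
  have hsup : Set.Icc m Mx ⊆ Set.range ⇑h := hord.out hmmem hMmem
  have hlt : m < Mx := by
    obtain ⟨t₁, t₂, hne'⟩ := hnc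
    have h₁ : h t₁ ∈ Set.Icc m Mx := hsub ⟨t₁, rfl⟩
    have h₂ : h t₂ ∈ Set.Icc m Mx := hsub ⟨t₂, rfl⟩
    have hle : m ≤ Mx := (hsub hmmem).2
    rcases eq_or_lt_of_le hle with heq | hlt
    · exfalso
      apply hne'
      have e₁ : h t₁ = m := le_antisymm (heq ▸ h₁.2) h₁.1
      have e₂ : h t₂ = m := le_antisymm (heq ▸ h₂.2) h₂.1
      rw [e₁, e₂]
    · exact hlt
  exact ⟨m, Mx, hlt, le_antisymm hsub hsup⟩

lemma nd_meagre {X : Type*} [TopologicalSpace X] {s : Set X} (hs : IsNowhereDense s) :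
    IsMeagre s :=
  isMeagre_iff_countable_union_isNowhereDense.mpr
    ⟨{s}, by simpa using hs, Set.countable_singleton s, by simp⟩

lemma nd_transfer {h : C(unitInterval, ℝ)} {m M : ℝ} (hmM : m < M)
    (hr : Set.range ⇑h = Set.Icc m M) {T : Set ℝ} (hT : IsNowhereDense T) :
    IsNowhereDense (Subtype.val ⁻¹' T : Set (Set.range ⇑h)) := by
  have hsub : closure (Subtype.val ⁻¹' T : Set (Set.range ⇑h)) ⊆
      Subtype.val ⁻¹' (closure T) := continuous_subtype_val.closure_preimage_subset T
  rw [IsNowhereDense, ← Set.subset_empty_iff]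
  intro z hz
  exfalso
  have hz' : z ∈ interior (Subtype.val ⁻¹' (closure T) : Set (Set.range ⇑h)) :=
    interior_mono hsub hz
  rw [mem_interior_iff_mem_nhds, Metric.mem_nhds_iff] at hz'
  obtain ⟨ε, hε, hball⟩ := hz'
  have hzm : (z:ℝ) ∈ Set.Icc m M := hr ▸ z.2
  set α := max ((z:ℝ) - ε/2) m with hα
  set β := min ((z:ℝ) + ε/2) M with hβ
  have hαβ : α < β := by
    apply max_lt
    · apply lt_min
      · linarith
      · linarith [hzm.2]
    · apply lt_min
      · linarith [hzm.1]
      · exact hmM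
  have hIoo : Set.Ioo α β ⊆ closure T := by
    intro w hw
    have hw1 : (z:ℝ) - ε/2 < w := lt_of_le_of_lt (le_max_left _ _) hw.1
    have hw2 : w < (z:ℝ) + ε/2 := lt_of_lt_of_le hw.2 (min_le_left _ _)
    have hwm : w ∈ Set.Icc m M :=
      ⟨le_of_lt (lt_of_le_of_lt (le_max_right _ _) hw.1),
       le_of_lt (lt_of_lt_of_le hw.2 (min_le_right _ _))⟩
    have hwr : w ∈ Set.range ⇑h := hr ▸ hwm
    have hmemball : (⟨w, hwr⟩ : Set.range ⇑h) ∈ Metric.ball z ε := by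
      rw [Metric.mem_ball, Subtype.dist_eq, Real.dist_eq, abs_lt]
      constructor <;> simp only [] <;> linarith
    exact hball hmemball
  have hnonempty : (interior (closure T)).Nonempty :=
    ⟨(α+β)/2, interior_maximal hIoo isOpen_Ioo ⟨by linarith, by linarith⟩⟩
  rw [hT] at hnonempty
  exact Set.not_nonempty_empty hnonempty

lemma nm_transfer {h : C(unitInterval, ℝ)} (hB : h ∉ MSet) (q : Idx) :
    ∀ a' b' : ℝ, (q.1.1:ℝ) ≤ a' → a' < b' → b' ≤ (q.1.2:ℝ) →
      ¬ MonotoneOn (HReal h) (Set.Icc a' b') ∧ ¬ AntitoneOn (HReal h) (Set.Icc a' b') := by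
  intro a' b' h1 h2 h3
  have hq1 : (0:ℝ) ≤ (q.1.1:ℝ) := by exact_mod_cast q.2.1
  have hq3 : ((q.1.2:ℝ)) ≤ 1 := by exact_mod_cast q.2.2.2
  have h0a : (0:ℝ) ≤ a' := le_trans hq1 h1
  have hb1 : b' ≤ 1 := le_trans h3 hq3
  obtain ⟨r₁, hr₁a, hr₁b⟩ := exists_rat_btwn h2
  obtain ⟨r₂, hr₂a, hr₂b⟩ := exists_rat_btwn hr₁b
  have hr₁0 : (0:ℚ) ≤ r₁ := by
    have : (0:ℝ) ≤ (r₁:ℝ) := le_of_lt (lt_of_le_of_lt h0a hr₁a)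
    exact_mod_cast this
  have hr₁₂ : r₁ < r₂ := by exact_mod_cast hr₂a
  have hr₂1 : r₂ ≤ (1:ℚ) := by
    have : (r₂:ℝ) ≤ 1 := le_of_lt (lt_of_lt_of_le hr₂b hb1)
    exact_mod_cast this
  set q' : Idx := ⟨(r₁, r₂), hr₁0, hr₁₂, hr₂1⟩ with hq'
  have hIsub : ∀ s : unitInterval, s ∈ ISet q' → (s:ℝ) ∈ Set.Icc a' b' := by
    intro s hs
    exact ⟨le_trans (le_of_lt hr₁a) hs.1, le_trans hs.2 (le_of_lt hr₂b)⟩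
  constructor
  · intro hmon
    apply hB
    refine Set.mem_iUnion.mpr ⟨q', Set.mem_union_left _ ?_⟩
    intro s hs t ht hst
    have := hmon (hIsub s hs) (hIsub t ht) (Subtype.coe_le_coe.mpr hst)
    rwa [HReal_coe, HReal_coe] at this
  · intro hmon
    apply hB
    refine Set.mem_iUnion.mpr ⟨q', Set.mem_union_right _ ?_⟩
    intro s hs t ht hst
    have := hmon (hIsub s hs) (hIsub t ht) (Subtype.coe_le_coe.mpr hst)
    rwa [HReal_coe, HReal_coe] at this

lemma cover {h : C(unitInterval, ℝ)} (y : Set.range ⇑h)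
    (hy : ¬ Perfect (⇑h ⁻¹' {(y:ℝ)})) : ∃ q : Idx, (y:ℝ) ∈ TSet h q := by
  set C : Set unitInterval := ⇑h ⁻¹' {(y:ℝ)} with hC
  have hclosed : IsClosed C := IsClosed.preimage h.continuous isClosed_singleton
  have hnacc : ¬ ∀ x ∈ C, AccPt x (𝓟 C) := fun hacc => hy ⟨hclosed, hacc⟩
  push_neg at hnacc
  obtain ⟨x, hxC, hxn⟩ := hnacc
  rw [accPt_iff_nhds] at hxn
  push_neg at hxn
  obtain ⟨U, hU, hUprop⟩ := hxn
  rw [Metric.mem_nhds_iff] at hU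
  obtain ⟨ε, hε, hball⟩ := hU
  set xr : ℝ := (x:ℝ) with hxr
  have hx01 : xr ∈ Set.Icc (0:ℝ) 1 := x.2
  -- choose rational a
  have hA : ∃ a : ℚ, 0 ≤ a ∧ (a:ℝ) ≤ xr ∧ xr - ε < (a:ℝ) ∧ ((a:ℝ) < xr ∨ xr = 0) := by
    by_cases h0 : 0 < xr
    · have hmax : max 0 (xr - ε) < xr := max_lt h0 (by linarith)
      obtain ⟨a, ha1, ha2⟩ := exists_rat_btwn hmax
      refine ⟨a, ?_, le_of_lt ha2, lt_of_le_of_lt (le_max_right _ _) ha1, Or.inl ha2⟩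
      have : (0:ℝ) ≤ (a:ℝ) := le_of_lt (lt_of_le_of_lt (le_max_left _ _) ha1)
      exact_mod_cast this
    · push_neg at h0
      have hx0 : xr = 0 := le_antisymm h0 hx01.1
      exact ⟨0, le_refl _, by rw [hx0]; norm_num, by rw [hx0]; push_cast; linarith,
        Or.inr hx0⟩
  have hBq : ∃ b : ℚ, (b:ℝ) ≤ 1 ∧ xr ≤ (b:ℝ) ∧ (b:ℝ) < xr + ε ∧ (xr < (b:ℝ) ∨ xr = 1) := by
    by_cases h1 : xr < 1
    · have hmin : xr < min 1 (xr + ε) := lt_min h1 (by linarith)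
      obtain ⟨b, hb1, hb2⟩ := exists_rat_btwn hmin
      exact ⟨b, le_of_lt (lt_of_lt_of_le hb2 (min_le_left _ _)), le_of_lt hb1,
        lt_of_lt_of_le hb2 (min_le_right _ _), Or.inl hb1⟩
    · push_neg at h1
      have hx1 : xr = 1 := le_antisymm hx01.2 h1
      exact ⟨1, by norm_num, by rw [hx1]; norm_num, by rw [hx1]; push_cast; linarith, Or.inr hx1⟩
  obtain ⟨a, ha0, hax, hae, haS⟩ := hA
  obtain ⟨b, hb1, hxb, hbe, hbS⟩ := hBq
  have habR : (a:ℝ) < (b:ℝ) := by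
    rcases haS with h | h
    · exact lt_of_lt_of_le h hxb
    · rcases hbS with h' | h'
      · exact lt_of_le_of_lt hax h'
      · exfalso; rw [h] at h'; norm_num at h'
  have hab : a < b := by exact_mod_cast habR
  have hb1' : b ≤ (1:ℚ) := by exact_mod_cast hb1
  refine ⟨⟨(a, b), ha0, hab, hb1'⟩, ⟨xr, ?_⟩⟩
  apply Set.eq_singleton_iff_unique_mem.mpr
  constructor
  · exact ⟨⟨hax, hxb⟩, by rw [hxr, HReal_coe]; exact hxC⟩
  · rintro z ⟨⟨hza, hzb⟩, hzH⟩
    have hz01 : z ∈ Set.Icc (0:ℝ) 1 := by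
      constructor
      · have : (0:ℝ) ≤ (a:ℝ) := by exact_mod_cast ha0
        linarith
      · linarith
    set zs : unitInterval := ⟨z, hz01⟩ with hzs
    have hzH' : h zs = (y:ℝ) := by
      have := HReal_coe h zs
      simp only [hzs] at this
      rw [← this]
      exact hzH
    have hzsC : zs ∈ C := hzH'
    have hzball : zs ∈ Metric.ball x ε := by
      rw [Metric.mem_ball, Subtype.dist_eq, Real.dist_eq, abs_lt]
      constructor <;> simp only [hzs] <;> [linarith; linarith]
    have := hUprop zs ⟨hball hzball, hzsC⟩
    rw [hzs] at this
    exact congrArg Subtype.val this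


lemma mainL3 {h : C(unitInterval, ℝ)} (hB : h ∉ MSet) :
    {y : Set.range ⇑h | Perfect (⇑h ⁻¹' {(y:ℝ)})} ∈ residual (Set.range ⇑h) := by
  have hnc : ∃ t₁ t₂ : unitInterval, h t₁ ≠ h t₂ := by
    by_contra hc
    push_neg at hc
    apply hB
    refine Set.mem_iUnion.mpr ⟨⟨(0,1), by norm_num, by norm_num, le_refl _⟩,
      Set.mem_union_left _ ?_⟩
    intro s _ t _ _
    rw [hc s t]
  obtain ⟨m, Mx, hmM, hr⟩ := range_eq_Icc hnc
  have hnd : ∀ q : Idx, IsNowhereDense (Subtype.val ⁻¹' TSet h q : Set (Set.range ⇑h)) := by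
    intro q
    apply nd_transfer hmM hr
    have hqlt : (q.1.1:ℝ) < (q.1.2:ℝ) := by exact_mod_cast q.2.2.1
    exact core (HReal_cont h) hqlt (nm_transfer hB q)
  obtain ⟨e, he⟩ := exists_surjective_nat Idx
  have hmeag : IsMeagre (⋃ q : Idx, (Subtype.val ⁻¹' TSet h q : Set (Set.range ⇑h))) := by
    have heq : (⋃ q : Idx, (Subtype.val ⁻¹' TSet h q : Set (Set.range ⇑h))) =
        ⋃ n : ℕ, (Subtype.val ⁻¹' TSet h (e n) : Set (Set.range ⇑h)) := by
      ext z
      simp only [Set.mem_iUnion]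
      constructor
      · rintro ⟨q, hq⟩
        obtain ⟨n, rfl⟩ := he q
        exact ⟨n, hq⟩
      · rintro ⟨n, hn⟩
        exact ⟨e n, hn⟩
    rw [heq]
    exact isMeagre_iUnion (fun n => nd_meagre (hnd (e n)))
  have hcover : {y : Set.range ⇑h | ¬ Perfect (⇑h ⁻¹' {(y:ℝ)})} ⊆
      ⋃ q : Idx, (Subtype.val ⁻¹' TSet h q : Set (Set.range ⇑h)) := by
    intro y hy
    obtain ⟨q, hq⟩ := cover y hy
    exact Set.mem_iUnion.mpr ⟨q, hq⟩
  have hmeag2 : IsMeagre {y : Set.range ⇑h | ¬ Perfect (⇑h ⁻¹' {(y:ℝ)})} :=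
    hmeag.mono hcover
  rw [IsMeagre] at hmeag2
  apply Filter.mem_of_superset hmeag2
  intro y hy
  exact not_not.mp hy

end PLSAux

/-- For the prevalent `f ∈ C[0,1]`, the set of `y ∈ f([0,1])` whose level set `f⁻¹(y)` is
perfect is comeager in the compact space `f([0,1])`. -/
theorem perfect_levelSets_residual_prevalent :
    IsPrevalent {f : C(unitInterval, ℝ) |
      {y : Set.range ⇑f | Perfect (⇑f ⁻¹' {(y : ℝ)})} ∈ residual ↥(Set.range ⇑f)} := by
  unfold IsPrevalent IsShy
  letI : MeasurableSpace C(unitInterval, ℝ) := borel _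
  haveI : BorelSpace C(unitInterval, ℝ) := ⟨rfl⟩
  have hMeas : MeasurableSet PLSAux.MSet := by
    have hq : ∀ q : PLSAux.Idx, MeasurableSet
        ({h : C(unitInterval,ℝ) | MonotoneOn ⇑h (PLSAux.ISet q)} ∪
          {h | AntitoneOn ⇑h (PLSAux.ISet q)}) := fun q =>
      ((PLSAux.isClosed_monoSet _).measurableSet).union
        ((PLSAux.isClosed_antiSet _).measurableSet)
    exact MeasurableSet.iUnion hq
  refine ⟨PLSAux.MSet, hMeas, ?_, ?_⟩
  · intro f hf
    by_contra hB
    exact hf (PLSAux.mainL3 hB)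
  · set φ : ℝ → C(unitInterval, ℝ) := fun lam => lam • PLSAux.gmap with hφdef
    have hφ : Continuous φ := continuous_id.smul continuous_const
    refine ⟨(volume.restrict (Set.Icc (0:ℝ) 1)).map φ, ⟨?_⟩, ?_⟩
    · rw [Measure.map_apply hφ.measurable MeasurableSet.univ]
      simp [Real.volume_Icc]
    · intro x
      have himg : (fun b => b + x) '' PLSAux.MSet = (fun b => b - x) ⁻¹' PLSAux.MSet := by
        ext y
        simp only [Set.mem_image, Set.mem_preimage]
        constructor
        · rintro ⟨b, hb, rfl⟩
          simpa using hb
        · intro hy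
          exact ⟨y - x, hy, by abel⟩
      have hsubmeas : MeasurableSet ((fun b => b - x) ⁻¹' PLSAux.MSet) :=
        (continuous_id.sub continuous_const).measurable hMeas
      rw [himg, Measure.map_apply hφ.measurable hsubmeas]
      have hcount : Set.Countable (φ ⁻¹' ((fun b => b - x) ⁻¹' PLSAux.MSet)) := by
        have hsub2 : (φ ⁻¹' ((fun b => b - x) ⁻¹' PLSAux.MSet)) ⊆
            ⋃ q : PLSAux.Idx, {lam : ℝ |
              MonotoneOn ⇑(lam • PLSAux.gmap - x) (PLSAux.ISet q) ∨
              AntitoneOn ⇑(lam • PLSAux.gmap - x) (PLSAux.ISet q)} := by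
          intro lam hlam
          simp only [Set.mem_preimage, PLSAux.MSet, Set.mem_iUnion, Set.mem_union, hφdef,
            Set.mem_setOf_eq] at hlam
          obtain ⟨q, hq⟩ := hlam
          exact Set.mem_iUnion.mpr ⟨q, hq⟩
        apply Set.Countable.mono hsub2
        exact Set.countable_iUnion (fun q => (PLSAux.bad_subsingleton x q).countable)
      have hvol : volume (φ ⁻¹' ((fun b => b - x) ⁻¹' PLSAux.MSet)) = 0 :=
        hcount.measure_zero _
      rw [Measure.restrict_apply (hφ.measurable hsubmeas)]
      exact le_antisymm (le_trans (measure_mono Set.inter_subset_left) hvol.le) zero_le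
end
end
end
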